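/- arXiv:2404.13650 — 10 statements merged into one kernel-verified Lean document; each statement's English description precedes it below -/
import Mathlib

section
/- For real numbers m ∉ {0,1} and c ≠ 0, the Gaussian curvature K of the surface x_{m,c}(r,θ) = (r cos θ, r sin θ, c r^m cos mθ) is given at every point (r,θ) ∈ (0,∞) × ℝ by K = − c² m² (m−1)² r^{2m−4} / (1 + c² m² r^{2m−2})². In particular K depends only on r (so K takes the same value at (r,θ₁) and (r,θ₂) for all θ₁, θ₂), i.e. x_{m,c} has concentric K-contours with respect to the xy-plane. -/
noncomputable section

/-- Cross product on ℝ³ represented as `ℝ × ℝ × ℝ`. -/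
def cross3 (u v : ℝ × ℝ × ℝ) : ℝ × ℝ × ℝ :=
  (u.2.1 * v.2.2 - u.2.2 * v.2.1,
   u.2.2 * v.1 - u.1 * v.2.2,
   u.1 * v.2.1 - u.2.1 * v.1)

/-- Dot product on ℝ³. -/
def dot3 (u v : ℝ × ℝ × ℝ) : ℝ :=
  u.1 * v.1 + u.2.1 * v.2.1 + u.2.2 * v.2.2

/-- Euclidean norm on ℝ³. -/
def norm3 (u : ℝ × ℝ × ℝ) : ℝ := Real.sqrt (dot3 u u)

/-!
The unnormalised normal `N = x_r × x_θ` satisfies `EG - F² = |N|²`, so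
`K = (ẽ g̃ - f̃²) / |N|⁴` with `ẽ = x_rr · N` etc. For `x_{m,c}`, writing `p = c m r^{m-1}`,
one finds `|N|² = r² (1 + p²)` and `ẽ = (m-1) p cos mθ`, `f̃ = -(m-1) p r sin mθ`,
`g̃ = -(m-1) p r² cos mθ`, so `ẽ g̃ - f̃² = -(m-1)² p² r²` is independent of `θ`.
-/

theorem dot3_smul_right (a : ℝ) (u v : ℝ × ℝ × ℝ) : dot3 u (a • v) = a * dot3 u v := by
  simp only [dot3, Prod.smul_fst, Prod.smul_snd, smul_eq_mul]
  ring

theorem dot3_self_nonneg (u : ℝ × ℝ × ℝ) : 0 ≤ dot3 u u := by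
  unfold dot3
  exact add_nonneg (add_nonneg (mul_self_nonneg _) (mul_self_nonneg _)) (mul_self_nonneg _)

theorem norm3_sq (u : ℝ × ℝ × ℝ) : norm3 u ^ 2 = dot3 u u :=
  Real.sq_sqrt (dot3_self_nonneg u)

theorem dot3_cross3_self (u v : ℝ × ℝ × ℝ) :
    dot3 (cross3 u v) (cross3 u v) = dot3 u u * dot3 v v - dot3 u v ^ 2 := by
  simp only [dot3, cross3]
  ring

def gaussCurvatureOfDerivs (xu xv xuu xuv xvv : ℝ × ℝ × ℝ) : ℝ :=
  let n := (norm3 (cross3 xu xv))⁻¹ • cross3 xu xv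
  (dot3 xuu n * dot3 xvv n - dot3 xuv n ^ 2) /
    (dot3 xu xu * dot3 xv xv - dot3 xu xv ^ 2)

def gaussCurvature (x : ℝ → ℝ → ℝ × ℝ × ℝ) (u v : ℝ) : ℝ :=
  gaussCurvatureOfDerivs (deriv (fun u' => x u' v) u) (deriv (fun v' => x u v') v)
    (deriv (fun u' => deriv (fun u'' => x u'' v) u') u)
    (deriv (fun v' => deriv (fun u' => x u' v') u) v)
    (deriv (fun v' => deriv (fun v'' => x u v'') v') v)

theorem gaussCurvatureOfDerivs_eq (xu xv xuu xuv xvv : ℝ × ℝ × ℝ) :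
    gaussCurvatureOfDerivs xu xv xuu xuv xvv =
      (dot3 xuu (cross3 xu xv) * dot3 xvv (cross3 xu xv) - dot3 xuv (cross3 xu xv) ^ 2) /
        dot3 (cross3 xu xv) (cross3 xu xv) ^ 2 := by
  simp only [gaussCurvatureOfDerivs, dot3_smul_right, ← dot3_cross3_self]
  set N := cross3 xu xv
  rw [show ∀ a b d : ℝ, (norm3 N)⁻¹ * a * ((norm3 N)⁻¹ * b) - ((norm3 N)⁻¹ * d) ^ 2
      = (a * b - d ^ 2) / norm3 N ^ 2 from fun a b d => by ring,
    norm3_sq, div_div, sq (dot3 N N)]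

/-- The frame of `x_{m,c}` with `ct, st, cm, sm` standing for `cos θ, sin θ, cos mθ, sin mθ`
and `p, q, w` for `c m r^{m-1}, c m (m-1) r^{m-2}, c m r^m`. -/
theorem gaussCurvatureOfDerivs_cosineFrame {m r p q w ct st cm sm : ℝ} (hr : r ≠ 0)
    (hθ : ct ^ 2 + st ^ 2 = 1) (hmθ : cm ^ 2 + sm ^ 2 = 1) (hw : w = p * r)
    (hq : q * r = (m - 1) * p) :
    gaussCurvatureOfDerivs (ct, st, p * cm) (-(r * st), r * ct, -(w * sm)) (0, 0, q * cm)
        (-st, ct, -(p * m * sm)) (-(r * ct), -(r * st), -(w * m * cm)) =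
      -((m - 1) ^ 2 * p ^ 2) / (r ^ 2 * (1 + p ^ 2) ^ 2) := by
  subst hw
  have hN : cross3 (ct, st, p * cm) (-(r * st), r * ct, -(p * r * sm)) =
      (-(p * r * (st * sm + ct * cm)), p * r * (ct * sm - st * cm), r) := by
    simp only [cross3, Prod.mk.injEq]
    refine ⟨by ring, by ring, by linear_combination r * hθ⟩
  rw [gaussCurvatureOfDerivs_eq, hN]
  have he : dot3 (0, 0, q * cm) (-(p * r * (st * sm + ct * cm)), p * r * (ct * sm - st * cm), r)
      = (m - 1) * p * cm := by
    simp only [dot3]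
    linear_combination cm * hq
  have hf : dot3 (-st, ct, -(p * m * sm))
      (-(p * r * (st * sm + ct * cm)), p * r * (ct * sm - st * cm), r) = -((m - 1) * p * r * sm) := by
    simp only [dot3]
    linear_combination p * r * sm * hθ
  have hg : dot3 (-(r * ct), -(r * st), -(p * r * m * cm))
      (-(p * r * (st * sm + ct * cm)), p * r * (ct * sm - st * cm), r) =
        -((m - 1) * p * r ^ 2 * cm) := by
    simp only [dot3]
    linear_combination p * r ^ 2 * cm * hθ
  have hNN : dot3 (-(p * r * (st * sm + ct * cm)), p * r * (ct * sm - st * cm), r)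
      (-(p * r * (st * sm + ct * cm)), p * r * (ct * sm - st * cm), r) = r ^ 2 * (1 + p ^ 2) := by
    simp only [dot3]
    linear_combination p ^ 2 * r ^ 2 * ((ct ^ 2 + st ^ 2) * hmθ + hθ)
  rw [he, hf, hg, hNN]
  rw [div_eq_div_iff (by positivity) (by positivity)]
  linear_combination (-(m - 1) ^ 2 * p ^ 2 * r ^ 4 * (1 + p ^ 2) ^ 2) * hmθ

def cosineGraph (m c s t : ℝ) : ℝ × ℝ × ℝ :=
  (s * Real.cos t, s * Real.sin t, c * s ^ m * Real.cos (m * t))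

section Derivatives

variable (m c : ℝ)

theorem deriv_cosineGraph_r (t : ℝ) {r : ℝ} (hr : r ≠ 0) :
    deriv (fun s => cosineGraph m c s t) r =
      (Real.cos t, Real.sin t, c * m * r ^ (m - 1) * Real.cos (m * t)) := by
  have h : HasDerivAt (fun s => c * s ^ m * Real.cos (m * t))
      (c * m * r ^ (m - 1) * Real.cos (m * t)) r :=
    (((Real.hasDerivAt_rpow_const (Or.inl hr)).const_mul c).mul_const _).congr_deriv (by ring)
  exact ((hasDerivAt_mul_const _).prodMk ((hasDerivAt_mul_const _).prodMk h)).deriv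

theorem deriv_cosineGraph_θ (r θ : ℝ) :
    deriv (fun t => cosineGraph m c r t) θ =
      (-(r * Real.sin θ), r * Real.cos θ, -(c * m * r ^ m * Real.sin (m * θ))) := by
  have h₁ : HasDerivAt (fun t => r * Real.cos t) (-(r * Real.sin θ)) θ :=
    ((Real.hasDerivAt_cos θ).const_mul r).congr_deriv (by ring)
  have h₃ : HasDerivAt (fun t => c * r ^ m * Real.cos (m * t))
      (-(c * m * r ^ m * Real.sin (m * θ))) θ :=
    (((hasDerivAt_const_mul m).cos).const_mul _).congr_deriv (by ring)
  exact (h₁.prodMk (((Real.hasDerivAt_sin θ).const_mul r).prodMk h₃)).deriv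

theorem deriv_cosineGraph_rr (t : ℝ) {r : ℝ} (hr : 0 < r) :
    deriv (fun s => deriv (fun s' => cosineGraph m c s' t) s) r =
      (0, 0, c * m * (m - 1) * r ^ (m - 2) * Real.cos (m * t)) := by
  have hr' : (fun s => deriv (fun s' => cosineGraph m c s' t) s) =ᶠ[nhds r]
      fun s => (Real.cos t, Real.sin t, c * m * s ^ (m - 1) * Real.cos (m * t)) := by
    filter_upwards [eventually_gt_nhds hr] with s hs using deriv_cosineGraph_r m c t hs.ne'
  have h : HasDerivAt (fun s => c * m * s ^ (m - 1) * Real.cos (m * t))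
      (c * m * (m - 1) * r ^ (m - 2) * Real.cos (m * t)) r :=
    (((Real.hasDerivAt_rpow_const (Or.inl hr.ne')).const_mul (c * m)).mul_const _).congr_deriv
      (by rw [show m - 1 - 1 = m - 2 by ring]; ring)
  rw [hr'.deriv_eq]
  exact ((hasDerivAt_const r _).prodMk ((hasDerivAt_const r _).prodMk h)).deriv

theorem deriv_cosineGraph_rθ {r : ℝ} (hr : r ≠ 0) (θ : ℝ) :
    deriv (fun t => deriv (fun s => cosineGraph m c s t) r) θ =
      (-Real.sin θ, Real.cos θ, -(c * m * r ^ (m - 1) * m * Real.sin (m * θ))) := by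
  simp only [deriv_cosineGraph_r m c _ hr]
  have h : HasDerivAt (fun t => c * m * r ^ (m - 1) * Real.cos (m * t))
      (-(c * m * r ^ (m - 1) * m * Real.sin (m * θ))) θ :=
    (((hasDerivAt_const_mul m).cos).const_mul _).congr_deriv (by ring)
  exact ((Real.hasDerivAt_cos θ).prodMk ((Real.hasDerivAt_sin θ).prodMk h)).deriv

theorem deriv_cosineGraph_θθ (r θ : ℝ) :
    deriv (fun t => deriv (fun t' => cosineGraph m c r t') t) θ =
      (-(r * Real.cos θ), -(r * Real.sin θ), -(c * m * r ^ m * m * Real.cos (m * θ))) := by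
  simp only [deriv_cosineGraph_θ]
  have h : HasDerivAt (fun t => -(c * m * r ^ m * Real.sin (m * t)))
      (-(c * m * r ^ m * m * Real.cos (m * θ))) θ :=
    (((hasDerivAt_const_mul m).sin).const_mul _).neg.congr_deriv (by ring)
  exact (((Real.hasDerivAt_sin θ).const_mul r).neg.prodMk
    (((Real.hasDerivAt_cos θ).const_mul r).congr_deriv (by ring) |>.prodMk h)).deriv

end Derivatives

theorem gaussCurvature_cosineGraph (m c : ℝ) {r : ℝ} (hr : 0 < r) (θ : ℝ) :
    gaussCurvature (cosineGraph m c) r θ =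
      -(c ^ 2 * m ^ 2 * (m - 1) ^ 2 * r ^ (2 * m - 4)) /
        (1 + c ^ 2 * m ^ 2 * r ^ (2 * m - 2)) ^ 2 := by
  have hw : c * m * r ^ m = c * m * r ^ (m - 1) * r := by
    rw [mul_assoc _ (r ^ (m - 1)), ← Real.rpow_add_one hr.ne', sub_add_cancel]
  have hq : c * m * (m - 1) * r ^ (m - 2) * r = (m - 1) * (c * m * r ^ (m - 1)) := by
    rw [mul_assoc _ (r ^ (m - 2)), ← Real.rpow_add_one hr.ne', show m - 2 + 1 = m - 1 by ring]
    ring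
  have h22 : r ^ (2 * m - 2) = (r ^ (m - 1)) ^ 2 := by
    rw [← Real.rpow_mul_natCast hr.le]
    congr 1
    push_cast
    ring
  have h24 : r ^ (2 * m - 4) = (r ^ (m - 1)) ^ 2 / r ^ 2 := by
    rw [← h22, ← Real.rpow_natCast, ← Real.rpow_sub hr]
    congr 1
    push_cast
    ring
  rw [gaussCurvature, deriv_cosineGraph_r m c θ hr.ne', deriv_cosineGraph_θ,
    deriv_cosineGraph_rr m c θ hr, deriv_cosineGraph_rθ m c hr.ne', deriv_cosineGraph_θθ,
    gaussCurvatureOfDerivs_cosineFrame hr.ne' (Real.cos_sq_add_sin_sq θ)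
      (Real.cos_sq_add_sin_sq (m * θ)) hw hq, h22, h24]
  field_simp

theorem stmt_3_general (m c : ℝ) :
    let x : ℝ → ℝ → ℝ × ℝ × ℝ :=
      fun s t => (s * Real.cos t, s * Real.sin t, c * s ^ m * Real.cos (m * t))
    let K : ℝ → ℝ → ℝ := fun s t =>
      let xr := deriv (fun s' => x s' t) s
      let xθ := deriv (fun t' => x s t') t
      let xrr := deriv (fun s' => deriv (fun s'' => x s'' t) s') s
      let xrθ := deriv (fun t' => deriv (fun s' => x s' t') s) t
      let xθθ := deriv (fun t' => deriv (fun t'' => x s t'') t') t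
      let n := (norm3 (cross3 xr xθ))⁻¹ • cross3 xr xθ
      let E := dot3 xr xr
      let Ft := dot3 xr xθ
      let G := dot3 xθ xθ
      let e := dot3 xrr n
      let f := dot3 xrθ n
      let g := dot3 xθθ n
      (e * g - f ^ 2) / (E * G - Ft ^ 2)
    (∀ r θ : ℝ, 0 < r →
      K r θ = -(c ^ 2 * m ^ 2 * (m - 1) ^ 2 * r ^ (2 * m - 4)) /
        (1 + c ^ 2 * m ^ 2 * r ^ (2 * m - 2)) ^ 2) ∧
    (∀ r θ₁ θ₂ : ℝ, 0 < r → K r θ₁ = K r θ₂) := by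
  intro x K
  have hformula : ∀ r θ : ℝ, 0 < r →
      K r θ = -(c ^ 2 * m ^ 2 * (m - 1) ^ 2 * r ^ (2 * m - 4)) /
        (1 + c ^ 2 * m ^ 2 * r ^ (2 * m - 2)) ^ 2 := fun r θ hr =>
    gaussCurvature_cosineGraph m c hr θ
  exact ⟨hformula, fun r θ₁ θ₂ hr => by rw [hformula r θ₁ hr, hformula r θ₂ hr]⟩

/-- For `m ∉ {0,1}` and `c ≠ 0`, the Gaussian curvature of
`x_{m,c}(r,θ) = (r cos θ, r sin θ, c r^m cos mθ)` is
`K = − c² m² (m−1)² r^{2m−4} / (1 + c² m² r^{2m−2})²`; in particular `K` depends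
only on `r`, i.e. `x_{m,c}` has concentric `K`-contours w.r.t. the `xy`-plane. -/
theorem stmt_3 (m c : ℝ) (hm0 : m ≠ 0) (hm1 : m ≠ 1) (hc : c ≠ 0) :
    let x : ℝ → ℝ → ℝ × ℝ × ℝ :=
      fun s t => (s * Real.cos t, s * Real.sin t, c * s ^ m * Real.cos (m * t))
    let K : ℝ → ℝ → ℝ := fun s t =>
      let xr := deriv (fun s' => x s' t) s
      let xθ := deriv (fun t' => x s t') t
      let xrr := deriv (fun s' => deriv (fun s'' => x s'' t) s') s
      let xrθ := deriv (fun t' => deriv (fun s' => x s' t') s) t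
      let xθθ := deriv (fun t' => deriv (fun t'' => x s t'') t') t
      let n := (norm3 (cross3 xr xθ))⁻¹ • cross3 xr xθ
      let E := dot3 xr xr
      let Ft := dot3 xr xθ
      let G := dot3 xθ xθ
      let e := dot3 xrr n
      let f := dot3 xrθ n
      let g := dot3 xθθ n
      (e * g - f ^ 2) / (E * G - Ft ^ 2)
    (∀ r θ : ℝ, 0 < r →
      K r θ = -(c ^ 2 * m ^ 2 * (m - 1) ^ 2 * r ^ (2 * m - 4)) /
        (1 + c ^ 2 * m ^ 2 * r ^ (2 * m - 2)) ^ 2) ∧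
    (∀ r θ₁ θ₂ : ℝ, 0 < r → K r θ₁ = K r θ₂) :=
  stmt_3_general m c
end
end

section
/- For real numbers m ∉ {0,1} and c ≠ 0, the unit normal n = ((x_{m,c})_r × (x_{m,c})_θ)/‖(x_{m,c})_r × (x_{m,c})_θ‖ of the surface x_{m,c}(r,θ) = (r cos θ, r sin θ, c r^m cos mθ) is semi-rotationally equivariant: for all r > 0 and all θ, α ∈ ℝ one has n(r, θ + α) = R_{(1−m)α}( n(r,θ) ), where R_φ is the rotation of ℝ³ about the z-axis by angle φ. -/
noncomputable section

/-- Rotation of ℝ³ about the z-axis by angle `φ`. -/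
def Rz (φ : ℝ) (v : ℝ × ℝ × ℝ) : ℝ × ℝ × ℝ :=
  (v.1 * Real.cos φ - v.2.1 * Real.sin φ,
   v.1 * Real.sin φ + v.2.1 * Real.cos φ, v.2.2)

/-! The cross product of the partial derivatives at angle `θ` is the rotation by `(1 - m) θ` of
the `θ`-independent vector `(-c m r^m, 0, r)`. Rotations about the z-axis preserve the norm and
compose additively, so the unit normal at `θ + α` is the rotation by `(1 - m) α` of the one at `θ`. -/

lemma Rz_Rz (a b : ℝ) (v : ℝ × ℝ × ℝ) : Rz a (Rz b v) = Rz (a + b) v := by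
  simp only [Rz, Real.cos_add, Real.sin_add, Prod.mk.injEq]
  refine ⟨by ring, by ring, trivial⟩

lemma Rz_smul (φ a : ℝ) (v : ℝ × ℝ × ℝ) : Rz φ (a • v) = a • Rz φ v := by
  simp only [Rz, Prod.smul_mk, Prod.smul_fst, Prod.smul_snd, smul_eq_mul, Prod.mk.injEq]
  refine ⟨by ring, by ring, trivial⟩

lemma norm3_Rz (φ : ℝ) (v : ℝ × ℝ × ℝ) : norm3 (Rz φ v) = norm3 v := by
  unfold norm3 dot3 Rz
  congr 1
  linear_combination (v.1 ^ 2 + v.2.1 ^ 2) * Real.sin_sq_add_cos_sq φ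

lemma deriv_surface_radial (m c r t : ℝ) (hr : 0 < r) :
    deriv (fun s => ((s * Real.cos t, s * Real.sin t,
        c * s ^ m * Real.cos (m * t)) : ℝ × ℝ × ℝ)) r
      = (Real.cos t, Real.sin t, c * (m * r ^ (m - 1)) * Real.cos (m * t)) := by
  have h₁ := (hasDerivAt_id r).mul_const (Real.cos t)
  have h₂ := (hasDerivAt_id r).mul_const (Real.sin t)
  have h₃ := ((Real.hasDerivAt_rpow_const (p := m) (Or.inl hr.ne')).const_mul c).mul_const
    (Real.cos (m * t))
  simp only [id, one_mul] at h₁ h₂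
  exact (h₁.prodMk (h₂.prodMk h₃)).deriv

lemma deriv_surface_angular (m c r t : ℝ) :
    deriv (fun t' => ((r * Real.cos t', r * Real.sin t',
        c * r ^ m * Real.cos (m * t')) : ℝ × ℝ × ℝ)) t
      = (r * -Real.sin t, r * Real.cos t, c * r ^ m * (-Real.sin (m * t) * m)) := by
  have h₁ := (Real.hasDerivAt_cos t).const_mul r
  have h₂ := (Real.hasDerivAt_sin t).const_mul r
  have h₃ := ((Real.hasDerivAt_cos (m * t)).comp t
    ((hasDerivAt_id t).const_mul m)).const_mul (c * r ^ m)
  simp only [mul_one] at h₃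
  exact (h₁.prodMk (h₂.prodMk h₃)).deriv

lemma cross3_surface_partials (m c r t : ℝ) (hr : 0 < r) :
    cross3 (Real.cos t, Real.sin t, c * (m * r ^ (m - 1)) * Real.cos (m * t))
      (r * -Real.sin t, r * Real.cos t, c * r ^ m * (-Real.sin (m * t) * m))
      = Rz ((1 - m) * t) (-(c * m * r ^ m), 0, r) := by
  have hpow : r ^ (m - 1) * r = r ^ m := by
    rw [← Real.rpow_add_one hr.ne', sub_add_cancel]
  rw [show (1 - m) * t = t - m * t by ring]
  simp only [cross3, Rz, Real.cos_sub, Real.sin_sub, Prod.mk.injEq]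
  refine ⟨?_, ?_, ?_⟩
  · linear_combination (-(c * m * Real.cos (m * t) * Real.cos t)) * hpow
  · linear_combination (-(c * m * Real.cos (m * t) * Real.sin t)) * hpow
  · linear_combination r * Real.sin_sq_add_cos_sq t

theorem stmt_5_general (m c : ℝ) :
    let x : ℝ → ℝ → ℝ × ℝ × ℝ :=
      fun s t => (s * Real.cos t, s * Real.sin t, c * s ^ m * Real.cos (m * t))
    let n : ℝ → ℝ → ℝ × ℝ × ℝ := fun s t =>
      let xr := deriv (fun s' => x s' t) s
      let xθ := deriv (fun t' => x s t') t
      (norm3 (cross3 xr xθ))⁻¹ • cross3 xr xθ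
    ∀ r θ α : ℝ, 0 < r → n r (θ + α) = Rz ((1 - m) * α) (n r θ) := by
  intro x n r θ α hr
  have hn : ∀ t, n r t = Rz ((1 - m) * t)
      ((norm3 (-(c * m * r ^ m), 0, r))⁻¹ • (-(c * m * r ^ m), 0, r)) := fun t => by
    simp only [n, x, deriv_surface_radial m c r t hr, deriv_surface_angular,
      cross3_surface_partials m c r t hr, norm3_Rz, Rz_smul]
  rw [hn, hn, Rz_Rz, mul_add, add_comm]

/-- For `m ∉ {0,1}` and `c ≠ 0`, the unit normal of
`x_{m,c}(r,θ) = (r cos θ, r sin θ, c r^m cos mθ)` is semi-rotationally equivariant: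
`n(r, θ + α) = R_{(1−m)α}(n(r,θ))` for all `r > 0` and `θ, α ∈ ℝ`. -/
theorem stmt_5 (m c : ℝ) (hm0 : m ≠ 0) (hm1 : m ≠ 1) (hc : c ≠ 0) :
    let x : ℝ → ℝ → ℝ × ℝ × ℝ :=
      fun s t => (s * Real.cos t, s * Real.sin t, c * s ^ m * Real.cos (m * t))
    let n : ℝ → ℝ → ℝ × ℝ × ℝ := fun s t =>
      let xr := deriv (fun s' => x s' t) s
      let xθ := deriv (fun t' => x s t') t
      (norm3 (cross3 xr xθ))⁻¹ • cross3 xr xθ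
    ∀ r θ α : ℝ, 0 < r → n r (θ + α) = Rz ((1 - m) * α) (n r θ) :=
  stmt_5_general m c
end
end

section
/- Let m ≥ 2 be an integer, c ≠ 0 a real number, and F(x,y) = c · Re((x + iy)^m) for (x,y) ∈ ℝ². Then the Gaussian curvature of the graph surface (x, y, F(x,y)) satisfies, at every point, K = (F_xx F_yy − F_xy²)/(1 + F_x² + F_y²)² = − c² m² (m−1)² (x² + y²)^{m−2} / ( 1 + c² m² (x² + y²)^{m−1} )². In particular K depends only on x² + y², so the contours of K project to concentric circles centered at the origin of the xy-plane. -/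
/-!
Write `F = Re g` with `g z = c zᵐ` holomorphic. By the Cauchy–Riemann equations
`F_xx = -F_yy = Re g''`, `F_xy = -Im g''` and `F_x² + F_y² = |g'|²`, so the Hessian determinant is
`-|g''|²` and `K = -|g''|² / (1 + |g'|²)²`, which for `g = c zᵐ` is a function of `|z|² = x² + y²`.
-/

open Complex

noncomputable def graphGaussCurvature (F : ℝ → ℝ → ℝ) (x y : ℝ) : ℝ :=
  let Fx := deriv (fun s => F s y) x
  let Fy := deriv (fun t => F x t) y
  let Fxx := deriv (fun s => deriv (fun s' => F s' y) s) x
  let Fxy := deriv (fun t => deriv (fun s => F s t) x) y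
  let Fyy := deriv (fun t => deriv (fun t' => F x t') t) y
  (Fxx * Fyy - Fxy ^ 2) / (1 + Fx ^ 2 + Fy ^ 2) ^ 2

theorem hasDerivAt_re_comp_add_mul_I_left {g : ℂ → ℂ} {w : ℂ} {x y : ℝ}
    (h : HasDerivAt g w (x + y * I)) :
    HasDerivAt (fun s : ℝ => (g (s + y * I)).re) w.re x :=
  (h.comp_add_const (x : ℂ) (y * I)).real_of_complex

theorem hasDerivAt_re_comp_add_mul_I_right {g : ℂ → ℂ} {w : ℂ} {x y : ℝ}
    (h : HasDerivAt g w (x + y * I)) :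
    HasDerivAt (fun t : ℝ => (g (x + t * I)).re) (w * I).re y := by
  have hline : HasDerivAt (fun u : ℂ => (x : ℂ) + u * I) I y := by
    simpa using ((hasDerivAt_id (y : ℂ)).mul_const I).const_add (x : ℂ)
  exact (h.comp (y : ℂ) hline).real_of_complex

theorem graphGaussCurvature_re_comp {g g' g'' : ℂ → ℂ} (hg : ∀ z, HasDerivAt g (g' z) z)
    (hg' : ∀ z, HasDerivAt g' (g'' z) z) (x y : ℝ) :
    graphGaussCurvature (fun x y => (g (x + y * I)).re) x y =
      -‖g'' (x + y * I)‖ ^ 2 / (1 + ‖g' (x + y * I)‖ ^ 2) ^ 2 := by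
  have hFx : ∀ s t : ℝ, deriv (fun s : ℝ => (g (s + t * I)).re) s = (g' (s + t * I)).re :=
    fun s t => (hasDerivAt_re_comp_add_mul_I_left (hg _)).deriv
  have hFy : ∀ s t : ℝ, deriv (fun t : ℝ => (g (s + t * I)).re) t = (g' (s + t * I) * I).re :=
    fun s t => (hasDerivAt_re_comp_add_mul_I_right (hg _)).deriv
  have hFxx : deriv (fun s => deriv (fun s' : ℝ => (g (s' + y * I)).re) s) x =
      (g'' (x + y * I)).re := by
    simp only [hFx]
    exact (hasDerivAt_re_comp_add_mul_I_left (hg' _)).deriv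
  have hFxy : deriv (fun t : ℝ => deriv (fun s : ℝ => (g (s + t * I)).re) x) y =
      (g'' (x + y * I) * I).re := by
    simp only [hFx]
    exact (hasDerivAt_re_comp_add_mul_I_right (hg' _)).deriv
  have hFyy : deriv (fun t => deriv (fun t' : ℝ => (g (x + t' * I)).re) t) y =
      (g'' (x + y * I) * I * I).re := by
    simp only [hFy]
    exact (hasDerivAt_re_comp_add_mul_I_right ((hg' _).mul_const I)).deriv
  dsimp only [graphGaussCurvature]
  rw [hFxx, hFxy, hFyy, hFx, hFy]
  simp only [Complex.sq_norm, normSq_apply, mul_re, mul_im, I_re, I_im]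
  ring

theorem graphGaussCurvature_const_mul_pow (c : ℝ) (m : ℕ) (x y : ℝ) :
    graphGaussCurvature (fun x y => c * (((x : ℂ) + (y : ℂ) * I) ^ m).re) x y =
      -(c ^ 2 * (m : ℝ) ^ 2 * ((m : ℝ) - 1) ^ 2 * (x ^ 2 + y ^ 2) ^ (m - 2)) /
        (1 + c ^ 2 * (m : ℝ) ^ 2 * (x ^ 2 + y ^ 2) ^ (m - 1)) ^ 2 := by
  have hF : (fun x y : ℝ => c * (((x : ℂ) + (y : ℂ) * I) ^ m).re) =
      fun x y : ℝ => ((c : ℂ) * ((x : ℂ) + (y : ℂ) * I) ^ m).re := by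
    simp only [re_ofReal_mul]
  have hg : ∀ z, HasDerivAt (fun z => (c : ℂ) * z ^ m) (c * (m * z ^ (m - 1))) z :=
    fun z => (hasDerivAt_pow m z).const_mul _
  have hg' : ∀ z, HasDerivAt (fun z => (c : ℂ) * (m * z ^ (m - 1)))
      (c * (m * ((m - 1 : ℕ) * z ^ (m - 2)))) z :=
    fun z => ((hasDerivAt_pow (m - 1) z).const_mul _).const_mul _
  -- the factor `m²` absorbs the truncated subtraction `0 - 1 = 0` at `m = 0`
  have hm_sub : (m : ℝ) ^ 2 * ((m - 1 : ℕ) : ℝ) ^ 2 = (m : ℝ) ^ 2 * ((m : ℝ) - 1) ^ 2 := by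
    cases m <;> simp
  rw [hF, graphGaussCurvature_re_comp hg hg']
  simp only [norm_mul, norm_pow, norm_real, norm_natCast, norm_add_mul_I, Real.norm_eq_abs]
  have hr : ∀ k : ℕ, (√(x ^ 2 + y ^ 2) ^ k) ^ 2 = (x ^ 2 + y ^ 2) ^ k := fun k => by
    rw [← pow_mul, mul_comm, pow_mul, Real.sq_sqrt (by positivity)]
  simp only [mul_pow, sq_abs, hr]
  rw [← mul_assoc ((m : ℝ) ^ 2), hm_sub]
  ring

theorem stmt_6_general (m : ℕ) (c : ℝ) :
    let F : ℝ → ℝ → ℝ := fun x y => c * (((x : ℂ) + (y : ℂ) * Complex.I) ^ m).re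
    let K : ℝ → ℝ → ℝ := fun x y =>
      let Fx := deriv (fun s => F s y) x
      let Fy := deriv (fun t => F x t) y
      let Fxx := deriv (fun s => deriv (fun s' => F s' y) s) x
      let Fxy := deriv (fun t => deriv (fun s => F s t) x) y
      let Fyy := deriv (fun t => deriv (fun t' => F x t') t) y
      (Fxx * Fyy - Fxy ^ 2) / (1 + Fx ^ 2 + Fy ^ 2) ^ 2
    (∀ x y : ℝ,
      K x y = -(c ^ 2 * (m : ℝ) ^ 2 * ((m : ℝ) - 1) ^ 2 * (x ^ 2 + y ^ 2) ^ (m - 2)) /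
        (1 + c ^ 2 * (m : ℝ) ^ 2 * (x ^ 2 + y ^ 2) ^ (m - 1)) ^ 2) ∧
    (∀ x y x' y' : ℝ, x ^ 2 + y ^ 2 = x' ^ 2 + y' ^ 2 → K x y = K x' y') := by
  intro F K
  have hK : ∀ x y : ℝ,
      K x y = -(c ^ 2 * (m : ℝ) ^ 2 * ((m : ℝ) - 1) ^ 2 * (x ^ 2 + y ^ 2) ^ (m - 2)) /
        (1 + c ^ 2 * (m : ℝ) ^ 2 * (x ^ 2 + y ^ 2) ^ (m - 1)) ^ 2 :=
    graphGaussCurvature_const_mul_pow c m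
  exact ⟨hK, fun x y x' y' h => by rw [hK, hK, h]⟩

/-- For an integer `m ≥ 2`, `c ≠ 0`, and `F(x,y) = c · Re((x + iy)^m)`, the Gaussian curvature
`K = (F_xx F_yy − F_xy²)/(1 + F_x² + F_y²)²` of the graph surface `(x, y, F(x,y))` equals
`− c² m² (m−1)² (x² + y²)^{m−2} / (1 + c² m² (x² + y²)^{m−1})²`; in particular `K` depends
only on `x² + y²`, so the contours of `K` project to concentric circles about the origin. -/
theorem stmt_6 (m : ℕ) (hm : 2 ≤ m) (c : ℝ) (hc : c ≠ 0) :
    let F : ℝ → ℝ → ℝ := fun x y => c * (((x : ℂ) + (y : ℂ) * Complex.I) ^ m).re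
    let K : ℝ → ℝ → ℝ := fun x y =>
      let Fx := deriv (fun s => F s y) x
      let Fy := deriv (fun t => F x t) y
      let Fxx := deriv (fun s => deriv (fun s' => F s' y) s) x
      let Fxy := deriv (fun t => deriv (fun s => F s t) x) y
      let Fyy := deriv (fun t => deriv (fun t' => F x t') t) y
      (Fxx * Fyy - Fxy ^ 2) / (1 + Fx ^ 2 + Fy ^ 2) ^ 2
    (∀ x y : ℝ,
      K x y = -(c ^ 2 * (m : ℝ) ^ 2 * ((m : ℝ) - 1) ^ 2 * (x ^ 2 + y ^ 2) ^ (m - 2)) /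
        (1 + c ^ 2 * (m : ℝ) ^ 2 * (x ^ 2 + y ^ 2) ^ (m - 1)) ^ 2) ∧
    (∀ x y x' y' : ℝ, x ^ 2 + y ^ 2 = x' ^ 2 + y' ^ 2 → K x y = K x' y') :=
  stmt_6_general m c
end

section
/- (Theorem 2.2, coordinate form.) Let F : (0,∞) × ℝ → ℝ be a smooth function, let x(r,θ) = (r cos θ, r sin θ, F(r,θ)), and let n = (x_r × x_θ)/‖x_r × x_θ‖ be its unit normal (Gauss map). Suppose there exists k ∈ ℝ such that n(r, θ + t) = R_{kt}( n(r,θ) ) for all r > 0 and all θ, t ∈ ℝ (semi-rotational Gauss map), where R_φ is the rotation of ℝ³ about the z-axis by angle φ. Then every point of (0,∞) × ℝ has an open neighborhood on which either F(r,θ) = a θ + ψ(r) for some constant a and smooth function ψ (a helicoidal surface), or F(r,θ) = C₁ r^{1−k} cos((1−k)θ + l) + C₂ for some real constants C₁, C₂, l (a surface congruent to some x_{m,c} with m = 1−k). -/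
noncomputable section

def pd1 (F : ℝ × ℝ → ℝ) (r θ : ℝ) : ℝ := fderiv ℝ F (r, θ) (1, 0)
def pd2 (F : ℝ × ℝ → ℝ) (r θ : ℝ) : ℝ := fderiv ℝ F (r, θ) (0, 1)

lemma isOpen_S : IsOpen {p : ℝ × ℝ | 0 < p.1} := isOpen_Ioi.preimage continuous_fst

lemma diffAtF {F : ℝ × ℝ → ℝ} (hF : ContDiffOn ℝ (⊤ : ℕ∞) F {p : ℝ × ℝ | 0 < p.1}) {r θ : ℝ} (hr : 0 < r) :
    DifferentiableAt ℝ F (r, θ) :=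
  ((hF.contDiffAt (isOpen_S.mem_nhds hr)).differentiableAt (by simp))

lemma hasDerivAt_pd1 {F : ℝ × ℝ → ℝ} (hF : ContDiffOn ℝ (⊤ : ℕ∞) F {p : ℝ × ℝ | 0 < p.1}) {r θ : ℝ} (hr : 0 < r) :
    HasDerivAt (fun s => F (s, θ)) (pd1 F r θ) r := by
  have h1 : HasDerivAt (fun s : ℝ => (s, θ)) ((1 : ℝ), (0 : ℝ)) r :=
    (hasDerivAt_id r).prodMk (hasDerivAt_const r θ)
  have h2 := HasFDerivAt.comp_hasDerivAt (f := fun s : ℝ => (s, θ)) r ((diffAtF hF hr).hasFDerivAt) h1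
  simpa [pd1, Function.comp_def] using h2

lemma hasDerivAt_pd2 {F : ℝ × ℝ → ℝ} (hF : ContDiffOn ℝ (⊤ : ℕ∞) F {p : ℝ × ℝ | 0 < p.1}) {r θ : ℝ} (hr : 0 < r) :
    HasDerivAt (fun t => F (r, t)) (pd2 F r θ) θ := by
  have h1 : HasDerivAt (fun t : ℝ => (r, t)) ((0 : ℝ), (1 : ℝ)) θ :=
    (hasDerivAt_const θ r).prodMk (hasDerivAt_id θ)
  have h2 := HasFDerivAt.comp_hasDerivAt (f := fun t : ℝ => (r, t)) θ ((diffAtF hF hr).hasFDerivAt) h1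
  simpa [pd2, Function.comp_def] using h2

def cv (F : ℝ × ℝ → ℝ) (r t : ℝ) : ℝ × ℝ × ℝ :=
  (Real.sin t * pd2 F r t - r * Real.cos t * pd1 F r t,
   -(r * Real.sin t * pd1 F r t) - Real.cos t * pd2 F r t, r)

lemma deriv_xr {F : ℝ × ℝ → ℝ} (hF : ContDiffOn ℝ (⊤ : ℕ∞) F {p : ℝ × ℝ | 0 < p.1}) {r t : ℝ} (hr : 0 < r) :
    deriv (fun s' => (s' * Real.cos t, s' * Real.sin t, F (s', t))) r
      = (Real.cos t, Real.sin t, pd1 F r t) := by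
  have h := (((hasDerivAt_id r).mul_const (Real.cos t)).prodMk
    (((hasDerivAt_id r).mul_const (Real.sin t)).prodMk (hasDerivAt_pd1 hF hr (θ := t)))).deriv
  simpa using h

lemma deriv_xt {F : ℝ × ℝ → ℝ} (hF : ContDiffOn ℝ (⊤ : ℕ∞) F {p : ℝ × ℝ | 0 < p.1}) {r t : ℝ} (hr : 0 < r) :
    deriv (fun t' => (r * Real.cos t', r * Real.sin t', F (r, t'))) t
      = (r * -Real.sin t, r * Real.cos t, pd2 F r t) := by
  exact (((Real.hasDerivAt_cos t).const_mul r).prodMk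
    (((Real.hasDerivAt_sin t).const_mul r).prodMk (hasDerivAt_pd2 hF hr (θ := t)))).deriv

lemma cross_eq (F : ℝ × ℝ → ℝ) (r t : ℝ) :
    cross3 (Real.cos t, Real.sin t, pd1 F r t) (r * -Real.sin t, r * Real.cos t, pd2 F r t)
      = cv F r t := by
  have h := Real.sin_sq_add_cos_sq t
  simp only [cross3, cv, Prod.mk.injEq]
  refine ⟨by ring, by ring, by linear_combination r * h⟩

lemma norm3_cv_pos (F : ℝ × ℝ → ℝ) {r : ℝ} (t : ℝ) (hr : 0 < r) : 0 < norm3 (cv F r t) := by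
  apply Real.sqrt_pos.mpr
  have : (cv F r t).2.2 = r := rfl
  simp only [dot3]
  nlinarith [sq_nonneg (cv F r t).1, sq_nonneg (cv F r t).2.1]


/-- A function with zero derivative on (0,∞) is constant there. -/
lemma constAux (f : ℝ → ℝ) (hf : ∀ r : ℝ, 0 < r → HasDerivAt f 0 r) {r : ℝ} (hr : 0 < r) :
    f r = f 1 := by
  have hg : ∀ u : ℝ, HasDerivAt (fun u => f (Real.exp u)) 0 u := by
    intro u
    have := (hf _ (Real.exp_pos u)).comp u (Real.hasDerivAt_exp u)
    simpa [Function.comp_def] using this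
  have hconst := is_const_of_deriv_eq_zero (f := fun u => f (Real.exp u))
    (fun u => (hg u).differentiableAt) (fun u => (hg u).deriv)
  have := hconst (Real.log r) 0
  simpa [Real.exp_log hr] using this

/-- Solve the ODE p' = m p / r on (0,∞): p r = p 1 * r ^ m. -/
lemma odeAux (p : ℝ → ℝ) (m : ℝ) (hp : ∀ r : ℝ, 0 < r → HasDerivAt p (m * p r / r) r)
    {r : ℝ} (hr : 0 < r) : p r = p 1 * r ^ m := by
  have key : ∀ s : ℝ, 0 < s → HasDerivAt (fun s => p s * s ^ (-m)) 0 s := by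
    intro s hs
    have h1 : HasDerivAt (fun s : ℝ => s ^ (-m)) (-m * s ^ (-m - 1)) s :=
      Real.hasDerivAt_rpow_const (Or.inl (ne_of_gt hs))
    have h2 := (hp s hs).mul h1
    have heq : m * p s / s * s ^ (-m) + p s * (-m * s ^ (-m - 1)) = 0 := by
      have hsm : s ^ (-m - 1) = s ^ (-m) / s := by
        rw [Real.rpow_sub hs, Real.rpow_one]
      rw [hsm]
      field_simp
      ring
    rwa [heq] at h2
  have h1 := constAux _ key hr
  simp only [Real.one_rpow, mul_one] at h1
  have hne : r ^ (-m) ≠ 0 := ne_of_gt (Real.rpow_pos_of_pos hr _)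
  have : p r * r ^ (-m) * r ^ m = p 1 * r ^ m := by rw [h1]
  rwa [mul_assoc, ← Real.rpow_add hr, neg_add_cancel, Real.rpow_zero, mul_one] at this


/-- Theorem 2.2 (coordinate form): if the Gauss map of the polar graph surface of a smooth
`F` on `(0,∞) × ℝ` is semi-rotational, i.e. `n(r, θ + t) = R_{kt}(n(r,θ))` for some `k`,
then locally `F(r,θ) = aθ + ψ(r)` (helicoidal) or
`F(r,θ) = C₁ r^{1−k} cos((1−k)θ + l) + C₂` (congruent to some `x_{m,c}` with `m = 1−k`). -/
theorem stmt_9 (F : ℝ × ℝ → ℝ)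
    (hF : ContDiffOn ℝ (⊤ : ℕ∞) F {p : ℝ × ℝ | 0 < p.1}) (k : ℝ) :
    let x : ℝ → ℝ → ℝ × ℝ × ℝ :=
      fun s t => (s * Real.cos t, s * Real.sin t, F (s, t))
    let n : ℝ → ℝ → ℝ × ℝ × ℝ := fun s t =>
      let xr := deriv (fun s' => x s' t) s
      let xθ := deriv (fun t' => x s t') t
      (norm3 (cross3 xr xθ))⁻¹ • cross3 xr xθ
    (∀ r θ t : ℝ, 0 < r → n r (θ + t) = Rz (k * t) (n r θ)) →
    ∀ r θ : ℝ, 0 < r →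
      ∃ V : Set (ℝ × ℝ), IsOpen V ∧ (r, θ) ∈ V ∧ V ⊆ {p : ℝ × ℝ | 0 < p.1} ∧
        ((∃ a : ℝ, ∃ ψ : ℝ → ℝ, ContDiffOn ℝ (⊤ : ℕ∞) ψ (Prod.fst '' V) ∧
            ∀ q ∈ V, F q = a * q.2 + ψ q.1) ∨
         (∃ C₁ C₂ l : ℝ,
            ∀ q ∈ V, F q = C₁ * q.1 ^ (1 - k) * Real.cos ((1 - k) * q.2 + l) + C₂)) := by
  intro x n hsemi r θ hr
  -- notation
  set S : Set (ℝ × ℝ) := {p : ℝ × ℝ | 0 < p.1} with hSdef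
  set P : ℝ → ℝ := fun s => s * pd1 F s 0 with hPdef
  set Q : ℝ → ℝ := fun s => pd2 F s 0 with hQdef
  -- Step 0: the cross product vector satisfies the rotation equation (base angle 0)
  have hcv : ∀ s t : ℝ, 0 < s → cv F s t = Rz (k * t) (cv F s 0) := by
    intro s t hs
    have h := hsemi s 0 t hs
    simp only [n, x, zero_add] at h
    rw [deriv_xr hF hs, deriv_xt hF hs, cross_eq, deriv_xr hF hs, deriv_xt hF hs, cross_eq] at h
    have hN1 := norm3_cv_pos F t hs
    have hN0 := norm3_cv_pos F 0 hs
    -- z-components give equality of the norms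
    have hz := congrArg (fun v : ℝ × ℝ × ℝ => v.2.2) h
    simp only [Rz, Prod.smul_snd, smul_eq_mul] at hz
    have hz' : (norm3 (cv F s t))⁻¹ * s = (norm3 (cv F s 0))⁻¹ * s := by
      simpa [cv] using hz
    have hNeq : norm3 (cv F s t) = norm3 (cv F s 0) :=
      inv_injective (mul_right_cancel₀ (ne_of_gt hs) hz')
    -- scale back
    have h2 := congrArg (fun v : ℝ × ℝ × ℝ => norm3 (cv F s 0) • v) h
    rw [← hNeq] at h2
    rw [smul_smul, mul_inv_cancel₀ (ne_of_gt hN1), one_smul] at h2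
    rw [hNeq] at h2
    have hRz : ∀ (φ c : ℝ) (v : ℝ × ℝ × ℝ), c • Rz φ v = Rz φ (c • v) := by
      intro φ c v
      simp only [Rz, Prod.smul_fst, Prod.smul_snd, Prod.smul_mk, smul_eq_mul, Prod.mk.injEq]
      refine ⟨by ring, by ring, trivial⟩
    rw [hRz, smul_smul, mul_inv_cancel₀ (ne_of_gt hN0), one_smul] at h2
    exact h2
  -- Step 1: the key PDE identities
  have hE1 : ∀ s t : ℝ, 0 < s →
      s * pd1 F s t = P s * Real.cos ((1-k)*t) + Q s * Real.sin ((1-k)*t) := by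
    intro s t hs
    have h := hcv s t hs
    rw [Prod.ext_iff, Prod.ext_iff] at h
    obtain ⟨h1, h2, -⟩ := h
    simp only [cv, Rz, Real.sin_zero, Real.cos_zero] at h1 h2
    rw [show (1-k)*t = t - k*t by ring, Real.cos_sub, Real.sin_sub]
    simp only [hPdef, hQdef]
    linear_combination (-Real.cos t) * h1 + (-Real.sin t) * h2 +
      (-(s * pd1 F s t)) * (Real.sin_sq_add_cos_sq t)
  have hE2 : ∀ s t : ℝ, 0 < s →
      pd2 F s t = -(P s) * Real.sin ((1-k)*t) + Q s * Real.cos ((1-k)*t) := by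
    intro s t hs
    have h := hcv s t hs
    rw [Prod.ext_iff, Prod.ext_iff] at h
    obtain ⟨h1, h2, -⟩ := h
    simp only [cv, Rz, Real.sin_zero, Real.cos_zero] at h1 h2
    rw [show (1-k)*t = t - k*t by ring, Real.cos_sub, Real.sin_sub]
    simp only [hPdef, hQdef]
    linear_combination (Real.sin t) * h1 + (-Real.cos t) * h2 +
      (-(pd2 F s t)) * (Real.sin_sq_add_cos_sq t)

  -- differentiability of the coefficient functions P and Q
  have hfd : ContDiffOn ℝ (⊤ : ℕ∞) (fderiv ℝ F) S := hF.fderiv_of_isOpen isOpen_S (by simp)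
  have hpdiff : ∀ (w : ℝ × ℝ) (s : ℝ), 0 < s →
      DifferentiableAt ℝ (fun u : ℝ => fderiv ℝ F (u, 0) w) s := by
    intro w s hs
    have hline : DifferentiableAt ℝ (fun u : ℝ => ((u, (0:ℝ)) : ℝ × ℝ)) s :=
      differentiableAt_id.prodMk (differentiableAt_const 0)
    have h2 : DifferentiableAt ℝ (fderiv ℝ F) (s, 0) :=
      ((hfd.contDiffAt (isOpen_S.mem_nhds hs)).differentiableAt (by simp))
    exact (h2.comp s hline).clm_apply (differentiableAt_const w)
  have hPdiff : ∀ s : ℝ, 0 < s → DifferentiableAt ℝ P s := by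
    intro s hs
    exact differentiableAt_id.mul (hpdiff (1,0) s hs)
  have hQdiff : ∀ s : ℝ, 0 < s → DifferentiableAt ℝ Q s := by
    intro s hs
    exact hpdiff (0,1) s hs
  -- derivative uniqueness from equality of functions on (0,∞)
  have derivU : ∀ (f g : ℝ → ℝ) (df dg : ℝ) (s : ℝ), 0 < s → HasDerivAt f df s →
      HasDerivAt g dg s → (∀ u, 0 < u → f u = g u) → df = dg := by
    intro f g df dg s hs hf hg hfg
    have hev : f =ᶠ[nhds s] g := by
      filter_upwards [isOpen_Ioi.mem_nhds hs] with u hu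
      exact hfg u hu
    exact ((hg.congr_of_eventuallyEq hev).unique hf).symm
  have hpd10 : ∀ s : ℝ, 0 < s → pd1 F s 0 = P s / s := by
    intro s hs
    have := hE1 s 0 hs
    simp only [mul_zero, Real.cos_zero, Real.sin_zero] at this
    field_simp
    linarith [this]
  by_cases hk : k = 1
  · -- helicoidal case
    subst hk
    have hE2' : ∀ s t : ℝ, 0 < s → pd2 F s t = Q s := by
      intro s t hs
      have := hE2 s t hs
      simpa using this
    have hE1' : ∀ s t : ℝ, 0 < s → s * pd1 F s t = P s := by
      intro s t hs
      have := hE1 s t hs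
      simpa using this
    have hA : ∀ s : ℝ, 0 < s → ∀ t : ℝ, F (s, t) = F (s, 0) + Q s * t := by
      intro s hs t
      have hg : ∀ u : ℝ, HasDerivAt (fun u => F (s, u) - (F (s, 0) + Q s * u)) 0 u := by
        intro u
        have h1 := hasDerivAt_pd2 hF (θ := u) hs
        have h2 : HasDerivAt (fun u : ℝ => F (s, 0) + Q s * u) (Q s) u := by
          simpa using ((hasDerivAt_id' u).const_mul (Q s)).const_add (F (s, 0))
        have h3 := h1.sub h2
        rw [hE2' s u hs, sub_self] at h3
        exact h3
      have hc := is_const_of_deriv_eq_zero (f := fun u => F (s, u) - (F (s, 0) + Q s * u))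
        (fun u => (hg u).differentiableAt) (fun u => (hg u).deriv) t 0
      simp only [mul_zero, add_zero] at hc
      linarith [hc]
    have hQ0 : ∀ s : ℝ, 0 < s → deriv Q s = 0 := by
      intro s hs
      have hQd := (hQdiff s hs).hasDerivAt
      have hL : HasDerivAt (fun u => F (u, 1)) (pd1 F s 1) s := hasDerivAt_pd1 hF hs
      have hR : HasDerivAt (fun u => F (u, 0) + Q u * 1) (pd1 F s 0 + deriv Q s * 1) s :=
        (hasDerivAt_pd1 hF hs).add (hQd.mul_const 1)
      have heq := derivU _ _ _ _ s hs hL hR (fun u hu => hA u hu 1)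
      have e1 : s * pd1 F s 1 = P s := hE1' s 1 hs
      have e0 : s * pd1 F s 0 = P s := hE1' s 0 hs
      have : pd1 F s 1 = pd1 F s 0 := mul_left_cancel₀ (ne_of_gt hs) (e1.trans e0.symm)
      linarith [heq]
    have hQconst : ∀ s : ℝ, 0 < s → Q s = Q 1 := by
      intro s hs
      refine constAux Q (fun u hu => ?_) hs
      have := (hQdiff u hu).hasDerivAt
      rwa [hQ0 u hu] at this
    refine ⟨S, isOpen_S, hr, subset_rfl, Or.inl ⟨Q 1, fun u => F (u, 0), ?_, ?_⟩⟩
    · have himg : Prod.fst '' S = Set.Ioi (0:ℝ) := by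
        ext u
        constructor
        · rintro ⟨p, hp, rfl⟩
          exact hp
        · intro hu
          exact ⟨(u, 0), hu, rfl⟩
      rw [himg]
      exact hF.comp ((contDiff_id.prodMk contDiff_const).contDiffOn) (fun u hu => hu)
    · intro q hq
      have h := hA q.1 hq q.2
      rw [Prod.mk.eta] at h
      rw [h, hQconst q.1 hq]
      ring
  · -- the x_{m,c} case
    have hm : (1:ℝ) - k ≠ 0 := sub_ne_zero.mpr (Ne.symm hk)
    have hcosD : ∀ u : ℝ, HasDerivAt (fun u => Real.cos ((1-k)*u)) (-Real.sin ((1-k)*u) * (1-k)) u := by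
      intro u
      have := (Real.hasDerivAt_cos ((1-k)*u)).comp u ((hasDerivAt_id u).const_mul (1-k))
      simpa [Function.comp_def] using this
    have hsinD : ∀ u : ℝ, HasDerivAt (fun u => Real.sin ((1-k)*u)) (Real.cos ((1-k)*u) * (1-k)) u := by
      intro u
      have := (Real.hasDerivAt_sin ((1-k)*u)).comp u ((hasDerivAt_id u).const_mul (1-k))
      simpa [Function.comp_def] using this
    -- Step A : integrate in the angular variable
    have hA : ∀ s : ℝ, 0 < s → ∀ t : ℝ,
        F (s, t) = F (s, 0) + (P s * (Real.cos ((1-k)*t) - 1) + Q s * Real.sin ((1-k)*t))/(1-k) := by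
      intro s hs t
      have hg : ∀ u : ℝ, HasDerivAt
          (fun u => F (s, u) - (F (s, 0) + (P s * (Real.cos ((1-k)*u) - 1) + Q s * Real.sin ((1-k)*u))/(1-k))) 0 u := by
        intro u
        have h1 := hasDerivAt_pd2 hF (θ := u) hs
        have h2 : HasDerivAt (fun u : ℝ => F (s, 0) + (P s * (Real.cos ((1-k)*u) - 1) + Q s * Real.sin ((1-k)*u))/(1-k))
            ((P s * (-Real.sin ((1-k)*u) * (1-k)) + Q s * (Real.cos ((1-k)*u) * (1-k)))/(1-k)) u := by
          have := HasDerivAt.const_add (F (s, 0))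
            (((((hcosD u).sub_const 1).const_mul (P s)).add ((hsinD u).const_mul (Q s))).div_const (1-k))
          simpa using this
        have h3 := h1.sub h2
        have hval : pd2 F s u - (P s * (-Real.sin ((1-k)*u) * (1-k)) + Q s * (Real.cos ((1-k)*u) * (1-k)))/(1-k) = 0 := by
          rw [hE2 s u hs]
          field_simp
          try ring
        rwa [hval] at h3
      have hc := is_const_of_deriv_eq_zero
        (f := fun u => F (s, u) - (F (s, 0) + (P s * (Real.cos ((1-k)*u) - 1) + Q s * Real.sin ((1-k)*u))/(1-k)))
        (fun u => (hg u).differentiableAt) (fun u => (hg u).deriv) t 0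
      simp only [mul_zero, Real.cos_zero, Real.sin_zero, sub_self, zero_div, add_zero] at hc
      have hc' : F (s, t) - (F (s, 0) + (P s * (Real.cos ((1-k)*t) - 1) + Q s * Real.sin ((1-k)*t))/(1-k)) = 0 := by
        rw [hc]; try ring
      linarith [hc']
    -- Step B : the ODEs for P and Q
    have hderivs : ∀ s : ℝ, 0 < s →
        deriv P s = (1-k) * P s / s ∧ deriv Q s = (1-k) * Q s / s := by
      intro s hs
      have hPd := (hPdiff s hs).hasDerivAt
      have hQd := (hQdiff s hs).hasDerivAt
      have hB : ∀ t : ℝ, pd1 F s t =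
          pd1 F s 0 + (deriv P s * (Real.cos ((1-k)*t) - 1) + deriv Q s * Real.sin ((1-k)*t))/(1-k) := by
        intro t
        have hL : HasDerivAt (fun u => F (u, t)) (pd1 F s t) s := hasDerivAt_pd1 hF hs
        have hR : HasDerivAt
            (fun u => F (u, 0) + (P u * (Real.cos ((1-k)*t) - 1) + Q u * Real.sin ((1-k)*t))/(1-k))
            (pd1 F s 0 + (deriv P s * (Real.cos ((1-k)*t) - 1) + deriv Q s * Real.sin ((1-k)*t))/(1-k)) s :=
          (hasDerivAt_pd1 hF hs).add
            (((hPd.mul_const _).add (hQd.mul_const _)).div_const (1-k))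
        exact derivU _ _ _ _ s hs hL hR (fun u hu => hA u hu t)
      have htpi : (1-k) * (Real.pi / (1-k)) = Real.pi := by field_simp
      have hts : (1-k) * (Real.pi / (2*(1-k))) = Real.pi / 2 := by field_simp
      have he0 := hE1 s 0 hs
      simp only [mul_zero, Real.cos_zero, Real.sin_zero] at he0
      have h1 := hB (Real.pi / (1-k))
      rw [htpi, Real.cos_pi, Real.sin_pi] at h1
      have he1 := hE1 s (Real.pi / (1-k)) hs
      rw [htpi, Real.cos_pi, Real.sin_pi] at he1
      have hc1 : (pd1 F s (Real.pi / (1-k)) - pd1 F s 0) * (1-k)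
          = deriv P s * (-1 - 1) + deriv Q s * 0 := by
        have hdiv : pd1 F s (Real.pi / (1-k)) - pd1 F s 0
            = (deriv P s * (-1 - 1) + deriv Q s * 0) / (1-k) := by linarith [h1]
        rw [eq_div_iff hm] at hdiv
        exact hdiv
      have hP' : s * deriv P s = (1-k) * P s := by
        linear_combination (s/2) * hc1 - ((1-k)/2) * he1 + ((1-k)/2) * he0
      have h2 := hB (Real.pi / (2*(1-k)))
      rw [hts, Real.cos_pi_div_two, Real.sin_pi_div_two] at h2
      have he2 := hE1 s (Real.pi / (2*(1-k))) hs
      rw [hts, Real.cos_pi_div_two, Real.sin_pi_div_two] at he2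
      have hc2 : (pd1 F s (Real.pi / (2*(1-k))) - pd1 F s 0) * (1-k)
          = deriv P s * (0 - 1) + deriv Q s * 1 := by
        have hdiv : pd1 F s (Real.pi / (2*(1-k))) - pd1 F s 0
            = (deriv P s * (0 - 1) + deriv Q s * 1) / (1-k) := by linarith [h2]
        rw [eq_div_iff hm] at hdiv
        exact hdiv
      have hQ' : s * deriv Q s = (1-k) * Q s := by
        linear_combination (-s) * hc2 + (1-k) * he2 - (1-k) * he0 + hP'
      constructor
      · rw [eq_div_iff (ne_of_gt hs)]
        linarith [hP']
      · rw [eq_div_iff (ne_of_gt hs)]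
        linarith [hQ']
    -- Step C : solve the ODEs
    have hPs : ∀ s : ℝ, 0 < s → P s = P 1 * s ^ (1-k) := by
      intro s hs
      refine odeAux P (1-k) (fun u hu => ?_) hs
      have := (hPdiff u hu).hasDerivAt
      rwa [(hderivs u hu).1] at this
    have hQs : ∀ s : ℝ, 0 < s → Q s = Q 1 * s ^ (1-k) := by
      intro s hs
      refine odeAux Q (1-k) (fun u hu => ?_) hs
      have := (hQdiff u hu).hasDerivAt
      rwa [(hderivs u hu).2] at this
    -- Step D : integrate in the radial variable
    have hF0 : ∀ s : ℝ, 0 < s →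
        F (s, 0) = P 1 / (1-k) * s ^ (1-k) + (F (1, 0) - P 1 / (1-k)) := by
      intro s hs
      have key : ∀ u : ℝ, 0 < u →
          HasDerivAt (fun u : ℝ => F (u, 0) - P 1 / (1-k) * u ^ (1-k)) 0 u := by
        intro u hu
        have h1 : HasDerivAt (fun u : ℝ => u ^ (1-k)) ((1-k) * u ^ (1-k-1)) u :=
          Real.hasDerivAt_rpow_const (Or.inl (ne_of_gt hu))
        have h2 := (hasDerivAt_pd1 hF (θ := 0) hu).sub (h1.const_mul (P 1 / (1-k)))
        have hval : pd1 F u 0 - P 1 / (1-k) * ((1-k) * u ^ (1-k-1)) = 0 := by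
          rw [hpd10 u hu, hPs u hu]
          have : u ^ ((1:ℝ)-k-1) = u ^ ((1:ℝ)-k) / u := by
            rw [Real.rpow_sub hu, Real.rpow_one]
          rw [this]
          field_simp
          try ring
        rwa [hval] at h2
      have hc := constAux _ key hs
      rw [Real.one_rpow, mul_one] at hc
      linarith [hc]
    -- assemble the closed form
    set z : ℂ := ⟨P 1 / (1-k), -(Q 1 / (1-k))⟩ with hz
    have hcos : ‖z‖ * Real.cos z.arg = P 1 / (1-k) := Complex.norm_mul_cos_arg z
    have hsin : ‖z‖ * Real.sin z.arg = -(Q 1 / (1-k)) := Complex.norm_mul_sin_arg z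
    refine ⟨S, isOpen_S, hr, subset_rfl,
      Or.inr ⟨‖z‖, F (1, 0) - P 1 / (1-k), z.arg, ?_⟩⟩
    intro q hq
    have h := hA q.1 hq q.2
    rw [Prod.mk.eta] at h
    rw [h, hF0 q.1 hq, hPs q.1 hq, hQs q.1 hq, Real.cos_add]
    linear_combination (-(q.1 ^ ((1:ℝ)-k) * Real.cos ((1-k)*q.2))) * hcos
      + (q.1 ^ ((1:ℝ)-k) * Real.sin ((1-k)*q.2)) * hsin
end
end

section
/- (Corollary 2.3, coordinate form.) Let F : (0,∞) × ℝ → ℝ be a smooth function, let x(r,θ) = (r cos θ, r sin θ, F(r,θ)), and let n = (x_r × x_θ)/‖x_r × x_θ‖ be its unit normal (Gauss map). Suppose there exists k ∈ ℝ with k ≠ 1 such that n(r, θ + t) = R_{kt}( n(r,θ) ) for all r > 0 and all θ, t ∈ ℝ (strictly semi-rotational Gauss map), where R_φ is the rotation of ℝ³ about the z-axis by angle φ. Then every point of (0,∞) × ℝ has an open neighborhood on which F(r,θ) = C₁ r^{1−k} cos((1−k)θ + l) + C₂ for some real constants C₁, C₂, l. -/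
noncomputable section

/-! ### Auxiliary definitions and lemmas -/

open Real Set

/-- `r·F_r` for the polar graph. -/
def Pfun (F : ℝ × ℝ → ℝ) (s t : ℝ) : ℝ := s * fderiv ℝ F (s, t) (1, 0)

/-- `F_θ` for the polar graph. -/
def Qfun (F : ℝ × ℝ → ℝ) (s t : ℝ) : ℝ := fderiv ℝ F (s, t) (0, 1)

/-- The (unnormalized) cross product of the coordinate tangent vectors. -/
def cfun (F : ℝ × ℝ → ℝ) (s t : ℝ) : ℝ × ℝ × ℝ :=
  (Qfun F s t * Real.sin t - Pfun F s t * Real.cos t,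
   -(Pfun F s t * Real.sin t) - Qfun F s t * Real.cos t, s)

lemma polar_rep (p q : ℝ) : ∃ C l : ℝ, C * Real.cos l = p ∧ C * Real.sin l = q :=
  ⟨‖(⟨p, q⟩ : ℂ)‖, Complex.arg ⟨p, q⟩, Complex.norm_mul_cos_arg _,
    Complex.norm_mul_sin_arg _⟩

lemma norm3_pos (u : ℝ × ℝ × ℝ) (h : u.2.2 ≠ 0) : 0 < norm3 u := by
  rw [norm3, Real.sqrt_pos, dot3]
  nlinarith [sq_nonneg u.1, sq_nonneg u.2.1, sq_nonneg u.2.2, sq_abs u.2.2, abs_pos.mpr h]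

lemma c_eq_of_n_eq (c' c : ℝ × ℝ × ℝ) (r φ : ℝ) (hr : 0 < r)
    (h3' : c'.2.2 = r) (h3 : c.2.2 = r)
    (h : (norm3 c')⁻¹ • c' = Rz φ ((norm3 c)⁻¹ • c)) : c' = Rz φ c := by
  have hN' : 0 < norm3 c' := norm3_pos _ (by rw [h3']; exact hr.ne')
  have hN : 0 < norm3 c := norm3_pos _ (by rw [h3]; exact hr.ne')
  have h33 : ((norm3 c')⁻¹ • c').2.2 = (Rz φ ((norm3 c)⁻¹ • c)).2.2 := by rw [h]
  simp only [Rz, Prod.smul_snd, smul_eq_mul, h3, h3'] at h33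
  have hNN : norm3 c' = norm3 c := by
    field_simp at h33
    linarith [h33]
  have hRz : ∀ (a : ℝ) (v : ℝ × ℝ × ℝ), Rz φ (a • v) = a • Rz φ v := by
    intro a v
    refine Prod.ext ?_ (Prod.ext ?_ ?_) <;>
      simp only [Rz, Prod.smul_fst, Prod.smul_snd, smul_eq_mul] <;> ring
  have hc' : c' = (norm3 c') • ((norm3 c')⁻¹ • c') := by
    rw [smul_smul, mul_inv_cancel₀ hN'.ne', one_smul]
  rw [hc', h, hNN, hRz, smul_smul, mul_inv_cancel₀ hN.ne', one_smul]

lemma rot_PQ (P' Q' P Q θ t k : ℝ)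
    (e1 : Q' * Real.sin (θ+t) - P' * Real.cos (θ+t)
        = (Q * Real.sin θ - P * Real.cos θ) * Real.cos (k*t)
          - (-(P * Real.sin θ) - Q * Real.cos θ) * Real.sin (k*t))
    (e2 : -(P' * Real.sin (θ+t)) - Q' * Real.cos (θ+t)
        = (Q * Real.sin θ - P * Real.cos θ) * Real.sin (k*t)
          + (-(P * Real.sin θ) - Q * Real.cos θ) * Real.cos (k*t)) :
    P' = P * Real.cos ((k-1)*t) - Q * Real.sin ((k-1)*t)
      ∧ Q' = P * Real.sin ((k-1)*t) + Q * Real.cos ((k-1)*t) := by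
  have hp1 := Real.sin_sq_add_cos_sq (θ+t)
  have hp2 := Real.sin_sq_add_cos_sq θ
  have hkt : (k-1)*t = k*t - t := by ring
  rw [hkt, Real.cos_sub, Real.sin_sub, Real.cos_add, Real.sin_add] at *
  set X := Real.cos (k*t) * Real.cos t + Real.sin (k*t) * Real.sin t with hX
  set Y := Real.sin (k*t) * Real.cos t - Real.cos (k*t) * Real.sin t with hY
  constructor
  · linear_combination (-(Real.cos θ * Real.cos t - Real.sin θ * Real.sin t)) * e1
      + (-(Real.sin θ * Real.cos t + Real.cos θ * Real.sin t)) * e2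
      - P' * hp1 + (P*X - Q*Y) * hp2
  · linear_combination (Real.sin θ * Real.cos t + Real.cos θ * Real.sin t) * e1
      + (-(Real.cos θ * Real.cos t - Real.sin θ * Real.sin t)) * e2
      - Q' * hp1 + (P*Y + Q*X) * hp2

lemma const_of_Ioi (g : ℝ → ℝ) (hg : ∀ s ∈ Ioi (0:ℝ), HasDerivAt g 0 s)
    (r : ℝ) (hr : 0 < r) : g r = g 1 := by
  have hconv : Convex ℝ (Ioi (0:ℝ)) := convex_Ioi 0
  refine hconv.is_const_of_fderivWithin_eq_zero (𝕜 := ℝ) (f := g) ?_ ?_ hr (mem_Ioi.mpr one_pos)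
  · intro s hs; exact ((hg s hs).differentiableAt).differentiableWithinAt
  · intro s hs
    rw [fderivWithin_of_isOpen isOpen_Ioi hs, (hg s hs).hasFDerivAt.fderiv]
    ext; simp

lemma clm_eq_of_basis (L M : ℝ × ℝ →L[ℝ] ℝ)
    (h1 : L (1,0) = M (1,0)) (h2 : L (0,1) = M (0,1)) : L = M := by
  apply ContinuousLinearMap.ext
  intro x
  have hx : x = x.1 • ((1:ℝ),(0:ℝ)) + x.2 • ((0:ℝ),(1:ℝ)) := by
    refine Prod.ext ?_ ?_ <;> simp
  rw [hx, map_add, map_add, map_smul, map_smul, map_smul, map_smul, h1, h2]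

lemma sin_mul_hasDerivAt (φ y : ℝ) :
    HasDerivAt (fun θ : ℝ => Real.sin (φ*θ)) (Real.cos (φ*y) * φ) y := by
  simpa [Function.comp_def] using (Real.hasDerivAt_sin (φ*y)).comp y ((hasDerivAt_id y).const_mul φ)

lemma cos_mul_hasDerivAt (φ y : ℝ) :
    HasDerivAt (fun θ : ℝ => Real.cos (φ*θ)) (-Real.sin (φ*y) * φ) y := by
  simpa [Function.comp_def] using (Real.hasDerivAt_cos (φ*y)).comp y ((hasDerivAt_id y).const_mul φ)

lemma G_hasFDerivAt (A B k : ℝ) (hk : k ≠ 1) (p : ℝ × ℝ) (hp : 0 < p.1) :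
    HasFDerivAt
      (fun q : ℝ × ℝ =>
        q.1 ^ (1-k) * ((B * Real.sin ((k-1)*q.2) - A * Real.cos ((k-1)*q.2)) / (k-1)))
      ((((1-k) * p.1 ^ (-k)) * ((B * Real.sin ((k-1)*p.2) - A * Real.cos ((k-1)*p.2)) / (k-1)))
          • (ContinuousLinearMap.fst ℝ ℝ ℝ)
       + (p.1 ^ (1-k) * (B * Real.cos ((k-1)*p.2) + A * Real.sin ((k-1)*p.2))) •
          (ContinuousLinearMap.snd ℝ ℝ ℝ)) p := by
  have hk' : k - 1 ≠ 0 := sub_ne_zero.mpr hk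
  have hg1 : HasFDerivAt (fun q : ℝ × ℝ => q.1 ^ (1-k))
      (((1-k) * p.1 ^ (-k)) • (ContinuousLinearMap.fst ℝ ℝ ℝ)) p := by
    have h := Real.hasDerivAt_rpow_const (x := p.1) (p := 1-k) (Or.inl hp.ne')
    have h2 : HasFDerivAt (fun q : ℝ × ℝ => q.1 ^ (1-k))
        (((1-k) * p.1 ^ (1-k-1)) • (ContinuousLinearMap.fst ℝ ℝ ℝ)) p :=
      HasDerivAt.comp_hasFDerivAt p h hasFDerivAt_fst
    have he : p.1 ^ (1-k-1) = p.1 ^ (-k) := by norm_num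
    rw [he] at h2
    exact h2
  have hH : HasDerivAt (fun θ : ℝ => (B * Real.sin ((k-1)*θ) - A * Real.cos ((k-1)*θ)) / (k-1))
      (B * Real.cos ((k-1)*p.2) + A * Real.sin ((k-1)*p.2)) p.2 := by
    have := ((((sin_mul_hasDerivAt (k-1) p.2).const_mul B).sub
      ((cos_mul_hasDerivAt (k-1) p.2).const_mul A)).div_const (k-1))
    refine this.congr_deriv ?_
    field_simp
    ring
  have hg2 : HasFDerivAt
      (fun q : ℝ × ℝ => (B * Real.sin ((k-1)*q.2) - A * Real.cos ((k-1)*q.2)) / (k-1))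
      ((B * Real.cos ((k-1)*p.2) + A * Real.sin ((k-1)*p.2)) • (ContinuousLinearMap.snd ℝ ℝ ℝ))
      p := HasDerivAt.comp_hasFDerivAt p hH hasFDerivAt_snd
  refine (hg1.mul hg2).congr_fderiv ?_
  refine clm_eq_of_basis _ _ ?_ ?_ <;>
    simp only [ContinuousLinearMap.add_apply, ContinuousLinearMap.smul_apply, smul_eq_mul,
      ContinuousLinearMap.coe_fst', ContinuousLinearMap.coe_snd'] <;> ring

/-- The analytic core of the proof. -/
lemma main_aux (F : ℝ × ℝ → ℝ)
    (hF : ContDiffOn ℝ (⊤ : ℕ∞) F {p : ℝ × ℝ | 0 < p.1}) (k : ℝ) (hk : k ≠ 1)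
    (hc : ∀ s θ t : ℝ, 0 < s → cfun F s (θ+t) = Rz (k*t) (cfun F s θ)) :
    ∃ C₁ C₂ l : ℝ, ∀ q : ℝ × ℝ, 0 < q.1 →
      F q = C₁ * q.1 ^ (1 - k) * Real.cos ((1 - k) * q.2 + l) + C₂ := by
  have hk' : k - 1 ≠ 0 := sub_ne_zero.mpr hk
  have hU : IsOpen {p : ℝ × ℝ | 0 < p.1} := isOpen_lt continuous_const continuous_fst
  -- rotation law for P, Q
  have hPQ : ∀ s θ t : ℝ, 0 < s →
      Pfun F s (θ+t) = Pfun F s θ * Real.cos ((k-1)*t) - Qfun F s θ * Real.sin ((k-1)*t)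
      ∧ Qfun F s (θ+t) = Pfun F s θ * Real.sin ((k-1)*t) + Qfun F s θ * Real.cos ((k-1)*t) := by
    intro s θ t hs
    have h := hc s θ t hs
    have e1 : Qfun F s (θ+t) * Real.sin (θ+t) - Pfun F s (θ+t) * Real.cos (θ+t)
        = (Qfun F s θ * Real.sin θ - Pfun F s θ * Real.cos θ) * Real.cos (k*t)
          - (-(Pfun F s θ * Real.sin θ) - Qfun F s θ * Real.cos θ) * Real.sin (k*t) :=
      congrArg Prod.fst h
    have e2 : -(Pfun F s (θ+t) * Real.sin (θ+t)) - Qfun F s (θ+t) * Real.cos (θ+t)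
        = (Qfun F s θ * Real.sin θ - Pfun F s θ * Real.cos θ) * Real.sin (k*t)
          + (-(Pfun F s θ * Real.sin θ) - Qfun F s θ * Real.cos θ) * Real.cos (k*t) :=
      congrArg (fun v : ℝ × ℝ × ℝ => v.2.1) h
    exact rot_PQ _ _ _ _ θ t k e1 e2
  -- trigonometric form in θ
  have hPform : ∀ s θ : ℝ, 0 < s →
      Pfun F s θ = Pfun F s 0 * Real.cos ((k-1)*θ) - Qfun F s 0 * Real.sin ((k-1)*θ) := by
    intro s θ hs
    have := (hPQ s 0 θ hs).1
    rwa [zero_add] at this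
  have hQform : ∀ s θ : ℝ, 0 < s →
      Qfun F s θ = Pfun F s 0 * Real.sin ((k-1)*θ) + Qfun F s 0 * Real.cos ((k-1)*θ) := by
    intro s θ hs
    have := (hPQ s 0 θ hs).2
    rwa [zero_add] at this
  -- radial ODE for Q from symmetry of second derivatives
  have hQder : ∀ s θ : ℝ, 0 < s →
      HasDerivAt (fun s' => Qfun F s' θ) (-((k-1) * Qfun F s θ) / s) s := by
    intro s θ hs
    have hmem : (s, θ) ∈ {p : ℝ × ℝ | 0 < p.1} := hs
    have hCA : ContDiffAt ℝ (⊤ : ℕ∞) F (s, θ) := hF.contDiffAt (hU.mem_nhds hmem)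
    have hCA' : ContDiffAt ℝ (⊤ : ℕ∞) (fderiv ℝ F) (s, θ) := hCA.fderiv_right (by norm_num)
    have hd' : DifferentiableAt ℝ (fderiv ℝ F) (s, θ) := hCA'.differentiableAt (by norm_num)
    set f'' := fderiv ℝ (fderiv ℝ F) (s, θ) with hf''
    have hsymm : f'' (1, 0) (0, 1) = f'' (0, 1) (1, 0) := by
      apply second_derivative_symmetric_of_eventually (f := F)
      · filter_upwards [hU.mem_nhds hmem] with y hy
        exact ((hF.contDiffAt (hU.mem_nhds hy)).differentiableAt (by norm_num)).hasFDerivAt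
      · exact hd'.hasFDerivAt
    have hD1 : HasDerivAt (fun s' => Qfun F s' θ) (f'' (1, 0) (0, 1)) s := by
      have h1 : HasDerivAt (fun s' : ℝ => (s', θ)) ((1 : ℝ), (0 : ℝ)) s :=
        (hasDerivAt_id s).prodMk (hasDerivAt_const s θ)
      have h2 := hd'.hasFDerivAt.comp_hasDerivAt s h1
      have h3 := (ContinuousLinearMap.apply ℝ ℝ ((0:ℝ), (1:ℝ))).hasFDerivAt.comp_hasDerivAt s h2
      simpa [Qfun, Function.comp_def] using h3
    have hD2 : HasDerivAt (fun t' => fderiv ℝ F (s, t') (1, 0)) (f'' (0, 1) (1, 0)) θ := by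
      have h1 : HasDerivAt (fun t' : ℝ => (s, t')) ((0 : ℝ), (1 : ℝ)) θ :=
        (hasDerivAt_const θ s).prodMk (hasDerivAt_id θ)
      have h2 := hd'.hasFDerivAt.comp_hasDerivAt θ h1
      have h3 := (ContinuousLinearMap.apply ℝ ℝ ((1:ℝ), (0:ℝ))).hasFDerivAt.comp_hasDerivAt θ h2
      simpa [Function.comp_def] using h3
    -- the function t' ↦ F_r(s,t') is an explicit trigonometric function
    have hfun : (fun t' => fderiv ℝ F (s, t') (1, 0))
        = fun t' => (Pfun F s 0 * Real.cos ((k-1)*t') - Qfun F s 0 * Real.sin ((k-1)*t')) / s := by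
      funext t'
      rw [← hPform s t' hs, Pfun]
      field_simp
    have hD2' : HasDerivAt (fun t' => fderiv ℝ F (s, t') (1, 0))
        (-((k-1) * Qfun F s θ) / s) θ := by
      rw [hfun]
      have h := (((cos_mul_hasDerivAt (k-1) θ).const_mul (Pfun F s 0)).sub
        ((sin_mul_hasDerivAt (k-1) θ).const_mul (Qfun F s 0))).div_const s
      refine h.congr_deriv ?_
      rw [hQform s θ hs]
      field_simp
      ring
    have h5 : f'' (0, 1) (1, 0) = -((k-1) * Qfun F s θ) / s := hD2.unique hD2'
    rw [hsymm, h5] at hD1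
    exact hD1
  -- solve the radial ODE: Q s θ = s ^ (1-k) * Q 1 θ
  have hQsol : ∀ s θ : ℝ, 0 < s → Qfun F s θ = s ^ (1-k) * Qfun F 1 θ := by
    intro s θ hs
    have hconst : Qfun F s θ * s ^ (k-1) = Qfun F 1 θ * (1:ℝ) ^ (k-1) := by
      apply const_of_Ioi (fun s' => Qfun F s' θ * s' ^ (k-1)) ?_ s hs
      intro y hy
      have hy' : (0:ℝ) < y := hy
      have h1 := hQder y θ hy'
      have h2 := Real.hasDerivAt_rpow_const (x := y) (p := k-1) (Or.inl hy'.ne')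
      have h3 := h1.mul h2
      refine h3.congr_deriv ?_
      have hpow : y ^ (k-1-1) = y ^ (k-1) / y := by
        rw [show k-1-1 = (k-1) - 1 from rfl, Real.rpow_sub hy', Real.rpow_one]
      rw [hpow]
      field_simp
      ring
    rw [Real.one_rpow, mul_one] at hconst
    have hsk : s ^ (1-k) * s ^ (k-1) = 1 := by
      rw [← Real.rpow_add hs]; norm_num
    calc Qfun F s θ = Qfun F s θ * (s ^ (k-1) * s ^ (1-k)) := by
          rw [mul_comm (s ^ (k-1)), hsk, mul_one]
      _ = (Qfun F s θ * s ^ (k-1)) * s ^ (1-k) := by ring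
      _ = s ^ (1-k) * Qfun F 1 θ := by rw [hconst]; ring
  set A := Pfun F 1 0 with hA
  set B := Qfun F 1 0 with hB
  -- radial form of the coefficients
  have hbsol : ∀ s : ℝ, 0 < s → Qfun F s 0 = s ^ (1-k) * B := by
    intro s hs
    have := hQsol s 0 hs
    rwa [hB]
  have hasol : ∀ s : ℝ, 0 < s → Pfun F s 0 = s ^ (1-k) * A := by
    intro s hs
    set θ₁ := (Real.pi/2) / (k-1) with hθ₁
    have hang : (k-1) * θ₁ = Real.pi/2 := by
      rw [hθ₁]; field_simp
    have h1 : Qfun F s θ₁ = Pfun F s 0 := by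
      rw [hQform s θ₁ hs, hang, Real.sin_pi_div_two, Real.cos_pi_div_two]; ring
    have h2 : Qfun F 1 θ₁ = A := by
      rw [hQform 1 θ₁ one_pos, hang, Real.sin_pi_div_two, Real.cos_pi_div_two, hA]; ring
    have h3 := hQsol s θ₁ hs
    rw [h1, h2] at h3
    exact h3
  -- explicit partial derivatives of F
  have hFrval : ∀ s θ : ℝ, 0 < s →
      fderiv ℝ F (s, θ) (1, 0)
        = s ^ (-k) * (A * Real.cos ((k-1)*θ) - B * Real.sin ((k-1)*θ)) := by
    intro s θ hs
    have h1 : Pfun F s θ = s ^ (1-k) * (A * Real.cos ((k-1)*θ) - B * Real.sin ((k-1)*θ)) := by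
      rw [hPform s θ hs, hasol s hs, hbsol s hs]; ring
    have h2 : s ^ (1-k) = s ^ (-k) * s := by
      rw [show (1:ℝ)-k = -k+1 from by ring, Real.rpow_add_one hs.ne']
    have h3 : s * fderiv ℝ F (s, θ) (1, 0) = s * (s ^ (-k) *
        (A * Real.cos ((k-1)*θ) - B * Real.sin ((k-1)*θ))) := by
      rw [show s * fderiv ℝ F (s, θ) (1, 0) = Pfun F s θ from rfl, h1, h2]; ring
    exact mul_left_cancel₀ hs.ne' h3
  have hFθval : ∀ s θ : ℝ, 0 < s →
      fderiv ℝ F (s, θ) (0, 1)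
        = s ^ (1-k) * (A * Real.sin ((k-1)*θ) + B * Real.cos ((k-1)*θ)) := by
    intro s θ hs
    have h1 : Qfun F s θ = s ^ (1-k) * (A * Real.sin ((k-1)*θ) + B * Real.cos ((k-1)*θ)) := by
      rw [hQform s θ hs, hasol s hs, hbsol s hs]; ring
    exact h1
  -- F - G is constant on the (convex) half plane
  set G : ℝ × ℝ → ℝ := fun q =>
    q.1 ^ (1-k) * ((B * Real.sin ((k-1)*q.2) - A * Real.cos ((k-1)*q.2)) / (k-1)) with hG
  have hE : ∀ p : ℝ × ℝ, p ∈ {p : ℝ × ℝ | 0 < p.1} →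
      HasFDerivAt (fun q => F q - G q) (0 : ℝ × ℝ →L[ℝ] ℝ) p := by
    intro p hp
    have hp1 : 0 < p.1 := hp
    have hdF : HasFDerivAt F (fderiv ℝ F p) p :=
      ((hF.contDiffAt (hU.mem_nhds hp)).differentiableAt (by norm_num)).hasFDerivAt
    have hdG := G_hasFDerivAt A B k hk p hp1
    have heq : fderiv ℝ F p
        = (((1-k) * p.1 ^ (-k)) * ((B * Real.sin ((k-1)*p.2) - A * Real.cos ((k-1)*p.2)) / (k-1)))
            • (ContinuousLinearMap.fst ℝ ℝ ℝ)
          + (p.1 ^ (1-k) * (B * Real.cos ((k-1)*p.2) + A * Real.sin ((k-1)*p.2))) •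
            (ContinuousLinearMap.snd ℝ ℝ ℝ) := by
      refine clm_eq_of_basis _ _ ?_ ?_ <;>
        simp only [ContinuousLinearMap.add_apply, ContinuousLinearMap.smul_apply, smul_eq_mul,
          ContinuousLinearMap.coe_fst', ContinuousLinearMap.coe_snd']
      · rw [show p = (p.1, p.2) from rfl, hFrval p.1 p.2 hp1]
        field_simp
        ring
      · rw [show p = (p.1, p.2) from rfl, hFθval p.1 p.2 hp1]
        ring
    have := hdF.sub hdG
    rw [heq] at this
    rwa [sub_self] at this
  have hconvU : Convex ℝ {p : ℝ × ℝ | 0 < p.1} :=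
    (convex_Ioi (0:ℝ)).linear_preimage (LinearMap.fst ℝ ℝ ℝ)
  have hconst : ∀ q : ℝ × ℝ, 0 < q.1 → F q - G q = F (1, 0) - G (1, 0) := by
    intro q hq
    refine hconvU.is_const_of_fderivWithin_eq_zero (𝕜 := ℝ) (f := fun q => F q - G q)
      ?_ ?_ hq (by norm_num : (0:ℝ) < ((1:ℝ), (0:ℝ)).1)
    · intro p hp
      exact (hE p hp).differentiableAt.differentiableWithinAt
    · intro p hp
      rw [fderivWithin_of_isOpen hU hp, (hE p hp).fderiv]
  -- rewrite G in amplitude-phase form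
  obtain ⟨C₁, l, hCl1, hCl2⟩ := polar_rep (-A/(k-1)) (B/(k-1))
  refine ⟨C₁, F (1, 0) - G (1, 0), l, ?_⟩
  intro q hq
  have h1 := hconst q hq
  have h2 : G q = C₁ * q.1 ^ (1-k) * Real.cos ((1-k) * q.2 + l) := by
    have hcos : Real.cos ((1-k) * q.2 + l) = Real.cos ((k-1) * q.2 - l) := by
      rw [show (1-k) * q.2 + l = -((k-1) * q.2 - l) from by ring, Real.cos_neg]
    rw [hG, hcos, Real.cos_sub]
    simp only
    rw [show (B * Real.sin ((k-1)*q.2) - A * Real.cos ((k-1)*q.2)) / (k-1)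
        = (-A/(k-1)) * Real.cos ((k-1)*q.2) + (B/(k-1)) * Real.sin ((k-1)*q.2) from by
      field_simp; ring]
    rw [← hCl1, ← hCl2]
    ring
  linarith [h1, h2.symm.le]

/-- Corollary 2.3 (coordinate form): if the Gauss map of the polar graph surface of a
smooth `F` on `(0,∞) × ℝ` is strictly semi-rotational, i.e. `n(r, θ + t) = R_{kt}(n(r,θ))`
for some `k ≠ 1`, then locally `F(r,θ) = C₁ r^{1−k} cos((1−k)θ + l) + C₂`. -/
theorem stmt_10 (F : ℝ × ℝ → ℝ)
    (hF : ContDiffOn ℝ (⊤ : ℕ∞) F {p : ℝ × ℝ | 0 < p.1}) (k : ℝ) (hk : k ≠ 1) :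
    let x : ℝ → ℝ → ℝ × ℝ × ℝ :=
      fun s t => (s * Real.cos t, s * Real.sin t, F (s, t))
    let n : ℝ → ℝ → ℝ × ℝ × ℝ := fun s t =>
      let xr := deriv (fun s' => x s' t) s
      let xθ := deriv (fun t' => x s t') t
      (norm3 (cross3 xr xθ))⁻¹ • cross3 xr xθ
    (∀ r θ t : ℝ, 0 < r → n r (θ + t) = Rz (k * t) (n r θ)) →
    ∀ r θ : ℝ, 0 < r →
      ∃ V : Set (ℝ × ℝ), IsOpen V ∧ (r, θ) ∈ V ∧ V ⊆ {p : ℝ × ℝ | 0 < p.1} ∧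
        ∃ C₁ C₂ l : ℝ,
          ∀ q ∈ V, F q = C₁ * q.1 ^ (1 - k) * Real.cos ((1 - k) * q.2 + l) + C₂ := by
  intro x n hn r θ hr
  have hU : IsOpen {p : ℝ × ℝ | 0 < p.1} := isOpen_lt continuous_const continuous_fst
  -- compute the cross product of the tangent vectors
  have hcross : ∀ s t : ℝ, 0 < s →
      cross3 (deriv (fun s' => x s' t) s) (deriv (fun t' => x s t') t) = cfun F s t := by
    intro s t hs
    have hd : DifferentiableAt ℝ F (s, t) :=
      (hF.contDiffAt (hU.mem_nhds hs)).differentiableAt (by norm_num)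
    have h1 : HasDerivAt (fun s' : ℝ => (s', t)) ((1 : ℝ), (0 : ℝ)) s :=
      (hasDerivAt_id s).prodMk (hasDerivAt_const s t)
    have hFr : HasDerivAt (fun s' => F (s', t)) (fderiv ℝ F (s, t) (1, 0)) s := by
      simpa [Function.comp_def] using hd.hasFDerivAt.comp_hasDerivAt s h1
    have h2 : HasDerivAt (fun t' : ℝ => (s, t')) ((0 : ℝ), (1 : ℝ)) t :=
      (hasDerivAt_const t s).prodMk (hasDerivAt_id t)
    have hFθ : HasDerivAt (fun t' => F (s, t')) (fderiv ℝ F (s, t) (0, 1)) t := by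
      simpa [Function.comp_def] using hd.hasFDerivAt.comp_hasDerivAt t h2
    have hxr : deriv (fun s' => x s' t) s
        = (Real.cos t, Real.sin t, fderiv ℝ F (s, t) (1,0)) := by
      refine HasDerivAt.deriv ?_
      exact (((hasDerivAt_id s).mul_const (Real.cos t)).prodMk
        (((hasDerivAt_id s).mul_const (Real.sin t)).prodMk hFr)).congr_deriv (by simp)
    have hxθ : deriv (fun t' => x s t') t
        = (s * (-Real.sin t), s * Real.cos t, fderiv ℝ F (s, t) (0,1)) := by
      refine HasDerivAt.deriv ?_
      exact ((Real.hasDerivAt_cos t).const_mul s).prodMk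
        (((Real.hasDerivAt_sin t).const_mul s).prodMk hFθ)
    rw [hxr, hxθ]
    have pyth := Real.sin_sq_add_cos_sq t
    simp only [cross3, cfun, Pfun, Qfun]
    refine Prod.ext (by ring) (Prod.ext (by ring) ?_)
    simp only
    nlinarith [pyth]
  -- the normal vector in terms of cfun
  have hneq : ∀ s t : ℝ, 0 < s → n s t = (norm3 (cfun F s t))⁻¹ • cfun F s t := by
    intro s t hs
    have h0 : n s t = (norm3 (cross3 (deriv (fun s' => x s' t) s) (deriv (fun t' => x s t') t)))⁻¹
        • cross3 (deriv (fun s' => x s' t) s) (deriv (fun t' => x s t') t) := rfl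
    rw [h0, hcross s t hs]
  -- the cross product satisfies the rotation law
  have hc : ∀ s θ' t : ℝ, 0 < s → cfun F s (θ'+t) = Rz (k*t) (cfun F s θ') := by
    intro s θ' t hs
    refine c_eq_of_n_eq _ _ s (k*t) hs rfl rfl ?_
    rw [← hneq s (θ'+t) hs, ← hneq s θ' hs]
    exact hn s θ' t hs
  obtain ⟨C₁, C₂, l, hsol⟩ := main_aux F hF k hk hc
  exact ⟨{p : ℝ × ℝ | 0 < p.1}, hU, hr, le_refl _,
    C₁, C₂, l, fun q hq => hsol q hq⟩
end
end

section
/- Let m ≠ 0 be a real number, let I ⊆ (0,∞) and J ⊆ ℝ be nonempty open intervals with J nondegenerate, and let F : I × J → ℝ be a C² function. Suppose there is a differentiable function φ : I → ℝ such that F_r(r,θ) = (φ(r)/r) cos mθ and F_θ(r,θ) = φ(r) sin mθ for all (r,θ) ∈ I × J. Then there exist real constants C₁ and C₂ such that φ(r) = −m C₁ r^{−m} and F(r,θ) = C₁ r^{−m} cos mθ + C₂ on I × J. -/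
/-!
Put `G r θ = F (r, θ) + φ r / m * cos (m θ)`. Its `θ`-derivative vanishes, so `G r θ = k r`
on `I × J`. Differentiating in `r` gives `k' r = (φ r / r + φ' r / m) * cos (m θ)` for every
`θ ∈ J`; since `cos (m ·)` is not constant on the open set `J`, this forces `φ' = -m φ / r`.
Hence `φ r * r ^ m` is constant, and then `k' = 0`, so `k` is constant too.
-/

open Real Set Filter Topology

lemma IsOpen.eq_of_hasDerivAt_eq_zero {s : Set ℝ} {f : ℝ → ℝ} (hs : IsOpen s)
    (hs' : s.OrdConnected) (hf : ∀ x ∈ s, HasDerivAt f 0 x) {x y : ℝ} (hx : x ∈ s)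
    (hy : y ∈ s) : f x = f y :=
  hs.is_const_of_deriv_eq_zero hs'.isPreconnected
    (fun z hz => (hf z hz).differentiableAt.differentiableWithinAt) (fun z hz => (hf z hz).deriv)
    hx hy

lemma HasDerivAt.eq_zero_of_eventually_eq_const {f : ℝ → ℝ} {f' x c : ℝ} (hf : HasDerivAt f f' x)
    (hc : ∀ᶠ y in 𝓝 x, f y = c) : f' = 0 :=
  hf.unique ((hasDerivAt_const x c).congr_of_eventuallyEq hc)

lemma hasDerivAt_cos_mul (m t : ℝ) : HasDerivAt (fun t => cos (m * t)) (-sin (m * t) * m) t := by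
  simpa using ((hasDerivAt_id t).const_mul m).cos

lemma hasDerivAt_sin_mul (m t : ℝ) : HasDerivAt (fun t => sin (m * t)) (cos (m * t) * m) t := by
  simpa using ((hasDerivAt_id t).const_mul m).sin

lemma exists_cos_mul_ne {J : Set ℝ} (hJ : IsOpen J) {m θ₀ : ℝ} (hm : m ≠ 0) (hθ₀ : θ₀ ∈ J) :
    ∃ θ ∈ J, cos (m * θ) ≠ cos (m * θ₀) := by
  by_contra! hconst
  have hsin : ∀ θ ∈ J, sin (m * θ) = 0 := fun θ hθ => by
    simpa [hm] using (hasDerivAt_cos_mul m θ).eq_zero_of_eventually_eq_const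
      (eventually_of_mem (hJ.mem_nhds hθ) hconst)
  have hcos : cos (m * θ₀) = 0 := by
    simpa [hm] using (hasDerivAt_sin_mul m θ₀).eq_zero_of_eventually_eq_const
      (eventually_of_mem (hJ.mem_nhds hθ₀) hsin)
  simpa [hsin θ₀ hθ₀, hcos] using sin_sq_add_cos_sq (m * θ₀)

lemma eq_zero_of_forall_hasDerivAt_mul_cos {J : Set ℝ} (hJ : IsOpen J) {k : ℝ → ℝ}
    {m θ₀ b r : ℝ} (hm : m ≠ 0) (hθ₀ : θ₀ ∈ J)
    (hk : ∀ θ ∈ J, HasDerivAt k (b * cos (m * θ)) r) : b = 0 := by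
  obtain ⟨θ₁, hθ₁, hne⟩ := exists_cos_mul_ne hJ hm hθ₀
  by_contra hb
  exact hne (mul_left_cancel₀ hb ((hk θ₁ hθ₁).unique (hk θ₀ hθ₀)))

lemma add_div_mul_cos_eq_of_hasDerivAt {J : Set ℝ} (hJ : IsOpen J) (hJ' : J.OrdConnected)
    {f : ℝ → ℝ} {a m : ℝ} (hm : m ≠ 0) (hf : ∀ θ ∈ J, HasDerivAt f (a * sin (m * θ)) θ)
    {θ₀ θ : ℝ} (hθ₀ : θ₀ ∈ J) (hθ : θ ∈ J) :
    f θ + a / m * cos (m * θ) = f θ₀ + a / m * cos (m * θ₀) := by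
  refine hJ.eq_of_hasDerivAt_eq_zero hJ' (f := fun t => f t + a / m * cos (m * t))
    (fun t ht => ?_) hθ hθ₀
  refine ((hf t ht).add ((hasDerivAt_cos_mul m t).const_mul (a / m))).congr_deriv ?_
  field_simp
  ring

lemma eq_mul_rpow_neg_of_hasDerivAt {I : Set ℝ} (hI : IsOpen I) (hI' : I.OrdConnected)
    (hIpos : I ⊆ Ioi 0) {φ : ℝ → ℝ} {m : ℝ} (hφ : ∀ r ∈ I, HasDerivAt φ (-m * φ r / r) r)
    {r₀ r : ℝ} (hr₀ : r₀ ∈ I) (hr : r ∈ I) : φ r = φ r₀ * r₀ ^ m * r ^ (-m) := by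
  have hconst : φ r * r ^ m = φ r₀ * r₀ ^ m := by
    refine hI.eq_of_hasDerivAt_eq_zero hI' (f := fun s => φ s * s ^ m) (fun s hs => ?_) hr hr₀
    have hs0 : 0 < s := hIpos hs
    refine ((hφ s hs).mul (hasDerivAt_rpow_const (p := m) (Or.inl hs0.ne'))).congr_deriv ?_
    rw [rpow_sub hs0, rpow_one]
    field_simp
    ring
  rw [← hconst, mul_assoc, ← rpow_add (hIpos hr), add_neg_cancel, rpow_zero, mul_one]

section Slices

variable {𝕜 E : Type*} [NontriviallyNormedField 𝕜] [NormedAddCommGroup E] [NormedSpace 𝕜 E]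
  {F : 𝕜 × 𝕜 → E} {x y : 𝕜}

lemma DifferentiableAt.hasDerivAt_slice_fst (hF : DifferentiableAt 𝕜 F (x, y)) :
    HasDerivAt (fun s => F (s, y)) (deriv (fun s => F (s, y)) x) x :=
  (hF.comp x (differentiableAt_id.prodMk (differentiableAt_const y))).hasDerivAt

lemma DifferentiableAt.hasDerivAt_slice_snd (hF : DifferentiableAt 𝕜 F (x, y)) :
    HasDerivAt (fun t => F (x, t)) (deriv (fun t => F (x, t)) y) y :=
  (hF.comp y ((differentiableAt_const x).prodMk differentiableAt_id)).hasDerivAt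

end Slices

/-- If `F` is C² on `I × J` (with `I ⊆ (0,∞)` a nonempty open interval and `J` a
nondegenerate open interval) and there is a differentiable `φ` on `I` with
`F_r = (φ(r)/r) cos mθ` and `F_θ = φ(r) sin mθ`, `m ≠ 0`, then `φ(r) = −m C₁ r^{−m}`
and `F(r,θ) = C₁ r^{−m} cos mθ + C₂` for some constants `C₁, C₂`. -/
theorem stmt_11 (m : ℝ) (hm : m ≠ 0)
    (I J : Set ℝ) (hIopen : IsOpen I) (hIint : I.OrdConnected) (hIne : I.Nonempty)
    (hIpos : I ⊆ Set.Ioi (0 : ℝ))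
    (hJopen : IsOpen J) (hJint : J.OrdConnected)
    (hJnd : ∃ y₁ ∈ J, ∃ y₂ ∈ J, y₁ ≠ y₂)
    (F : ℝ × ℝ → ℝ) (hF : ContDiffOn ℝ 2 F (I ×ˢ J))
    (φ : ℝ → ℝ) (hφ : DifferentiableOn ℝ φ I)
    (hFr : ∀ r ∈ I, ∀ θ ∈ J,
      deriv (fun s => F (s, θ)) r = φ r / r * Real.cos (m * θ))
    (hFθ : ∀ r ∈ I, ∀ θ ∈ J,
      deriv (fun t => F (r, t)) θ = φ r * Real.sin (m * θ)) :
    ∃ C₁ C₂ : ℝ,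
      (∀ r ∈ I, φ r = -m * C₁ * r ^ (-m)) ∧
      (∀ r ∈ I, ∀ θ ∈ J, F (r, θ) = C₁ * r ^ (-m) * Real.cos (m * θ) + C₂) := by
  obtain ⟨θ₀, hθ₀, -⟩ := hJnd
  obtain ⟨r₀, hr₀⟩ := hIne
  have hFdiff : ∀ r ∈ I, ∀ θ ∈ J, DifferentiableAt ℝ F (r, θ) := fun r hr θ hθ =>
    (hF.differentiableOn two_ne_zero).differentiableAt ((hIopen.prod hJopen).mem_nhds ⟨hr, hθ⟩)
  have hφ' : ∀ r ∈ I, HasDerivAt φ (deriv φ r) r := fun r hr =>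
    (hφ.differentiableAt (hIopen.mem_nhds hr)).hasDerivAt
  set k : ℝ → ℝ := fun r => F (r, θ₀) + φ r / m * cos (m * θ₀)
  have hG : ∀ r ∈ I, ∀ θ ∈ J, F (r, θ) + φ r / m * cos (m * θ) = k r := fun r hr θ hθ =>
    add_div_mul_cos_eq_of_hasDerivAt hJopen hJint hm
      (fun t ht => hFθ r hr t ht ▸ (hFdiff r hr t ht).hasDerivAt_slice_snd) hθ₀ hθ
  have hk : ∀ r ∈ I, ∀ θ ∈ J, HasDerivAt k ((φ r / r + deriv φ r / m) * cos (m * θ)) r := by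
    intro r hr θ hθ
    have hsum := (hFr r hr θ hθ ▸ (hFdiff r hr θ hθ).hasDerivAt_slice_fst).add
      (((hφ' r hr).div_const m).mul_const (cos (m * θ)))
    refine (hsum.congr_deriv (by ring)).congr_of_eventuallyEq ?_
    filter_upwards [hIopen.mem_nhds hr] with s hs using (hG s hs θ hθ).symm
  have hode : ∀ r ∈ I, φ r / r + deriv φ r / m = 0 := fun r hr =>
    eq_zero_of_forall_hasDerivAt_mul_cos hJopen hm hθ₀ (hk r hr)
  have hφeq : ∀ r ∈ I, φ r = φ r₀ * r₀ ^ m * r ^ (-m) := fun r hr =>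
    eq_mul_rpow_neg_of_hasDerivAt hIopen hIint hIpos (fun s hs => by
      have h := eq_neg_of_add_eq_zero_right (hode s hs)
      rw [div_eq_iff hm] at h
      exact (hφ' s hs).congr_deriv (by rw [h]; ring)) hr₀ hr
  have hkconst : ∀ r ∈ I, k r = k r₀ := fun r hr =>
    hIopen.eq_of_hasDerivAt_eq_zero hIint (fun s hs => by
      simpa [hode s hs] using hk s hs θ₀ hθ₀) hr hr₀
  refine ⟨-(φ r₀ * r₀ ^ m / m), k r₀, fun r hr => ?_, fun r hr θ hθ => ?_⟩
  · rw [hφeq r hr]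
    field_simp
  · rw [← hkconst r hr, ← hG r hr θ hθ, hφeq r hr]
    ring
end

section
/- For nonzero real numbers k and c, the unit normal n = ((p_{k,c})_x × (p_{k,c})_y)/‖(p_{k,c})_x × (p_{k,c})_y‖ of the surface p_{k,c}(x,y) = (x, y, c e^{kx} cos ky) is given for all (x,y) ∈ ℝ² by n(x,y) = (1/√(1 + c² k² e^{2kx})) · ( −c k e^{kx} cos ky, c k e^{kx} sin ky, 1 ). -/
noncomputable section

/-! The surface is the graph of `f s t = c e^{ks} cos kt`; for any graph `(s, t, f s t)` the
tangent vectors are `(1, 0, f_s)` and `(0, 1, f_t)`, so the normal is `(-f_s, -f_t, 1)` up to the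
factor `(1 + f_s² + f_t²)^{-1/2}`. Here `f_s² + f_t² = c²k²e^{2kx}` since `cos² + sin² = 1`. -/

theorem cross3_graph_tangents (a b : ℝ) : cross3 (1, 0, a) (0, 1, b) = (-a, -b, 1) := by
  simp [cross3]

theorem norm3_graph_normal (a b : ℝ) : norm3 (-a, -b, 1) = Real.sqrt (1 + (a ^ 2 + b ^ 2)) := by
  rw [norm3, dot3]
  ring_nf

section Graph

variable {f : ℝ → ℝ → ℝ} {x y a b : ℝ}

theorem hasDerivAt_graph_left (ha : HasDerivAt (fun s => f s y) a x) :
    HasDerivAt (fun s => (s, y, f s y)) ((1 : ℝ), (0 : ℝ), a) x :=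
  (hasDerivAt_id x).prodMk ((hasDerivAt_const x y).prodMk ha)

theorem hasDerivAt_graph_right (hb : HasDerivAt (fun t => f x t) b y) :
    HasDerivAt (fun t => (x, t, f x t)) ((0 : ℝ), (1 : ℝ), b) y :=
  (hasDerivAt_const y x).prodMk ((hasDerivAt_id y).prodMk hb)

theorem unitNormal_graph (ha : HasDerivAt (fun s => f s y) a x)
    (hb : HasDerivAt (fun t => f x t) b y) :
    (norm3 (cross3 (deriv (fun s => (s, y, f s y)) x) (deriv (fun t => (x, t, f x t)) y)))⁻¹ •
        cross3 (deriv (fun s => (s, y, f s y)) x) (deriv (fun t => (x, t, f x t)) y) =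
      (1 / Real.sqrt (1 + (a ^ 2 + b ^ 2))) • ((-a, -b, 1) : ℝ × ℝ × ℝ) := by
  rw [(hasDerivAt_graph_left ha).deriv, (hasDerivAt_graph_right hb).deriv,
    cross3_graph_tangents, norm3_graph_normal, one_div]

end Graph

section ExpCos

variable (k c : ℝ)

theorem hasDerivAt_mul_exp_mul_cos_left (x y : ℝ) :
    HasDerivAt (fun s => c * Real.exp (k * s) * Real.cos (k * y))
      (c * k * Real.exp (k * x) * Real.cos (k * y)) x :=
  ((((hasDerivAt_id' (x := x)).const_mul k).exp.const_mul c).mul_const _).congr_deriv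
    (by ring)

theorem hasDerivAt_mul_exp_mul_cos_right (x y : ℝ) :
    HasDerivAt (fun t => c * Real.exp (k * x) * Real.cos (k * t))
      (-(c * k * Real.exp (k * x) * Real.sin (k * y))) y :=
  (((hasDerivAt_id' (x := y)).const_mul k).cos.const_mul (c * Real.exp (k * x))).congr_deriv
    (by ring)

theorem sq_add_sq_exp_mul_cos_sin (x y : ℝ) :
    (c * k * Real.exp (k * x) * Real.cos (k * y)) ^ 2 +
        (-(c * k * Real.exp (k * x) * Real.sin (k * y))) ^ 2 =
      c ^ 2 * k ^ 2 * Real.exp (2 * k * x) := by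
  have hexp : Real.exp (2 * k * x) = Real.exp (k * x) ^ 2 := by
    rw [sq, ← Real.exp_add]; ring_nf
  rw [hexp]
  linear_combination (c * k * Real.exp (k * x)) ^ 2 * Real.cos_sq_add_sin_sq (k * y)

end ExpCos

theorem stmt_12_general (k c : ℝ) :
    ∀ x y : ℝ,
      let p : ℝ → ℝ → ℝ × ℝ × ℝ :=
        fun s t => (s, t, c * Real.exp (k * s) * Real.cos (k * t))
      let px := deriv (fun s => p s y) x
      let py := deriv (fun t => p x t) y
      (norm3 (cross3 px py))⁻¹ • cross3 px py =
        (1 / Real.sqrt (1 + c ^ 2 * k ^ 2 * Real.exp (2 * k * x))) •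
          ((-(c * k * Real.exp (k * x) * Real.cos (k * y)),
            c * k * Real.exp (k * x) * Real.sin (k * y), 1) : ℝ × ℝ × ℝ) := by
  intro x y
  have h := unitNormal_graph (f := fun s t => c * Real.exp (k * s) * Real.cos (k * t))
    (hasDerivAt_mul_exp_mul_cos_left k c x y) (hasDerivAt_mul_exp_mul_cos_right k c x y)
  rw [sq_add_sq_exp_mul_cos_sin, neg_neg] at h
  exact h

/-- For nonzero `k, c`, the unit normal of `p_{k,c}(x,y) = (x, y, c e^{kx} cos ky)` is
`n = (1/√(1 + c² k² e^{2kx})) (−c k e^{kx} cos ky, c k e^{kx} sin ky, 1)`. -/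
theorem stmt_12 (k c : ℝ) (hk : k ≠ 0) (hc : c ≠ 0) :
    ∀ x y : ℝ,
      let p : ℝ → ℝ → ℝ × ℝ × ℝ :=
        fun s t => (s, t, c * Real.exp (k * s) * Real.cos (k * t))
      let px := deriv (fun s => p s y) x
      let py := deriv (fun t => p x t) y
      (norm3 (cross3 px py))⁻¹ • cross3 px py =
        (1 / Real.sqrt (1 + c ^ 2 * k ^ 2 * Real.exp (2 * k * x))) •
          ((-(c * k * Real.exp (k * x) * Real.cos (k * y)),
            c * k * Real.exp (k * x) * Real.sin (k * y), 1) : ℝ × ℝ × ℝ) :=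
  stmt_12_general k c
end
end

section
/- For nonzero real numbers k and c, the Gaussian curvature K of the surface p_{k,c}(x,y) = (x, y, c e^{kx} cos ky), equivalently of the graph of F(x,y) = c e^{kx} cos ky, is given at every point (x,y) ∈ ℝ² by K = (F_xx F_yy − F_xy²)/(1 + F_x² + F_y²)² = − c² k⁴ e^{2kx} / (1 + c² k² e^{2kx})². In particular K depends only on x, so p_{k,c} has parallel K-contours: the contours of K project to straight lines parallel to the y-axis in the xy-plane. -/
open Real

section
variable (k : ℝ)

theorem deriv_mul_exp_mul_mul (a b x : ℝ) :
    deriv (fun s => a * exp (k * s) * b) x = a * k * exp (k * x) * b :=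
  ((((hasDerivAt_id' x).const_mul k).exp.const_mul a).mul_const b).deriv.trans (by ring)

theorem deriv_mul_cos_mul (a y : ℝ) :
    deriv (fun t => a * cos (k * t)) y = -(a * k * sin (k * y)) :=
  (((hasDerivAt_id' y).const_mul k).cos.const_mul a).deriv.trans (by ring)

theorem deriv_neg_mul_sin_mul (a y : ℝ) :
    deriv (fun t => -(a * sin (k * t))) y = -(a * k * cos (k * y)) :=
  (((hasDerivAt_id' y).const_mul k).sin.const_mul a).neg.deriv.trans (by ring)

end

theorem stmt_13_general (k c : ℝ) :
    let F : ℝ → ℝ → ℝ := fun x y => c * Real.exp (k * x) * Real.cos (k * y)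
    let K : ℝ → ℝ → ℝ := fun x y =>
      let Fx := deriv (fun s => F s y) x
      let Fy := deriv (fun t => F x t) y
      let Fxx := deriv (fun s => deriv (fun s' => F s' y) s) x
      let Fxy := deriv (fun t => deriv (fun s => F s t) x) y
      let Fyy := deriv (fun t => deriv (fun t' => F x t') t) y
      (Fxx * Fyy - Fxy ^ 2) / (1 + Fx ^ 2 + Fy ^ 2) ^ 2
    (∀ x y : ℝ,
      K x y = -(c ^ 2 * k ^ 4 * Real.exp (2 * k * x)) /
        (1 + c ^ 2 * k ^ 2 * Real.exp (2 * k * x)) ^ 2) ∧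
    (∀ x y₁ y₂ : ℝ, K x y₁ = K x y₂) := by
  intro F K
  have hK : ∀ x y : ℝ, K x y = -(c ^ 2 * k ^ 4 * exp (2 * k * x)) /
      (1 + c ^ 2 * k ^ 2 * exp (2 * k * x)) ^ 2 := by
    intro x y
    simp only [K, F, deriv_mul_exp_mul_mul, deriv_mul_cos_mul, deriv_neg_mul_sin_mul]
    have hexp : exp (2 * k * x) = exp (k * x) ^ 2 := by rw [← exp_nat_mul]; ring_nf
    have hpyth := sin_sq_add_cos_sq (k * y)
    rw [hexp]
    -- numerator and denominator separately: the `y`-dependence cancels by `sin² + cos² = 1`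
    congr 2
    · linear_combination (-(c ^ 2 * k ^ 4 * exp (k * x) ^ 2)) * hpyth
    · linear_combination (c ^ 2 * k ^ 2 * exp (k * x) ^ 2) * hpyth
  exact ⟨hK, fun x y₁ y₂ => by rw [hK x y₁, hK x y₂]⟩

/-- For nonzero `k, c`, the Gaussian curvature of `p_{k,c}(x,y) = (x, y, c e^{kx} cos ky)`,
i.e. of the graph of `F(x,y) = c e^{kx} cos ky`, is
`K = − c² k⁴ e^{2kx} / (1 + c² k² e^{2kx})²`; in particular `K` depends only on `x`, so
`p_{k,c}` has parallel `K`-contours. -/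
theorem stmt_13 (k c : ℝ) (hk : k ≠ 0) (hc : c ≠ 0) :
    let F : ℝ → ℝ → ℝ := fun x y => c * Real.exp (k * x) * Real.cos (k * y)
    let K : ℝ → ℝ → ℝ := fun x y =>
      let Fx := deriv (fun s => F s y) x
      let Fy := deriv (fun t => F x t) y
      let Fxx := deriv (fun s => deriv (fun s' => F s' y) s) x
      let Fxy := deriv (fun t => deriv (fun s => F s t) x) y
      let Fyy := deriv (fun t => deriv (fun t' => F x t') t) y
      (Fxx * Fyy - Fxy ^ 2) / (1 + Fx ^ 2 + Fy ^ 2) ^ 2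
    (∀ x y : ℝ,
      K x y = -(c ^ 2 * k ^ 4 * Real.exp (2 * k * x)) /
        (1 + c ^ 2 * k ^ 2 * Real.exp (2 * k * x)) ^ 2) ∧
    (∀ x y₁ y₂ : ℝ, K x y₁ = K x y₂) :=
  stmt_13_general k c
end

section
/- For nonzero real numbers k and c, the mean curvature H of the surface p_{k,c}(x,y) = (x, y, c e^{kx} cos ky), computed with respect to the unit normal n = (p_x × p_y)/‖p_x × p_y‖, is given at every point (x,y) ∈ ℝ² by H = − c³ k⁴ e^{3kx} cos ky / ( 2 (1 + c² k² e^{2kx})^{3/2} ). -/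
/-!
The surface is the Monge patch of `u = c e^{kx} cos ky`, the real part of the holomorphic
function `c e^{k(x + iy)}`. For a graph `z = h(x, y)` the mean curvature is
`((1 + h_y²) h_xx - 2 h_x h_y h_xy + (1 + h_x²) h_yy) / (2 (1 + h_x² + h_y²)^{3/2})`.
With `v = c e^{kx} sin ky` we have `h_x = k u`, `h_y = -k v`, `h_xx = -h_yy = k² u`, `h_xy = -k² v`,
so harmonicity cancels the linear terms and the numerator collapses to `-k⁴ u (u² + v²)`,
while `u² + v² = c² e^{2kx}`.
-/

noncomputable section

open Real

def meanCurvature (px py pxx pxy pyy : ℝ × ℝ × ℝ) : ℝ :=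
  let n := (norm3 (cross3 px py))⁻¹ • cross3 px py
  let E := dot3 px px
  let Ft := dot3 px py
  let G := dot3 py py
  let e := dot3 pxx n
  let f := dot3 pxy n
  let g := dot3 pyy n
  (e * G - 2 * f * Ft + g * E) / (2 * (E * G - Ft ^ 2))

lemma rpow_three_halves_eq_mul_sqrt {a : ℝ} (ha : 0 ≤ a) : a ^ ((3 : ℝ) / 2) = a * √a := by
  rw [show (3 : ℝ) / 2 = 1 + 1 / 2 by norm_num, Real.rpow_add' ha (by norm_num), Real.rpow_one,
    Real.sqrt_eq_rpow]

theorem meanCurvature_monge_jet (a b r σ τ : ℝ) :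
    meanCurvature (1, 0, a) (0, 1, b) (0, 0, r) (0, 0, σ) (0, 0, τ) =
      ((1 + b ^ 2) * r - 2 * a * b * σ + (1 + a ^ 2) * τ) /
        (2 * (1 + a ^ 2 + b ^ 2) ^ ((3 : ℝ) / 2)) := by
  have hW : 0 < 1 + a ^ 2 + b ^ 2 := by positivity
  have hcross : cross3 (1, 0, a) (0, 1, b) = (-a, -b, 1) := by simp [cross3]
  have hnorm : norm3 (-a, -b, 1) = √(1 + a ^ 2 + b ^ 2) := by simp only [norm3, dot3]; ring_nf
  have hgram : dot3 (1, 0, a) (1, 0, a) * dot3 (0, 1, b) (0, 1, b) - dot3 (1, 0, a) (0, 1, b) ^ 2 =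
      1 + a ^ 2 + b ^ 2 := by simp only [dot3]; ring
  simp only [meanCurvature, hcross, hnorm, hgram, rpow_three_halves_eq_mul_sqrt hW.le]
  have := Real.sqrt_pos.2 hW
  simp only [dot3, Prod.smul_mk, smul_eq_mul]
  field_simp
  ring

theorem meanCurvature_mongePatch {h hs ht : ℝ → ℝ → ℝ} (x y : ℝ)
    (hhs : ∀ s t, HasDerivAt (fun s' => h s' t) (hs s t) s)
    (hht : ∀ s t, HasDerivAt (h s) (ht s t) t) {r σ τ : ℝ}
    (hr : HasDerivAt (fun s => hs s y) r x) (hσ : HasDerivAt (hs x) σ y)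
    (hτ : HasDerivAt (ht x) τ y) :
    meanCurvature (deriv (fun s => (s, y, h s y)) x) (deriv (fun t => (x, t, h x t)) y)
        (deriv (fun s => deriv (fun s' => (s', y, h s' y)) s) x)
        (deriv (fun t => deriv (fun s => (s, t, h s t)) x) y)
        (deriv (fun t => deriv (fun t' => (x, t', h x t')) t) y) =
      ((1 + ht x y ^ 2) * r - 2 * hs x y * ht x y * σ + (1 + hs x y ^ 2) * τ) /
        (2 * (1 + hs x y ^ 2 + ht x y ^ 2) ^ ((3 : ℝ) / 2)) := by
  have hpx : ∀ s t, deriv (fun s' => (s', t, h s' t)) s = (1, 0, hs s t) := fun s t =>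
    ((hasDerivAt_id s).prodMk ((hasDerivAt_const s t).prodMk (hhs s t))).deriv
  have hpy : ∀ s t, deriv (fun t' => (s, t', h s t')) t = (0, 1, ht s t) := fun s t =>
    ((hasDerivAt_const t s).prodMk ((hasDerivAt_id t).prodMk (hht s t))).deriv
  have hconst : ∀ {φ : ℝ → ℝ} {z φ' : ℝ} (u v : ℝ), HasDerivAt φ φ' z →
      deriv (fun w => (u, v, φ w)) z = (0, 0, φ') := fun u v hφ =>
    ((hasDerivAt_const _ u).prodMk ((hasDerivAt_const _ v).prodMk hφ)).deriv
  simp only [hpx, hpy, hconst 1 0 hr, hconst 1 0 hσ, hconst 0 1 hτ]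
  exact meanCurvature_monge_jet _ _ _ _ _

section expCos

variable (k c : ℝ)

def expCos (s t : ℝ) : ℝ := c * exp (k * s) * cos (k * t)

def expSin (s t : ℝ) : ℝ := c * exp (k * s) * sin (k * t)

lemma hasDerivAt_expCos_fst (s t : ℝ) :
    HasDerivAt (fun s' => expCos k c s' t) (k * expCos k c s t) s := by
  unfold expCos
  exact ((((hasDerivAt_id' s).const_mul k).exp.const_mul c).mul_const _).congr_deriv (by ring)

lemma hasDerivAt_expCos_snd (s t : ℝ) :
    HasDerivAt (expCos k c s) (-(k * expSin k c s t)) t := by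
  unfold expCos expSin
  exact (((hasDerivAt_id' t).const_mul k).cos.const_mul _).congr_deriv (by ring)

lemma hasDerivAt_expSin_snd (s t : ℝ) :
    HasDerivAt (expSin k c s) (k * expCos k c s t) t := by
  unfold expCos expSin
  exact (((hasDerivAt_id' t).const_mul k).sin.const_mul _).congr_deriv (by ring)

lemma expCos_sq_add_expSin_sq (s t : ℝ) :
    expCos k c s t ^ 2 + expSin k c s t ^ 2 = (c * exp (k * s)) ^ 2 := by
  simp only [expCos, expSin]
  linear_combination (c * exp (k * s)) ^ 2 * sin_sq_add_cos_sq (k * t)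

end expCos

theorem stmt_14_general (k c : ℝ) :
    ∀ x y : ℝ,
      let p : ℝ → ℝ → ℝ × ℝ × ℝ :=
        fun s t => (s, t, c * Real.exp (k * s) * Real.cos (k * t))
      let px := deriv (fun s => p s y) x
      let py := deriv (fun t => p x t) y
      let pxx := deriv (fun s => deriv (fun s' => p s' y) s) x
      let pxy := deriv (fun t => deriv (fun s => p s t) x) y
      let pyy := deriv (fun t => deriv (fun t' => p x t') t) y
      let n := (norm3 (cross3 px py))⁻¹ • cross3 px py
      let E := dot3 px px
      let Ft := dot3 px py
      let G := dot3 py py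
      let e := dot3 pxx n
      let f := dot3 pxy n
      let g := dot3 pyy n
      let H := (e * G - 2 * f * Ft + g * E) / (2 * (E * G - Ft ^ 2))
      H = -(c ^ 3 * k ^ 4 * Real.exp (3 * k * x) * Real.cos (k * y)) /
        (2 * (1 + c ^ 2 * k ^ 2 * Real.exp (2 * k * x)) ^ ((3 : ℝ) / 2)) := by
  intro x y
  refine (meanCurvature_mongePatch (h := expCos k c) x y
    (hasDerivAt_expCos_fst k c) (hasDerivAt_expCos_snd k c)
    ((hasDerivAt_expCos_fst k c x y).const_mul k) ((hasDerivAt_expCos_snd k c x y).const_mul k)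
    ((hasDerivAt_expSin_snd k c x y).const_mul k).neg).trans ?_
  have hmod := expCos_sq_add_expSin_sq k c x y
  have hexp (n : ℕ) : exp (n * k * x) = exp (k * x) ^ n := by
    rw [← exp_nat_mul, mul_assoc]
  rw [show exp (3 * k * x) = exp (k * x) ^ 3 by exact_mod_cast hexp 3,
    show exp (2 * k * x) = exp (k * x) ^ 2 by exact_mod_cast hexp 2]
  congr 1
  · unfold expCos at hmod ⊢
    linear_combination (-k ^ 4 * (c * exp (k * x) * cos (k * y))) * hmod
  · congr 2
    linear_combination k ^ 2 * hmod

/-- For nonzero `k, c`, the mean curvature of `p_{k,c}(x,y) = (x, y, c e^{kx} cos ky)`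
with respect to `n = (p_x × p_y)/‖p_x × p_y‖` is
`H = − c³ k⁴ e^{3kx} cos ky / (2 (1 + c² k² e^{2kx})^{3/2})`. -/
theorem stmt_14 (k c : ℝ) (hk : k ≠ 0) (hc : c ≠ 0) :
    ∀ x y : ℝ,
      let p : ℝ → ℝ → ℝ × ℝ × ℝ :=
        fun s t => (s, t, c * Real.exp (k * s) * Real.cos (k * t))
      let px := deriv (fun s => p s y) x
      let py := deriv (fun t => p x t) y
      let pxx := deriv (fun s => deriv (fun s' => p s' y) s) x
      let pxy := deriv (fun t => deriv (fun s => p s t) x) y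
      let pyy := deriv (fun t => deriv (fun t' => p x t') t) y
      let n := (norm3 (cross3 px py))⁻¹ • cross3 px py
      let E := dot3 px px
      let Ft := dot3 px py
      let G := dot3 py py
      let e := dot3 pxx n
      let f := dot3 pxy n
      let g := dot3 pyy n
      let H := (e * G - 2 * f * Ft + g * E) / (2 * (E * G - Ft ^ 2))
      H = -(c ^ 3 * k ^ 4 * Real.exp (3 * k * x) * Real.cos (k * y)) /
        (2 * (1 + c ^ 2 * k ^ 2 * Real.exp (2 * k * x)) ^ ((3 : ℝ) / 2)) :=
  stmt_14_general k c
end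
end

section
/- (Theorem 3.1, coordinate form.) Let U ⊆ ℝ² be a nonempty open set and F : U → ℝ a smooth function. Define Δ(x,y) = √(1 + F_x² + F_y²) and K(x,y) = (F_xx F_yy − F_xy²)/Δ⁴ (the Gaussian curvature of the graph surface (x, y, F(x,y))). Assume: (i) Δ(x,y₁) = Δ(x,y₂) whenever (x,y₁), (x,y₂) ∈ U (invariance of the area element along each K-contour); (ii) K(x,y₁) = K(x,y₂) whenever (x,y₁), (x,y₂) ∈ U (parallel K-contours); (iii) K is non-constant on every nonempty open subset of U. Then every point of U has an open neighborhood on which F(x,y) = c e^{kx} cos(ky + l) + C₂ for some real constants c ≠ 0, k ≠ 0, l, C₂ (a surface congruent to some p_{k,c}). -/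
open Set
set_option maxHeartbeats 1000000

noncomputable section

/-- constancy from zero derivative on an open interval -/
lemma const_of_deriv0 {s t : ℝ} {f : ℝ → ℝ} (h : ∀ x ∈ Set.Ioo s t, HasDerivAt f 0 x)
    {x y : ℝ} (hx : x ∈ Set.Ioo s t) (hy : y ∈ Set.Ioo s t) : f x = f y := by
  rcases lt_trichotomy x y with hlt | heq | hgt
  · have hsub : Set.Icc x y ⊆ Set.Ioo s t := Set.Icc_subset_Ioo hx.1 hy.2
    have hc : ContinuousOn f (Set.Icc x y) := fun z hz =>
      ((h z (hsub hz)).continuousAt).continuousWithinAt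
    obtain ⟨c, hc1, hc2⟩ := exists_hasDerivAt_eq_slope f (fun _ => 0) hlt hc
      (fun z hz => h z (hsub (Set.Ioo_subset_Icc_self hz)))
    have hne : y - x ≠ 0 := sub_ne_zero.2 (ne_of_gt hlt)
    field_simp [hne] at hc2
    linarith
  · rw [heq]
  · have hsub : Set.Icc y x ⊆ Set.Ioo s t := Set.Icc_subset_Ioo hy.1 hx.2
    have hc : ContinuousOn f (Set.Icc y x) := fun z hz =>
      ((h z (hsub hz)).continuousAt).continuousWithinAt
    obtain ⟨c, hc1, hc2⟩ := exists_hasDerivAt_eq_slope f (fun _ => 0) hgt hc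
      (fun z hz => h z (hsub (Set.Ioo_subset_Icc_self hz)))
    have hne : x - y ≠ 0 := sub_ne_zero.2 (ne_of_gt hgt)
    field_simp [hne] at hc2
    linarith

/-- The core analytic lemma on a rectangle. -/
lemma core (xl xr yl yr : ℝ) (hx : xl < xr) (hy : yl < yr)
    (a b ax ay bx by' bxy byx : ℝ × ℝ → ℝ) (φ φ' φ'' ψ ψ' : ℝ → ℝ)
    (ha : ∀ q ∈ Ioo xl xr ×ˢ Ioo yl yr, HasDerivAt (fun s => a (s, q.2)) (ax q) q.1)
    (hay : ∀ q ∈ Ioo xl xr ×ˢ Ioo yl yr, HasDerivAt (fun t => a (q.1, t)) (ay q) q.2)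
    (hbx : ∀ q ∈ Ioo xl xr ×ˢ Ioo yl yr, HasDerivAt (fun s => b (s, q.2)) (bx q) q.1)
    (hby : ∀ q ∈ Ioo xl xr ×ˢ Ioo yl yr, HasDerivAt (fun t => b (q.1, t)) (by' q) q.2)
    (hbxy : ∀ q ∈ Ioo xl xr ×ˢ Ioo yl yr, HasDerivAt (fun t => bx (q.1, t)) (bxy q) q.2)
    (hbyx : ∀ q ∈ Ioo xl xr ×ˢ Ioo yl yr, HasDerivAt (fun s => by' (s, q.2)) (byx q) q.1)
    (hs1 : ∀ q ∈ Ioo xl xr ×ˢ Ioo yl yr, ay q = bx q)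
    (hs2 : ∀ q ∈ Ioo xl xr ×ˢ Ioo yl yr, bxy q = byx q)
    (hac : ∀ q ∈ Ioo xl xr ×ˢ Ioo yl yr, ContinuousAt a q)
    (hφ : ∀ q ∈ Ioo xl xr ×ˢ Ioo yl yr, 1 + a q ^ 2 + b q ^ 2 = φ q.1)
    (hψ : ∀ q ∈ Ioo xl xr ×ˢ Ioo yl yr, ax q * by' q - bx q ^ 2 = ψ q.1)
    (hφd : ∀ x ∈ Ioo xl xr, HasDerivAt φ (φ' x) x)
    (hφ'd : ∀ x ∈ Ioo xl xr, HasDerivAt φ' (φ'' x) x)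
    (hψd : ∀ x ∈ Ioo xl xr, HasDerivAt ψ (ψ' x) x)
    (hψ'c : ∀ x ∈ Ioo xl xr, ContinuousAt ψ' x)
    (hφ''c : ∀ x ∈ Ioo xl xr, ContinuousAt φ'' x)
    (hnc : ∀ s t, s < t → Set.Ioo s t ⊆ Set.Ioo xl xr → ¬ ∀ x ∈ Set.Ioo s t, ψ x = 0) :
    ∃ k : ℝ, k ≠ 0 ∧ ∀ q ∈ Ioo xl xr ×ˢ Ioo yl yr,
      ax q = k * a q ∧ ay q = k * b q ∧ bx q = k * b q ∧ by' q = -(k * a q) ∧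
        a q ^ 2 + b q ^ 2 ≠ 0 := by
  set I := Ioo xl xr with hI
  set J := Ioo yl yr with hJ
  set R := I ×ˢ J with hR
  have hmemx : ∀ q ∈ R, q.1 ∈ I := fun q hq => hq.1
  have hmemy : ∀ q ∈ R, q.2 ∈ J := fun q hq => hq.2
  -- continuity of basic 1-d functions
  have hφc : ∀ x ∈ I, ContinuousAt φ x := fun x hx' => (hφd x hx').continuousAt
  have hφ'c : ∀ x ∈ I, ContinuousAt φ' x := fun x hx' => (hφ'd x hx').continuousAt
  have hψc : ∀ x ∈ I, ContinuousAt ψ x := fun x hx' => (hψd x hx').continuousAt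
  -- (A) : a * ay + b * by' = 0 on R
  have hA : ∀ q ∈ R, a q * ay q + b q * by' q = 0 := by
    intro q hq
    have h1 : HasDerivAt (fun t => 1 + a (q.1, t) ^ 2 + b (q.1, t) ^ 2)
        (2 * a q * ay q + 2 * b q * by' q) q.2 := by
      have := (((hay q hq).pow 2).const_add 1).add ((hby q hq).pow 2)
      refine this.congr_deriv ?_
      ring
    have h2 : HasDerivAt (fun t => 1 + a (q.1, t) ^ 2 + b (q.1, t) ^ 2) 0 q.2 := by
      have heq : (fun t => 1 + a (q.1, t) ^ 2 + b (q.1, t) ^ 2) =ᶠ[nhds q.2]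
          (fun _ => φ q.1) := by
        filter_upwards [Ioo_mem_nhds (hmemy q hq).1 (hmemy q hq).2] with t ht
        exact hφ (q.1, t) ⟨hq.1, ht⟩
      exact (hasDerivAt_const q.2 (φ q.1)).congr_of_eventuallyEq heq
    have := h1.unique h2
    linarith
  -- (B) : 2*(a*ax + b*bx) = φ' on R
  have hB : ∀ q ∈ R, 2 * (a q * ax q + b q * bx q) = φ' q.1 := by
    intro q hq
    have h1 : HasDerivAt (fun s => 1 + a (s, q.2) ^ 2 + b (s, q.2) ^ 2)
        (2 * a q * ax q + 2 * b q * bx q) q.1 := by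
      have := (((ha q hq).pow 2).const_add 1).add ((hbx q hq).pow 2)
      refine this.congr_deriv ?_
      ring
    have h2 : HasDerivAt (fun s => 1 + a (s, q.2) ^ 2 + b (s, q.2) ^ 2) (φ' q.1) q.1 := by
      have heq : (fun s => 1 + a (s, q.2) ^ 2 + b (s, q.2) ^ 2) =ᶠ[nhds q.1] φ := by
        filter_upwards [Ioo_mem_nhds (hmemx q hq).1 (hmemx q hq).2] with s hs
        exact hφ (s, q.2) ⟨hs, hq.2⟩
      exact (hφd q.1 (hmemx q hq)).congr_of_eventuallyEq heq
    have := h1.unique h2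
    linarith
  -- (C), (C')
  have hC : ∀ q ∈ R, ψ q.1 * b q = -(φ' q.1 / 2) * bx q := by
    intro q hq
    have e1 := hψ q hq
    have e2 := hA q hq
    have e3 := hs1 q hq
    have e4 := hB q hq
    linear_combination (-(b q)) * e1 + (-(bx q)/2) * e4 + ax q * e2 + (-(a q * ax q)) * e3
  have hC' : ∀ q ∈ R, ψ q.1 * a q = (φ' q.1 / 2) * by' q := by
    intro q hq
    have e1 := hψ q hq
    have e2 := hA q hq
    have e3 := hs1 q hq
    have e4 := hB q hq
    linear_combination (-(a q)) * e1 + (by' q/2) * e4 + (-(bx q)) * e2 + (a q * bx q) * e3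
  set y₀ : ℝ := (yl + yr) / 2 with hy₀
  have hy₀J : y₀ ∈ J := ⟨by simp only [hy₀]; linarith, by simp only [hy₀]; linarith⟩
  -- on a vertical strip where ψ ≠ 0 and φ' = 0, we get a contradiction
  have hzero : ∀ s t, s < t → Ioo s t ⊆ I → (∀ x ∈ Ioo s t, ψ x ≠ 0) →
      (∀ x ∈ Ioo s t, φ' x = 0) → False := by
    intro s t hst hsub hψne hφ'0
    have hab0 : ∀ q ∈ Ioo s t ×ˢ J, a q = 0 ∧ b q = 0 := by
      intro q hq
      have hqR : q ∈ R := ⟨hsub hq.1, hq.2⟩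
      have h1 := hC q hqR
      have h2 := hC' q hqR
      rw [hφ'0 q.1 hq.1] at h1 h2
      constructor
      · have : ψ q.1 * a q = 0 := by rw [h2]; ring
        exact (mul_eq_zero.1 this).resolve_left (hψne q.1 hq.1)
      · have : ψ q.1 * b q = 0 := by rw [h1]; ring
        exact (mul_eq_zero.1 this).resolve_left (hψne q.1 hq.1)
    set x₁ : ℝ := (s + t) / 2 with hx₁
    have hx₁m : x₁ ∈ Ioo s t := ⟨by simp only [hx₁]; linarith, by simp only [hx₁]; linarith⟩
    have hqR : ((x₁, y₀) : ℝ × ℝ) ∈ R := ⟨hsub hx₁m, hy₀J⟩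
    have hax0 : ax (x₁, y₀) = 0 := by
      have h0 : HasDerivAt (fun s' => a (s', y₀)) 0 x₁ := by
        refine (hasDerivAt_const x₁ (0 : ℝ)).congr_of_eventuallyEq ?_
        filter_upwards [Ioo_mem_nhds hx₁m.1 hx₁m.2] with s' hs'
        exact (hab0 (s', y₀) ⟨hs', hy₀J⟩).1
      exact (ha (x₁, y₀) hqR).unique h0
    have hbx0 : bx (x₁, y₀) = 0 := by
      have h0 : HasDerivAt (fun s' => b (s', y₀)) 0 x₁ := by
        refine (hasDerivAt_const x₁ (0 : ℝ)).congr_of_eventuallyEq ?_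
        filter_upwards [Ioo_mem_nhds hx₁m.1 hx₁m.2] with s' hs'
        exact (hab0 (s', y₀) ⟨hs', hy₀J⟩).2
      exact (hbx (x₁, y₀) hqR).unique h0
    have := hψ (x₁, y₀) hqR
    rw [hax0, hbx0] at this
    simp at this
    exact hψne x₁ hx₁m this.symm
  -- L2 : φ' cannot vanish identically on a subinterval
  have hL2 : ∀ s t, s < t → Ioo s t ⊆ I → ¬ (∀ x ∈ Ioo s t, φ' x = 0) := by
    intro s t hst hsub hφ'0
    refine hnc s t hst hsub ?_
    intro x hx'
    by_contra hψx
    obtain ⟨ε, hε, hball⟩ := Metric.eventually_nhds_iff_ball.1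
      ((hψc x (hsub hx')).eventually_ne hψx)
    set s' : ℝ := max (x - ε) s with hs'
    set t' : ℝ := min (x + ε) t with ht'
    have hmem' : x ∈ Ioo s' t' := ⟨by simp [hs', hx'.1, hε], by simp [ht', hx'.2, hε]⟩
    have hsub2 : Ioo s' t' ⊆ Ioo s t := Ioo_subset_Ioo (le_max_right _ _) (min_le_right _ _)
    refine hzero s' t' (hmem'.1.trans hmem'.2) (hsub2.trans hsub) ?_ (fun z hz => hφ'0 z (hsub2 hz))
    intro z hz
    refine hball z ?_
    rw [Real.ball_eq_Ioo]
    exact ⟨lt_of_le_of_lt (le_max_left _ _) hz.1, lt_of_lt_of_le hz.2 (min_le_left _ _)⟩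
  -- the function μ and its derivative
  set μ : ℝ → ℝ := fun z => -2 * ψ z / φ' z with hμdef
  set μd : ℝ → ℝ := fun z => ((-2 * ψ' z) * φ' z - (-2 * ψ z) * φ'' z) / (φ' z) ^ 2 with hμddef
  have hμder : ∀ z ∈ I, φ' z ≠ 0 → HasDerivAt μ (μd z) z := by
    intro z hz hne
    exact ((hψd z hz).const_mul (-2)).div (hφ'd z hz) hne
  -- relations bx = μ b, by' = -(μ a) where φ' ≠ 0
  have hm1 : ∀ q ∈ R, φ' q.1 ≠ 0 → bx q = μ q.1 * b q := by
    intro q hq hne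
    have h1 := hC q hq
    simp only [hμdef]
    rw [show -2 * ψ q.1 / φ' q.1 * b q = -2 * ψ q.1 * b q / φ' q.1 by ring, eq_div_iff hne]
    linear_combination (2 : ℝ) * h1
  have hm2 : ∀ q ∈ R, φ' q.1 ≠ 0 → by' q = -(μ q.1 * a q) := by
    intro q hq hne
    have h1 := hC' q hq
    simp only [hμdef]
    rw [show -(-2 * ψ q.1 / φ' q.1 * a q) = 2 * ψ q.1 * a q / φ' q.1 by ring, eq_div_iff hne]
    linear_combination (-2 : ℝ) * h1
  -- no-triple: at no point of I can φ', ψ, and W all be nonzero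
  have hnotriple : ∀ x₂ ∈ I, φ' x₂ ≠ 0 → ψ x₂ ≠ 0 →
      ψ' x₂ * φ' x₂ - ψ x₂ * φ'' x₂ ≠ 0 → False := by
    intro x₂ hx₂ hφ'ne hψne hWne
    -- find an interval around x₂ where all three are nonzero
    have hev : ∀ᶠ z in nhds x₂, φ' z ≠ 0 ∧ ψ z ≠ 0 ∧
        ψ' z * φ' z - ψ z * φ'' z ≠ 0 := by
      have h1 := (hφ'c x₂ hx₂).eventually_ne hφ'ne
      have h2 := (hψc x₂ hx₂).eventually_ne hψne
      have h3 : ContinuousAt (fun z => ψ' z * φ' z - ψ z * φ'' z) x₂ :=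
        ((hψ'c x₂ hx₂).mul (hφ'c x₂ hx₂)).sub ((hψc x₂ hx₂).mul (hφ''c x₂ hx₂))
      have h4 := h3.eventually_ne hWne
      filter_upwards [h1, h2, h4] with z hz1 hz2 hz4
      exact ⟨hz1, hz2, hz4⟩
    obtain ⟨ε, hε, hball⟩ := Metric.eventually_nhds_iff_ball.1 hev
    set s : ℝ := max (x₂ - ε) xl with hs
    set t : ℝ := min (x₂ + ε) xr with ht
    have hmem' : x₂ ∈ Ioo s t := ⟨by simp [hs, hx₂.1, hε], by simp [ht, hx₂.2, hε]⟩
    have hsubI : Ioo s t ⊆ I := Ioo_subset_Ioo (le_max_right _ _) (min_le_right _ _)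
    have hprop : ∀ z ∈ Ioo s t, φ' z ≠ 0 ∧ ψ z ≠ 0 ∧
        ψ' z * φ' z - ψ z * φ'' z ≠ 0 := by
      intro z hz
      refine hball z ?_
      rw [Real.ball_eq_Ioo]
      exact ⟨lt_of_le_of_lt (le_max_left _ _) hz.1, lt_of_lt_of_le hz.2 (min_le_left _ _)⟩
    have hμne : ∀ z ∈ Ioo s t, μ z ≠ 0 := by
      intro z hz
      obtain ⟨h1, h2, _⟩ := hprop z hz
      simp only [hμdef]
      exact div_ne_zero (by simpa using h2) h1
    have hμdne : ∀ z ∈ Ioo s t, μd z ≠ 0 := by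
      intro z hz
      obtain ⟨h1, _, h3⟩ := hprop z hz
      simp only [hμddef]
      apply div_ne_zero _ (pow_ne_zero 2 h1)
      intro hcon
      apply h3
      linarith [hcon]
    -- on the strip, compute bxy and byx
    have hstrip : ∀ q ∈ Ioo s t ×ˢ J, q ∈ R := fun q hq => ⟨hsubI hq.1, hq.2⟩
    have e_bxy : ∀ q ∈ Ioo s t ×ˢ J, bxy q = μ q.1 * by' q := by
      intro q hq
      have h0 : HasDerivAt (fun t' => bx (q.1, t')) (μ q.1 * by' q) q.2 := by
        refine ((hby q (hstrip q hq)).const_mul (μ q.1)).congr_of_eventuallyEq ?_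
        filter_upwards [Ioo_mem_nhds hq.2.1 hq.2.2] with t' ht'
        exact hm1 (q.1, t') (hstrip _ ⟨hq.1, ht'⟩) (hprop q.1 hq.1).1
      exact (hbxy q (hstrip q hq)).unique h0
    have e_byx : ∀ q ∈ Ioo s t ×ˢ J, byx q = -(μd q.1 * a q + μ q.1 * ax q) := by
      intro q hq
      have h0 : HasDerivAt (fun s' => by' (s', q.2))
          (-(μd q.1 * a q + μ q.1 * ax q)) q.1 := by
        have hprod : HasDerivAt (fun s' => μ s' * a (s', q.2))
            (μd q.1 * a q + μ q.1 * ax q) q.1 :=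
          (hμder q.1 (hsubI hq.1) (hprop q.1 hq.1).1).mul (ha q (hstrip q hq))
        refine hprod.neg.congr_of_eventuallyEq ?_
        filter_upwards [Ioo_mem_nhds hq.1.1 hq.1.2] with s' hs'
        exact hm2 (s', q.2) (hstrip _ ⟨hs', hq.2⟩) (hprop s' hs').1
      exact (hbyx q (hstrip q hq)).unique h0
    -- hence μ * ax = (μ² - μd) * a on the strip
    have e_ax : ∀ q ∈ Ioo s t ×ˢ J, μ q.1 * ax q = (μ q.1 ^ 2 - μd q.1) * a q := by
      intro q hq
      have h1 := hs2 q (hstrip q hq)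
      rw [e_bxy q hq, e_byx q hq, hm2 q (hstrip q hq) (hprop q.1 hq.1).1] at h1
      linear_combination h1
    -- hence a² is a function of x on the strip
    have e_a2 : ∀ q ∈ Ioo s t ×ˢ J,
        μd q.1 * a q ^ 2 = μ q.1 ^ 2 * (φ q.1 - 1) - φ' q.1 * μ q.1 / 2 := by
      intro q hq
      have h1 := hB q (hstrip q hq)
      have h2 := hφ q (hstrip q hq)
      have h3 := hm1 q (hstrip q hq) (hprop q.1 hq.1).1
      have h4 := e_ax q hq
      linear_combination (-(μ q.1)/2) * h1 + (μ q.1 ^ 2) * h2 + (μ q.1 * b q) * h3 + (a q) * h4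
    -- then a * b = 0 on the strip
    have e_ab : ∀ q ∈ Ioo s t ×ˢ J, a q * b q = 0 := by
      intro q hq
      have h0 : HasDerivAt (fun t' => a (q.1, t') ^ 2) (2 * a q * ay q) q.2 := by
        have := (hay q (hstrip q hq)).pow 2
        refine this.congr_deriv ?_
        ring
      have h1 : HasDerivAt (fun t' => a (q.1, t') ^ 2) 0 q.2 := by
        refine HasDerivAt.congr_of_eventuallyEq
          (hasDerivAt_const q.2 ((μ q.1 ^ 2 * (φ q.1 - 1) - φ' q.1 * μ q.1 / 2) / μd q.1)) ?_
        filter_upwards [Ioo_mem_nhds hq.2.1 hq.2.2] with t' ht'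
        rw [eq_div_iff (hμdne q.1 hq.1)]
        linear_combination e_a2 (q.1, t') ⟨hq.1, ht'⟩
      have h2 : a q * ay q = 0 := by
        have := h0.unique h1
        linarith
      have h3 := hs1 q (hstrip q hq)
      have h4 := hm1 q (hstrip q hq) (hprop q.1 hq.1).1
      rw [h3, h4] at h2
      rcases mul_eq_zero.1 h2 with h | h
      · rw [h]; ring
      · rcases mul_eq_zero.1 h with h' | h'
        · exact absurd h' (hμne q.1 hq.1)
        · rw [h']; ring
    -- then a ≡ 0 on the strip
    have e_a0 : ∀ q ∈ Ioo s t ×ˢ J, a q = 0 := by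
      intro q hq
      by_contra ha0
      have hby0 : by' q = 0 := by
        have hev2 : ∀ᶠ t' in nhds q.2, b (q.1, t') = 0 := by
          have hcont : ContinuousAt (fun t' => a (q.1, t')) q.2 := by
            have : ContinuousAt (fun t' => ((q.1, t') : ℝ × ℝ)) q.2 :=
              (Continuous.prodMk_right q.1).continuousAt
            exact ContinuousAt.comp (by rw [show ((q.1, q.2) : ℝ × ℝ) = q from rfl]; exact hac q (hstrip q hq)) this
          have hane : ∀ᶠ t' in nhds q.2, a (q.1, t') ≠ 0 := hcont.eventually_ne ha0
          filter_upwards [hane, Ioo_mem_nhds hq.2.1 hq.2.2] with t' h1 h2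
          have := e_ab (q.1, t') ⟨hq.1, h2⟩
          exact (mul_eq_zero.1 this).resolve_left h1
        have h0 : HasDerivAt (fun t' => b (q.1, t')) 0 q.2 :=
          (hasDerivAt_const q.2 (0 : ℝ)).congr_of_eventuallyEq hev2
        exact (hby q (hstrip q hq)).unique h0
      have := hm2 q (hstrip q hq) (hprop q.1 hq.1).1
      rw [hby0] at this
      have := this.symm
      rw [neg_eq_zero] at this
      rcases mul_eq_zero.1 this with h | h
      · exact hμne q.1 hq.1 h
      · exact ha0 h
    -- then b ≡ 0 on the strip
    have e_b0 : ∀ q ∈ Ioo s t ×ˢ J, b q = 0 := by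
      intro q hq
      have hay0 : ay q = 0 := by
        have h0 : HasDerivAt (fun t' => a (q.1, t')) 0 q.2 := by
          refine (hasDerivAt_const q.2 (0 : ℝ)).congr_of_eventuallyEq ?_
          filter_upwards [Ioo_mem_nhds hq.2.1 hq.2.2] with t' ht'
          exact e_a0 (q.1, t') ⟨hq.1, ht'⟩
        exact (hay q (hstrip q hq)).unique h0
      have h1 := hs1 q (hstrip q hq)
      have h2 := hm1 q (hstrip q hq) (hprop q.1 hq.1).1
      rw [hay0] at h1
      rw [← h1] at h2
      rcases mul_eq_zero.1 h2.symm with h | h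
      · exact absurd h (hμne q.1 hq.1)
      · exact h
    -- contradiction with φ' ≠ 0
    have hq₀ : ((x₂, y₀) : ℝ × ℝ) ∈ Ioo s t ×ˢ J := ⟨hmem', hy₀J⟩
    have := hB (x₂, y₀) (hstrip _ hq₀)
    rw [e_a0 _ hq₀, e_b0 _ hq₀] at this
    simp at this
    exact hφ'ne this.symm
  -- W := ψ'φ' - ψφ'' vanishes wherever φ' ≠ 0
  have hW : ∀ x ∈ I, φ' x ≠ 0 → ψ' x * φ' x - ψ x * φ'' x = 0 := by
    intro x hx' hne
    by_contra hWne
    have hev : ∀ᶠ z in nhds x, φ' z ≠ 0 ∧ ψ' z * φ' z - ψ z * φ'' z ≠ 0 := by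
      have h1 := (hφ'c x hx').eventually_ne hne
      have h3 : ContinuousAt (fun z => ψ' z * φ' z - ψ z * φ'' z) x :=
        ((hψ'c x hx').mul (hφ'c x hx')).sub ((hψc x hx').mul (hφ''c x hx'))
      filter_upwards [h1, h3.eventually_ne hWne] with z hz1 hz2
      exact ⟨hz1, hz2⟩
    obtain ⟨ε, hε, hball⟩ := Metric.eventually_nhds_iff_ball.1 hev
    set s : ℝ := max (x - ε) xl with hs
    set t : ℝ := min (x + ε) xr with ht
    have hmem' : x ∈ Ioo s t := ⟨by simp [hs, hx'.1, hε], by simp [ht, hx'.2, hε]⟩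
    have hsubI : Ioo s t ⊆ I := Ioo_subset_Ioo (le_max_right _ _) (min_le_right _ _)
    have hprop : ∀ z ∈ Ioo s t, φ' z ≠ 0 ∧ ψ' z * φ' z - ψ z * φ'' z ≠ 0 := by
      intro z hz
      refine hball z ?_
      rw [Real.ball_eq_Ioo]
      exact ⟨lt_of_le_of_lt (le_max_left _ _) hz.1, lt_of_lt_of_le hz.2 (min_le_left _ _)⟩
    refine hnc s t (hmem'.1.trans hmem'.2) hsubI ?_
    intro z hz
    by_contra hψz
    exact hnotriple z (hsubI hz) (hprop z hz).1 hψz (hprop z hz).2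
  -- μ has zero derivative wherever φ' ≠ 0
  have hμd0 : ∀ x ∈ I, φ' x ≠ 0 → HasDerivAt μ 0 x := by
    intro x hx' hne
    have h1 := hμder x hx' hne
    have h2 : μd x = 0 := by
      simp only [hμddef]
      have := hW x hx' hne
      have hnum : -2 * ψ' x * φ' x - -2 * ψ x * φ'' x = 0 := by linarith
      rw [hnum, zero_div]
    rwa [h2] at h1
  -- ψ ≠ 0 wherever φ' ≠ 0
  have hψI : ∀ x ∈ I, φ' x ≠ 0 → ψ x ≠ 0 := by
    intro x hx' hne hψ0
    have hev : ∀ᶠ z in nhds x, φ' z ≠ 0 := (hφ'c x hx').eventually_ne hne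
    obtain ⟨ε, hε, hball⟩ := Metric.eventually_nhds_iff_ball.1 hev
    set s : ℝ := max (x - ε) xl with hs
    set t : ℝ := min (x + ε) xr with ht
    have hmem' : x ∈ Ioo s t := ⟨by simp [hs, hx'.1, hε], by simp [ht, hx'.2, hε]⟩
    have hsubI : Ioo s t ⊆ I := Ioo_subset_Ioo (le_max_right _ _) (min_le_right _ _)
    have hprop : ∀ z ∈ Ioo s t, φ' z ≠ 0 := by
      intro z hz
      refine hball z ?_
      rw [Real.ball_eq_Ioo]
      exact ⟨lt_of_le_of_lt (le_max_left _ _) hz.1, lt_of_lt_of_le hz.2 (min_le_left _ _)⟩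
    have hconst : ∀ z ∈ Ioo s t, μ z = μ x :=
      fun z hz => const_of_deriv0 (fun v hv => hμd0 v (hsubI hv) (hprop v hv)) hz hmem'
    have hμx : μ x = 0 := by simp [hμdef, hψ0]
    refine hnc s t (hmem'.1.trans hmem'.2) hsubI ?_
    intro z hz
    have h1 := hm1 ((z, y₀) : ℝ × ℝ) ⟨hsubI hz, hy₀J⟩ (hprop z hz)
    have h2 := hC ((z, y₀) : ℝ × ℝ) ⟨hsubI hz, hy₀J⟩
    -- μ z = 0 so bx = 0 at (z,y₀); then ψ z * b = 0... use hC' too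
    have hμz : μ z = 0 := by rw [hconst z hz, hμx]
    -- from μ z = 0 : -2ψz/φ'z = 0 hence ψ z = 0
    have := hμz
    simp only [hμdef] at this
    have h3 := div_eq_zero_iff.1 this
    rcases h3 with h | h
    · linarith
    · exact absurd h (hprop z hz)
  -- derivation of the full system on a strip where μ is a constant k
  have hrel : ∀ (s t k : ℝ), Ioo s t ⊆ I → (∀ w ∈ Ioo s t, φ' w ≠ 0) →
      (∀ w ∈ Ioo s t, μ w = k) → ∀ q ∈ Ioo s t ×ˢ J,
      bx q = k * b q ∧ by' q = -(k * a q) ∧ k * ax q = k ^ 2 * a q := by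
    intro s t k hsubI hφ'ne hμk q hq
    have hstrip : ∀ q' ∈ Ioo s t ×ˢ J, q' ∈ R := fun q' hq' => ⟨hsubI hq'.1, hq'.2⟩
    have h1 : bx q = k * b q := by
      rw [← hμk q.1 hq.1]
      exact hm1 q (hstrip q hq) (hφ'ne q.1 hq.1)
    have h2 : by' q = -(k * a q) := by
      rw [← hμk q.1 hq.1]
      exact hm2 q (hstrip q hq) (hφ'ne q.1 hq.1)
    refine ⟨h1, h2, ?_⟩
    have e_bxy : bxy q = k * by' q := by
      have h0 : HasDerivAt (fun t' => bx (q.1, t')) (k * by' q) q.2 := by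
        refine ((hby q (hstrip q hq)).const_mul k).congr_of_eventuallyEq ?_
        filter_upwards [Ioo_mem_nhds hq.2.1 hq.2.2] with t' ht'
        have := hm1 (q.1, t') (hstrip _ ⟨hq.1, ht'⟩) (hφ'ne q.1 hq.1)
        rw [hμk q.1 hq.1] at this
        exact this
      exact (hbxy q (hstrip q hq)).unique h0
    have e_byx : byx q = -(k * ax q) := by
      have h0 : HasDerivAt (fun s' => by' (s', q.2)) (-(k * ax q)) q.1 := by
        refine ((ha q (hstrip q hq)).const_mul k).neg.congr_of_eventuallyEq ?_
        filter_upwards [Ioo_mem_nhds hq.1.1 hq.1.2] with s' hs'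
        have := hm2 (s', q.2) (hstrip _ ⟨hs', hq.2⟩) (hφ'ne s' hs')
        rw [hμk s' hs'] at this
        exact this
      exact (hbyx q (hstrip q hq)).unique h0
    have := hs2 q (hstrip q hq)
    rw [e_bxy, e_byx, h2] at this
    linear_combination this
  -- φ' never vanishes on I
  have hO : ∀ x ∈ I, φ' x ≠ 0 := by
    intro z hz
    by_contra hφ'z
    -- find a point to the right of z where φ' ≠ 0
    have h1 : ¬ ∀ w ∈ Ioo z xr, φ' w = 0 :=
      hL2 z xr hz.2 (Ioo_subset_Ioo (le_of_lt hz.1) le_rfl)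
    push_neg at h1
    obtain ⟨x', hx'mem, hφ'x'⟩ := h1
    have hx'I : x' ∈ I := ⟨hz.1.trans hx'mem.1, hx'mem.2⟩
    -- sup of zeros of φ' in [z, x']
    set S : Set ℝ := {w ∈ Icc z x' | φ' w = 0} with hS
    have hSne : z ∈ S := ⟨⟨le_rfl, le_of_lt hx'mem.1⟩, hφ'z⟩
    have hSbdd : BddAbove S := ⟨x', fun w hw => hw.1.2⟩
    set α : ℝ := sSup S with hα
    have hαz : z ≤ α := le_csSup hSbdd hSne
    have hαx' : α ≤ x' := csSup_le ⟨z, hSne⟩ (fun w hw => hw.1.2)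
    have hαI : α ∈ I := ⟨hz.1.trans_le hαz, lt_of_le_of_lt hαx' hx'mem.2⟩
    have hφ'α : φ' α = 0 := by
      by_contra hne
      obtain ⟨ε, hε, hball⟩ := Metric.eventually_nhds_iff_ball.1
        ((hφ'c α hαI).eventually_ne hne)
      obtain ⟨w, hwS, hwgt⟩ := exists_lt_of_lt_csSup ⟨z, hSne⟩
        (show α - ε < α by linarith)
      have hwle : w ≤ α := le_csSup hSbdd hwS
      have : φ' w ≠ 0 := by
        refine hball w ?_
        rw [Real.ball_eq_Ioo]
        exact ⟨hwgt, by linarith [hwle]⟩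
      exact this hwS.2
    have hαltx' : α < x' := lt_of_le_of_ne hαx' (fun h => hφ'x' (h ▸ hφ'α))
    have hno0 : ∀ w ∈ Ioo α x', φ' w ≠ 0 := by
      intro w hw hw0
      have : w ∈ S := ⟨⟨hαz.trans (le_of_lt hw.1), le_of_lt hw.2⟩, hw0⟩
      exact absurd (le_csSup hSbdd this) (not_le.2 hw.1)
    have hsubI' : Ioo α x' ⊆ I := Ioo_subset_Ioo (le_of_lt hαI.1) (le_of_lt hx'I.2)
    set x₁ : ℝ := (α + x') / 2 with hx₁
    have hx₁mem : x₁ ∈ Ioo α x' := ⟨by simp only [hx₁]; linarith, by simp only [hx₁]; linarith⟩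
    set k : ℝ := μ x₁ with hk
    have hkne : k ≠ 0 := by
      simp only [hk, hμdef]
      exact div_ne_zero (by simpa using hψI x₁ (hsubI' hx₁mem) (hno0 x₁ hx₁mem))
        (hno0 x₁ hx₁mem)
    have hμk : ∀ w ∈ Ioo α x', μ w = k :=
      fun w hw => const_of_deriv0 (fun v hv => hμd0 v (hsubI' hv) (hno0 v hv)) hw hx₁mem
    have hrels := hrel α x' k hsubI' hno0 hμk
    -- φ' = 2k(φ - 1) on Ioo α x'
    have hφ'eq : ∀ w ∈ Ioo α x', φ' w = 2 * k * (φ w - 1) := by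
      intro w hw
      have hqmem : ((w, y₀) : ℝ × ℝ) ∈ Ioo α x' ×ˢ J := ⟨hw, hy₀J⟩
      obtain ⟨r1, r2, r3⟩ := hrels (w, y₀) hqmem
      have hax : ax ((w, y₀) : ℝ × ℝ) = k * a ((w, y₀) : ℝ × ℝ) := by
        have h5 : k * ax ((w, y₀) : ℝ × ℝ) = k * (k * a ((w, y₀) : ℝ × ℝ)) := by
          linear_combination r3
        exact mul_left_cancel₀ hkne h5
      have hB' := hB ((w, y₀) : ℝ × ℝ) ⟨hsubI' hw, hy₀J⟩
      have hφ' := hφ ((w, y₀) : ℝ × ℝ) ⟨hsubI' hw, hy₀J⟩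
      rw [hax, r1] at hB'
      rw [← hB']
      linear_combination (2 * k) * hφ'
    -- (φ - 1) e^{-2kw} is constant on Ioo α x'
    set G : ℝ → ℝ := fun w => (φ w - 1) * Real.exp (-(2 * k * w)) with hG
    have hGd : ∀ w ∈ Ioo α x', HasDerivAt G 0 w := by
      intro w hw
      have h1 : HasDerivAt (fun w' => φ w' - 1) (φ' w) w := (hφd w (hsubI' hw)).sub_const 1
      have h2 : HasDerivAt (fun w' => Real.exp (-(2 * k * w')))
          (-(2 * k) * Real.exp (-(2 * k * w))) w := by
        have h3 : HasDerivAt (fun w' => -(2 * k * w')) (-(2 * k)) w := by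
          exact ((hasDerivAt_id w).const_mul (2 * k)).neg.congr_deriv (by simp)
        have h4 := h3.exp
        refine h4.congr_deriv ?_
        ring
      have := h1.mul h2
      refine this.congr_deriv ?_
      rw [hφ'eq w hw]
      ring
    have hGconst : ∀ w ∈ Ioo α x', G w = G x₁ :=
      fun w hw => const_of_deriv0 hGd hw hx₁mem
    have hc₀ne : G x₁ ≠ 0 := by
      have h1 : φ x₁ - 1 ≠ 0 := by
        intro h
        apply hno0 x₁ hx₁mem
        rw [hφ'eq x₁ hx₁mem, h]
        ring
      exact mul_ne_zero h1 (Real.exp_ne_zero _)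
    -- limit contradiction at α
    have htφ' : Filter.Tendsto φ' (nhdsWithin α (Ioi α)) (nhds 0) := by
      rw [← hφ'α]
      exact ((hφ'c α hαI).continuousWithinAt).tendsto
    have htg : Filter.Tendsto (fun w => 2 * k * G x₁ * Real.exp (2 * k * w))
        (nhdsWithin α (Ioi α)) (nhds (2 * k * G x₁ * Real.exp (2 * k * α))) := by
      apply Filter.Tendsto.mono_left _ nhdsWithin_le_nhds
      exact (Continuous.tendsto (by fun_prop) α)
    have hev : φ' =ᶠ[nhdsWithin α (Ioi α)] (fun w => 2 * k * G x₁ * Real.exp (2 * k * w)) := by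
      filter_upwards [Ioo_mem_nhdsGT hαltx'] with w hw
      have h1' : (φ w - 1) * Real.exp (-(2 * k * w)) = G x₁ := hGconst w hw
      have h5 : Real.exp (-(2 * k * w)) * Real.exp (2 * k * w) = 1 := by
        rw [← Real.exp_add]; simp
      have h2 : φ w - 1 = G x₁ * Real.exp (2 * k * w) := by
        calc φ w - 1 = (φ w - 1) * (Real.exp (-(2 * k * w)) * Real.exp (2 * k * w)) := by
              rw [h5]; ring
          _ = ((φ w - 1) * Real.exp (-(2 * k * w))) * Real.exp (2 * k * w) := by ring
          _ = G x₁ * Real.exp (2 * k * w) := by rw [h1']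
      rw [hφ'eq w hw, h2]
      ring
    have := tendsto_nhds_unique (Filter.Tendsto.congr' hev htφ') htg
    have hne2 : 2 * k * G x₁ * Real.exp (2 * k * α) ≠ 0 :=
      mul_ne_zero (mul_ne_zero (mul_ne_zero two_ne_zero hkne) hc₀ne) (Real.exp_ne_zero _)
    exact hne2 this.symm
  -- now μ is constant on all of I
  set x₀ : ℝ := (xl + xr) / 2 with hx₀
  have hx₀I : x₀ ∈ I := ⟨by simp only [hx₀]; linarith, by simp only [hx₀]; linarith⟩
  set k : ℝ := μ x₀ with hk
  have hkne : k ≠ 0 := by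
    simp only [hk, hμdef]
    exact div_ne_zero (by simpa using hψI x₀ hx₀I (hO x₀ hx₀I)) (hO x₀ hx₀I)
  have hμk : ∀ w ∈ I, μ w = k :=
    fun w hw => const_of_deriv0 (fun v hv => hμd0 v hv (hO v hv)) hw hx₀I
  have hrels := hrel xl xr k (fun w hw => hw) hO hμk
  refine ⟨k, hkne, ?_⟩
  intro q hq
  obtain ⟨r1, r2, r3⟩ := hrels q hq
  have hax : ax q = k * a q := by
    have h5 : k * ax q = k * (k * a q) := by linear_combination r3
    exact mul_left_cancel₀ hkne h5
  have hay' : ay q = k * b q := by rw [hs1 q hq, r1]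
  have hne : a q ^ 2 + b q ^ 2 ≠ 0 := by
    intro h0
    have hB' := hB q hq
    rw [hax, r1] at hB'
    have : φ' q.1 = 2 * k * (a q ^ 2 + b q ^ 2) := by linarith [hB']
    rw [h0] at this
    simp at this
    exact hO q.1 hq.1 this
  exact ⟨hax, hay', r1, r2, hne⟩

section PD

variable {U : Set (ℝ × ℝ)}

/-- first partial derivatives as functions -/
def px (g : ℝ × ℝ → ℝ) : ℝ × ℝ → ℝ := fun q => fderiv ℝ g q (1, 0)
def py (g : ℝ × ℝ → ℝ) : ℝ × ℝ → ℝ := fun q => fderiv ℝ g q (0, 1)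

lemma pd_smooth (hUopen : IsOpen U) {g : ℝ × ℝ → ℝ} (hg : ContDiffOn ℝ (⊤ : ℕ∞) g U) (v : ℝ × ℝ) :
    ContDiffOn ℝ (⊤ : ℕ∞) (fun q => fderiv ℝ g q v) U := by
  have hA : ContDiffOn ℝ (⊤ : ℕ∞) (fderiv ℝ g) U := hg.fderiv_of_isOpen hUopen (by simp)
  exact (ContinuousLinearMap.apply ℝ ℝ v).contDiff.comp_contDiffOn hA

lemma pd_hasfderiv (hUopen : IsOpen U) {g : ℝ × ℝ → ℝ} (hg : ContDiffOn ℝ (⊤ : ℕ∞) g U) {q : ℝ × ℝ} (hq : q ∈ U) :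
    HasFDerivAt g (fderiv ℝ g q) q :=
  (((hg q hq).contDiffAt (hUopen.mem_nhds hq)).differentiableAt (by simp)).hasFDerivAt

lemma pd_slice_x (hUopen : IsOpen U) {g : ℝ × ℝ → ℝ} (hg : ContDiffOn ℝ (⊤ : ℕ∞) g U) {q : ℝ × ℝ} (hq : q ∈ U) :
    HasDerivAt (fun s => g (s, q.2)) (px g q) q.1 := by
  have hc : HasDerivAt (fun s : ℝ => ((s, q.2) : ℝ × ℝ)) ((1 : ℝ), (0 : ℝ)) q.1 :=
    (hasDerivAt_id q.1).prodMk (hasDerivAt_const q.1 q.2)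
  have := HasFDerivAt.comp_hasDerivAt q.1
    (by rw [show ((q.1, q.2) : ℝ × ℝ) = q from rfl]; exact pd_hasfderiv hUopen hg hq) hc
  exact this

lemma pd_slice_y (hUopen : IsOpen U) {g : ℝ × ℝ → ℝ} (hg : ContDiffOn ℝ (⊤ : ℕ∞) g U) {q : ℝ × ℝ} (hq : q ∈ U) :
    HasDerivAt (fun t => g (q.1, t)) (py g q) q.2 := by
  have hc : HasDerivAt (fun t : ℝ => ((q.1, t) : ℝ × ℝ)) ((0 : ℝ), (1 : ℝ)) q.2 :=
    (hasDerivAt_const q.2 q.1).prodMk (hasDerivAt_id q.2)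
  have := HasFDerivAt.comp_hasDerivAt q.2
    (by rw [show ((q.1, q.2) : ℝ × ℝ) = q from rfl]; exact pd_hasfderiv hUopen hg hq) hc
  exact this

lemma pd_cont (hUopen : IsOpen U) {g : ℝ × ℝ → ℝ} (hg : ContDiffOn ℝ (⊤ : ℕ∞) g U) {q : ℝ × ℝ} (hq : q ∈ U) :
    ContinuousAt g q :=
  (hg.continuousOn q hq).continuousAt (hUopen.mem_nhds hq)

lemma pd_symm (hUopen : IsOpen U) {g : ℝ × ℝ → ℝ} (hg : ContDiffOn ℝ (⊤ : ℕ∞) g U) {q : ℝ × ℝ} (hq : q ∈ U) :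
    py (px g) q = px (py g) q := by
  have hA : ContDiffOn ℝ (⊤ : ℕ∞) (fderiv ℝ g) U := hg.fderiv_of_isOpen hUopen (by simp)
  have h1 : HasFDerivAt (fderiv ℝ g) (fderiv ℝ (fderiv ℝ g) q) q :=
    (((hA q hq).contDiffAt (hUopen.mem_nhds hq)).differentiableAt (by simp)).hasFDerivAt
  have h2 : ∀ᶠ p in nhds q, HasFDerivAt g (fderiv ℝ g p) p := by
    filter_upwards [hUopen.mem_nhds hq] with p hp
    exact pd_hasfderiv hUopen hg hp
  have hsymm := second_derivative_symmetric_of_eventually h2 h1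
  have e1 : HasFDerivAt (fun p => fderiv ℝ g p (1, 0))
      ((fderiv ℝ (fderiv ℝ g) q).flip ((1 : ℝ), (0 : ℝ))) q := by
    have := h1.clm_apply (hasFDerivAt_const ((1 : ℝ), (0 : ℝ)) q)
    simpa using this
  have e2 : HasFDerivAt (fun p => fderiv ℝ g p (0, 1))
      ((fderiv ℝ (fderiv ℝ g) q).flip ((0 : ℝ), (1 : ℝ))) q := by
    have := h1.clm_apply (hasFDerivAt_const ((0 : ℝ), (1 : ℝ)) q)
    simpa using this
  have v1 : py (px g) q = fderiv ℝ (fderiv ℝ g) q (0, 1) (1, 0) := by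
    show fderiv ℝ (fun p => fderiv ℝ g p (1, 0)) q (0, 1) = _
    rw [e1.fderiv]
    rfl
  have v2 : px (py g) q = fderiv ℝ (fderiv ℝ g) q (1, 0) (0, 1) := by
    show fderiv ℝ (fun p => fderiv ℝ g p (0, 1)) q (1, 0) = _
    rw [e2.fderiv]
    rfl
  rw [v1, v2, hsymm]

end PD


/-- Theorem 3.1 (coordinate form): if the graph surface of a smooth `F` on an open
`U ⊆ ℝ²` has area element `Δ = √(1 + F_x² + F_y²)` and Gaussian curvature
`K = (F_xx F_yy − F_xy²)/Δ⁴` both independent of `y` (parallel `K`-contours with `dA`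
invariant along each contour), and `K` is non-constant on every nonempty open subset of
`U`, then locally `F(x,y) = c e^{kx} cos(ky + l) + C₂` with `c ≠ 0`, `k ≠ 0`
(a surface congruent to some `p_{k,c}`). -/
theorem stmt_16 (U : Set (ℝ × ℝ)) (hUne : U.Nonempty) (hUopen : IsOpen U)
    (F : ℝ × ℝ → ℝ) (hF : ContDiffOn ℝ (⊤ : ℕ∞) F U) :
    let Fx : ℝ × ℝ → ℝ := fun p => deriv (fun s => F (s, p.2)) p.1
    let Fy : ℝ × ℝ → ℝ := fun p => deriv (fun t => F (p.1, t)) p.2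
    let Fxx : ℝ × ℝ → ℝ := fun p => deriv (fun s => deriv (fun s' => F (s', p.2)) s) p.1
    let Fxy : ℝ × ℝ → ℝ := fun p => deriv (fun t => deriv (fun s => F (s, t)) p.1) p.2
    let Fyy : ℝ × ℝ → ℝ := fun p => deriv (fun t => deriv (fun t' => F (p.1, t')) t) p.2
    let Δ : ℝ × ℝ → ℝ := fun p => Real.sqrt (1 + (Fx p) ^ 2 + (Fy p) ^ 2)
    let K : ℝ × ℝ → ℝ := fun p => (Fxx p * Fyy p - (Fxy p) ^ 2) / (Δ p) ^ 4
    (∀ x y₁ y₂ : ℝ, (x, y₁) ∈ U → (x, y₂) ∈ U → Δ (x, y₁) = Δ (x, y₂)) →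
    (∀ x y₁ y₂ : ℝ, (x, y₁) ∈ U → (x, y₂) ∈ U → K (x, y₁) = K (x, y₂)) →
    (∀ V : Set (ℝ × ℝ), IsOpen V → V ⊆ U → V.Nonempty →
      ¬ ∃ k₀ : ℝ, ∀ p ∈ V, K p = k₀) →
    ∀ p ∈ U, ∃ V : Set (ℝ × ℝ), IsOpen V ∧ p ∈ V ∧ V ⊆ U ∧
      ∃ c k l C₂ : ℝ, c ≠ 0 ∧ k ≠ 0 ∧
        ∀ q ∈ V, F q = c * Real.exp (k * q.1) * Real.cos (k * q.2 + l) + C₂ := by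
  intro Fx Fy Fxx Fxy Fyy Δ K hΔc hKc hncV p hp
  -- a rectangle around p inside U
  obtain ⟨ε, hε, hball⟩ := Metric.isOpen_iff.1 hUopen p hp
  set I : Set ℝ := Ioo (p.1 - ε) (p.1 + ε) with hIdef
  set J : Set ℝ := Ioo (p.2 - ε) (p.2 + ε) with hJdef
  set R : Set (ℝ × ℝ) := I ×ˢ J with hRdef
  have hRU : R ⊆ U := by
    refine subset_trans ?_ hball
    intro q hq
    rw [Metric.mem_ball, Prod.dist_eq]
    rcases hq with ⟨hq1, hq2⟩
    have d1 : dist q.1 p.1 < ε := by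
      rw [Real.dist_eq, abs_lt]
      constructor <;> [linarith [hq1.1]; linarith [hq1.2]]
    have d2 : dist q.2 p.2 < ε := by
      rw [Real.dist_eq, abs_lt]
      constructor <;> [linarith [hq2.1]; linarith [hq2.2]]
    exact max_lt d1 d2
  have hp2J : p.2 ∈ J := ⟨by linarith, by linarith⟩
  have hp1I : p.1 ∈ I := ⟨by linarith, by linarith⟩
  have hpR : p ∈ R := ⟨hp1I, hp2J⟩
  have hmemI : ∀ x ∈ I, ((x, p.2) : ℝ × ℝ) ∈ U := fun x hx => hRU ⟨hx, hp2J⟩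
  -- partial derivative functions
  set a : ℝ × ℝ → ℝ := px F with hadef
  set b : ℝ × ℝ → ℝ := py F with hbdef
  set axf : ℝ × ℝ → ℝ := px a with haxdef
  set ayf : ℝ × ℝ → ℝ := py a with haydef
  set bxf : ℝ × ℝ → ℝ := px b with hbxdef
  set byf : ℝ × ℝ → ℝ := py b with hbydef
  set axx : ℝ × ℝ → ℝ := px axf with haxxdef
  set bxx : ℝ × ℝ → ℝ := px bxf with hbxxdef
  set bxy : ℝ × ℝ → ℝ := py bxf with hbxydef
  set byx : ℝ × ℝ → ℝ := px byf with hbyxdef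
  -- smoothness
  have hFa : ContDiffOn ℝ (⊤ : ℕ∞) a U := pd_smooth hUopen hF (1, 0)
  have hFb : ContDiffOn ℝ (⊤ : ℕ∞) b U := pd_smooth hUopen hF (0, 1)
  have hFax : ContDiffOn ℝ (⊤ : ℕ∞) axf U := pd_smooth hUopen hFa (1, 0)
  have hFay : ContDiffOn ℝ (⊤ : ℕ∞) ayf U := pd_smooth hUopen hFa (0, 1)
  have hFbx : ContDiffOn ℝ (⊤ : ℕ∞) bxf U := pd_smooth hUopen hFb (1, 0)
  have hFby : ContDiffOn ℝ (⊤ : ℕ∞) byf U := pd_smooth hUopen hFb (0, 1)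
  have hFaxx : ContDiffOn ℝ (⊤ : ℕ∞) axx U := pd_smooth hUopen hFax (1, 0)
  have hFbxx : ContDiffOn ℝ (⊤ : ℕ∞) bxx U := pd_smooth hUopen hFbx (1, 0)
  have hFbyx : ContDiffOn ℝ (⊤ : ℕ∞) byx U := pd_smooth hUopen hFby (1, 0)
  -- slice derivative facts on U
  have haU : ∀ q ∈ U, HasDerivAt (fun s => F (s, q.2)) (a q) q.1 :=
    fun q hq => pd_slice_x hUopen hF hq
  have hbU : ∀ q ∈ U, HasDerivAt (fun t => F (q.1, t)) (b q) q.2 :=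
    fun q hq => pd_slice_y hUopen hF hq
  have haxU : ∀ q ∈ U, HasDerivAt (fun s => a (s, q.2)) (axf q) q.1 :=
    fun q hq => pd_slice_x hUopen hFa hq
  have hayU : ∀ q ∈ U, HasDerivAt (fun t => a (q.1, t)) (ayf q) q.2 :=
    fun q hq => pd_slice_y hUopen hFa hq
  have hbxU : ∀ q ∈ U, HasDerivAt (fun s => b (s, q.2)) (bxf q) q.1 :=
    fun q hq => pd_slice_x hUopen hFb hq
  have hbyU : ∀ q ∈ U, HasDerivAt (fun t => b (q.1, t)) (byf q) q.2 :=
    fun q hq => pd_slice_y hUopen hFb hq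
  have haxxU : ∀ q ∈ U, HasDerivAt (fun s => axf (s, q.2)) (axx q) q.1 :=
    fun q hq => pd_slice_x hUopen hFax hq
  have hbxxU : ∀ q ∈ U, HasDerivAt (fun s => bxf (s, q.2)) (bxx q) q.1 :=
    fun q hq => pd_slice_x hUopen hFbx hq
  have hbxyU : ∀ q ∈ U, HasDerivAt (fun t => bxf (q.1, t)) (bxy q) q.2 :=
    fun q hq => pd_slice_y hUopen hFbx hq
  have hbyxU : ∀ q ∈ U, HasDerivAt (fun s => byf (s, q.2)) (byx q) q.1 :=
    fun q hq => pd_slice_x hUopen hFby hq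
  -- symmetry of second derivatives
  have hs1U : ∀ q ∈ U, ayf q = bxf q := fun q hq => pd_symm hUopen hF hq
  have hs2U : ∀ q ∈ U, bxy q = byx q := fun q hq => pd_symm hUopen hFb hq
  -- bridges to the slice derivatives in the statement
  have hcurve : ∀ q : ℝ × ℝ, Filter.Tendsto (fun s : ℝ => ((s, q.2) : ℝ × ℝ))
      (nhds q.1) (nhds q) := by
    intro q
    have := (continuous_id.prodMk (continuous_const (y := q.2))).tendsto q.1
    simpa using this
  have hcurve2 : ∀ q : ℝ × ℝ, Filter.Tendsto (fun t : ℝ => ((q.1, t) : ℝ × ℝ))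
      (nhds q.2) (nhds q) := by
    intro q
    have := ((continuous_const (y := q.1)).prodMk continuous_id).tendsto q.2
    simpa using this
  have bFx : ∀ q ∈ U, Fx q = a q := fun q hq => (haU q hq).deriv
  have bFy : ∀ q ∈ U, Fy q = b q := fun q hq => (hbU q hq).deriv
  have bFxx : ∀ q ∈ U, Fxx q = axf q := by
    intro q hq
    have hev : (fun s => deriv (fun s' => F (s', q.2)) s) =ᶠ[nhds q.1]
        (fun s => a (s, q.2)) := by
      filter_upwards [(hcurve q).eventually (hUopen.eventually_mem hq)] with s hs
      exact (haU (s, q.2) hs).deriv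
    show deriv _ q.1 = _
    rw [hev.deriv_eq]
    exact (haxU q hq).deriv
  have bFxy : ∀ q ∈ U, Fxy q = ayf q := by
    intro q hq
    have hev : (fun t => deriv (fun s => F (s, t)) q.1) =ᶠ[nhds q.2]
        (fun t => a (q.1, t)) := by
      filter_upwards [(hcurve2 q).eventually (hUopen.eventually_mem hq)] with t ht
      exact (haU (q.1, t) ht).deriv
    show deriv _ q.2 = _
    rw [hev.deriv_eq]
    exact (hayU q hq).deriv
  have bFyy : ∀ q ∈ U, Fyy q = byf q := by
    intro q hq
    have hev : (fun t => deriv (fun t' => F (q.1, t')) t) =ᶠ[nhds q.2]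
        (fun t => b (q.1, t)) := by
      filter_upwards [(hcurve2 q).eventually (hUopen.eventually_mem hq)] with t ht
      exact (hbU (q.1, t) ht).deriv
    show deriv _ q.2 = _
    rw [hev.deriv_eq]
    exact (hbyU q hq).deriv
  -- Δ² and K in terms of a, b
  have hΔsq : ∀ q ∈ U, (Δ q) ^ 2 = 1 + a q ^ 2 + b q ^ 2 := by
    intro q hq
    show Real.sqrt (1 + (Fx q) ^ 2 + (Fy q) ^ 2) ^ 2 = _
    rw [Real.sq_sqrt (by positivity), bFx q hq, bFy q hq]
  -- the 1-d data
  set φ : ℝ → ℝ := fun x => 1 + a (x, p.2) ^ 2 + b (x, p.2) ^ 2 with hφdef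
  set φ' : ℝ → ℝ := fun x =>
    2 * (a (x, p.2) * axf (x, p.2) + b (x, p.2) * bxf (x, p.2)) with hφ'def
  set φ'' : ℝ → ℝ := fun x =>
    2 * (axf (x, p.2) ^ 2 + a (x, p.2) * axx (x, p.2) +
      bxf (x, p.2) ^ 2 + b (x, p.2) * bxx (x, p.2)) with hφ''def
  set ψ : ℝ → ℝ := fun x => axf (x, p.2) * byf (x, p.2) - bxf (x, p.2) ^ 2 with hψdef
  set ψ' : ℝ → ℝ := fun x =>
    axx (x, p.2) * byf (x, p.2) + axf (x, p.2) * byx (x, p.2) -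
      2 * bxf (x, p.2) * bxx (x, p.2) with hψ'def
  have hKrep : ∀ q ∈ R, K q = (axf q * byf q - bxf q ^ 2) / (1 + a q ^ 2 + b q ^ 2) ^ 2 := by
    intro q hq
    have hqU := hRU hq
    show (Fxx q * Fyy q - (Fxy q) ^ 2) / (Δ q) ^ 4 = _
    rw [bFxx q hqU, bFyy q hqU, bFxy q hqU, hs1U q hqU,
      show (Δ q) ^ 4 = ((Δ q) ^ 2) ^ 2 by ring, hΔsq q hqU]
  -- Δ and K fiber-constancy transfer
  have hφR : ∀ q ∈ R, 1 + a q ^ 2 + b q ^ 2 = φ q.1 := by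
    intro q hq
    have h1 : Δ (q.1, q.2) = Δ (q.1, p.2) :=
      hΔc q.1 q.2 p.2 (by rw [Prod.mk.eta]; exact hRU hq) (hmemI q.1 hq.1)
    have h2 := hΔsq q (hRU hq)
    have h3 := hΔsq (q.1, p.2) (hmemI q.1 hq.1)
    have h4 : Δ q = Δ (q.1, p.2) := by rw [← h1, Prod.mk.eta]
    rw [← h2, h4, h3]
  have hφpos : ∀ x ∈ I, 0 < φ x := by
    intro x hx
    have : (0:ℝ) < 1 + a (x, p.2) ^ 2 + b (x, p.2) ^ 2 := by positivity
    simpa [hφdef] using this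
  have hψR : ∀ q ∈ R, axf q * byf q - bxf q ^ 2 = ψ q.1 := by
    intro q hq
    have hqpR : ((q.1, p.2) : ℝ × ℝ) ∈ R := ⟨hq.1, hp2J⟩
    have h1 : K (q.1, q.2) = K (q.1, p.2) :=
      hKc q.1 q.2 p.2 (by rw [Prod.mk.eta]; exact hRU hq) (hmemI q.1 hq.1)
    have h2 := hKrep q hq
    have h3 := hKrep (q.1, p.2) hqpR
    have h4 : K q = K (q.1, p.2) := by rw [← h1, Prod.mk.eta]
    rw [h2, h3] at h4
    have h5 := hφR q hq
    have h6 := hφR (q.1, p.2) hqpR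
    have h7 : (1 + a q ^ 2 + b q ^ 2) = (1 + a (q.1, p.2) ^ 2 + b (q.1, p.2) ^ 2) := by
      rw [h5, ← h6]
    rw [h7] at h4
    have h8 : ((1 + a (q.1, p.2) ^ 2 + b (q.1, p.2) ^ 2) ^ 2 : ℝ) ≠ 0 := by positivity
    rw [div_eq_div_iff h8 h8] at h4
    exact mul_right_cancel₀ h8 h4
  -- 1-d derivative facts
  have hφd : ∀ x ∈ I, HasDerivAt φ (φ' x) x := by
    intro x hx
    have hqU := hmemI x hx
    have h1 := haxU (x, p.2) hqU
    have h2 := hbxU (x, p.2) hqU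
    have h3 : HasDerivAt (fun s => a (s, p.2)) (axf (x, p.2)) x := h1
    have h4 : HasDerivAt (fun s => b (s, p.2)) (bxf (x, p.2)) x := h2
    have h5 := ((h3.pow 2).const_add 1).add (h4.pow 2)
    refine h5.congr_deriv ?_
    simp only [hφ'def]
    ring
  have hφ'd : ∀ x ∈ I, HasDerivAt φ' (φ'' x) x := by
    intro x hx
    have hqU := hmemI x hx
    have h3 : HasDerivAt (fun s => a (s, p.2)) (axf (x, p.2)) x := haxU (x, p.2) hqU
    have h4 : HasDerivAt (fun s => b (s, p.2)) (bxf (x, p.2)) x := hbxU (x, p.2) hqU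
    have h5 : HasDerivAt (fun s => axf (s, p.2)) (axx (x, p.2)) x := haxxU (x, p.2) hqU
    have h6 : HasDerivAt (fun s => bxf (s, p.2)) (bxx (x, p.2)) x := hbxxU (x, p.2) hqU
    have h7 := ((h3.mul h5).add (h4.mul h6)).const_mul (2 : ℝ)
    refine h7.congr_deriv ?_
    simp only [hφ''def]
    ring
  have hψd : ∀ x ∈ I, HasDerivAt ψ (ψ' x) x := by
    intro x hx
    have hqU := hmemI x hx
    have h5 : HasDerivAt (fun s => axf (s, p.2)) (axx (x, p.2)) x := haxxU (x, p.2) hqU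
    have h6 : HasDerivAt (fun s => bxf (s, p.2)) (bxx (x, p.2)) x := hbxxU (x, p.2) hqU
    have h8 : HasDerivAt (fun s => byf (s, p.2)) (byx (x, p.2)) x := hbyxU (x, p.2) hqU
    have h9 : HasDerivAt (fun s => bxf (s, p.2)) (bxx (x, p.2)) x := h6
    have h10 := (h5.mul h8).sub (h9.pow 2)
    refine h10.congr_deriv ?_
    simp only [hψ'def]
    ring
  -- continuity of the auxiliary data
  have hcslice : ∀ (g : ℝ × ℝ → ℝ), ContDiffOn ℝ (⊤ : ℕ∞) g U →
      ∀ x ∈ I, ContinuousAt (fun s => g (s, p.2)) x := by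
    intro g hg x hx
    have h1 : ContinuousAt (fun s : ℝ => ((s, p.2) : ℝ × ℝ)) x :=
      (continuous_id.prodMk continuous_const).continuousAt
    exact ContinuousAt.comp (pd_cont hUopen hg (hmemI x hx)) h1
  have hψ'c : ∀ x ∈ I, ContinuousAt ψ' x := by
    intro x hx
    exact (((hcslice axx hFaxx x hx).mul (hcslice byf hFby x hx)).add
      ((hcslice axf hFax x hx).mul (hcslice byx hFbyx x hx))).sub
      ((continuous_const.continuousAt.mul (hcslice bxf hFbx x hx)).mul
        (hcslice bxx hFbxx x hx))
  have hφ''c : ∀ x ∈ I, ContinuousAt φ'' x := by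
    intro x hx
    exact continuous_const.continuousAt.mul
      (((((hcslice axf hFax x hx).pow 2).add
        ((hcslice a hFa x hx).mul (hcslice axx hFaxx x hx))).add
        ((hcslice bxf hFbx x hx).pow 2)).add
        ((hcslice b hFb x hx).mul (hcslice bxx hFbxx x hx)))
  -- non-constancy of ψ
  have hncψ : ∀ s t, s < t → Ioo s t ⊆ I → ¬ ∀ x ∈ Ioo s t, ψ x = 0 := by
    intro s t hst hsub hψ0
    refine hncV (Ioo s t ×ˢ J) (isOpen_Ioo.prod isOpen_Ioo)
      (fun q hq => hRU ⟨hsub hq.1, hq.2⟩)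
      ⟨((s + t) / 2, p.2), ⟨⟨by linarith, by linarith⟩, hp2J⟩⟩ ⟨0, ?_⟩
    intro q hq
    have hqR : q ∈ R := ⟨hsub hq.1, hq.2⟩
    rw [hKrep q hqR]
    rw [hψR q hqR, hψ0 q.1 hq.1]
    simp
  -- apply the core lemma
  obtain ⟨k, hkne, hrel⟩ := core (p.1 - ε) (p.1 + ε) (p.2 - ε) (p.2 + ε)
    (by linarith) (by linarith) a b axf ayf bxf byf bxy byx φ φ' φ'' ψ ψ'
    (fun q hq => haxU q (hRU hq)) (fun q hq => hayU q (hRU hq))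
    (fun q hq => hbxU q (hRU hq)) (fun q hq => hbyU q (hRU hq))
    (fun q hq => hbxyU q (hRU hq)) (fun q hq => hbyxU q (hRU hq))
    (fun q hq => hs1U q (hRU hq)) (fun q hq => hs2U q (hRU hq))
    (fun q hq => pd_cont hUopen hFa (hRU hq))
    hφR hψR hφd hφ'd hψd hψ'c hφ''c hncψ
  have hrelR : ∀ q ∈ R, axf q = k * a q ∧ ayf q = k * b q ∧ bxf q = k * b q ∧
      byf q = -(k * a q) ∧ a q ^ 2 + b q ^ 2 ≠ 0 := hrel
  obtain ⟨-, -, -, -, hab_p⟩ := hrelR p hpR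
  -- initial data
  set r : ℝ := Real.sqrt (a p ^ 2 + b p ^ 2) with hrdef
  have hr2 : r ^ 2 = a p ^ 2 + b p ^ 2 := Real.sq_sqrt (by positivity)
  have hrpos : 0 < r := Real.sqrt_pos.2 (lt_of_le_of_ne (by positivity) (Ne.symm hab_p))
  have hrne : r ≠ 0 := ne_of_gt hrpos
  -- find the phase θ
  have hθ : ∃ θ : ℝ, Real.cos θ = a p / r ∧ Real.sin θ = -(b p) / r := by
    have huv : (a p / r) ^ 2 + (-(b p) / r) ^ 2 = 1 := by
      field_simp
      linarith [hr2]
    have hu1 : -1 ≤ a p / r := by nlinarith [sq_nonneg (a p / r + 1), sq_nonneg (-(b p) / r)]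
    have hu2 : a p / r ≤ 1 := by nlinarith [sq_nonneg (a p / r - 1), sq_nonneg (-(b p) / r)]
    rcases le_or_gt 0 (-(b p) / r) with hv | hv
    · refine ⟨Real.arccos (a p / r), Real.cos_arccos hu1 hu2, ?_⟩
      rw [Real.sin_arccos, show 1 - (a p / r) ^ 2 = (-(b p) / r) ^ 2 by linarith,
        Real.sqrt_sq hv]
    · refine ⟨-Real.arccos (a p / r), by rw [Real.cos_neg]; exact Real.cos_arccos hu1 hu2, ?_⟩
      rw [Real.sin_neg, Real.sin_arccos, show 1 - (a p / r) ^ 2 = (-(b p) / r) ^ 2 by linarith,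
        Real.sqrt_sq_eq_abs, abs_of_neg hv, neg_neg]
  obtain ⟨θ, hcosθ, hsinθ⟩ := hθ
  set l : ℝ := θ - k * p.2 with hldef
  set c : ℝ := r * Real.exp (-(k * p.1)) / k with hcdef
  have hcne : c ≠ 0 := div_ne_zero (mul_ne_zero hrne (Real.exp_ne_zero _)) hkne
  have hck : c * k = r * Real.exp (-(k * p.1)) := by
    rw [hcdef]; field_simp
  -- model derivative functions
  set A : ℝ × ℝ → ℝ := fun q => c * k * Real.exp (k * q.1) * Real.cos (k * q.2 + l)
    with hAdef
  set Bf : ℝ × ℝ → ℝ := fun q => -(c * k * Real.exp (k * q.1) * Real.sin (k * q.2 + l))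
    with hBfdef
  have hexpcancel : Real.exp (-(k * p.1)) * Real.exp (k * p.1) = 1 := by
    rw [← Real.exp_add]; simp
  have hAp : A p = a p := by
    have h1 : k * p.2 + l = θ := by rw [hldef]; ring
    simp only [hAdef]
    rw [h1, hck, hcosθ]
    field_simp
    linear_combination a p * hexpcancel
  have hBp : Bf p = b p := by
    have h1 : k * p.2 + l = θ := by rw [hldef]; ring
    simp only [hBfdef]
    rw [h1, hck, hsinθ]
    field_simp
    linear_combination b p * hexpcancel
  -- slice derivatives of the model
  have hAx : ∀ q : ℝ × ℝ, HasDerivAt (fun s => A (s, q.2)) (k * A q) q.1 := by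
    intro q
    have h1 : HasDerivAt (fun s : ℝ => k * s) k q.1 := by
      simpa using (hasDerivAt_id q.1).const_mul k
    have h2 := ((h1.exp.const_mul (c * k)).mul_const (Real.cos (k * q.2 + l)))
    refine h2.congr_deriv ?_
    simp only [hAdef]
    ring
  have hAy : ∀ q : ℝ × ℝ, HasDerivAt (fun t => A (q.1, t)) (k * Bf q) q.2 := by
    intro q
    have h1 : HasDerivAt (fun t : ℝ => k * t + l) k q.2 := by
      simpa using ((hasDerivAt_id q.2).const_mul k).add_const l
    have h2 := (h1.cos).const_mul (c * k * Real.exp (k * q.1))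
    refine h2.congr_deriv ?_
    simp only [hBfdef]
    ring
  have hBx : ∀ q : ℝ × ℝ, HasDerivAt (fun s => Bf (s, q.2)) (k * Bf q) q.1 := by
    intro q
    have h1 : HasDerivAt (fun s : ℝ => k * s) k q.1 := by
      simpa using (hasDerivAt_id q.1).const_mul k
    have h2 := (((h1.exp.const_mul (c * k)).mul_const (Real.sin (k * q.2 + l)))).neg
    refine h2.congr_deriv ?_
    simp only [hBfdef]
    ring
  have hBy : ∀ q : ℝ × ℝ, HasDerivAt (fun t => Bf (q.1, t)) (-(k * A q)) q.2 := by
    intro q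
    have h1 : HasDerivAt (fun t : ℝ => k * t + l) k q.2 := by
      simpa using ((hasDerivAt_id q.2).const_mul k).add_const l
    have h2 := ((h1.sin).const_mul (c * k * Real.exp (k * q.1))).neg
    refine h2.congr_deriv ?_
    simp only [hAdef]
    ring
  -- the differences
  set uf : ℝ × ℝ → ℝ := fun q => a q - A q with hufdef
  set vf : ℝ × ℝ → ℝ := fun q => b q - Bf q with hvfdef
  have hu0 : uf p = 0 := by simp only [hufdef]; rw [hAp]; ring
  have hv0 : vf p = 0 := by simp only [hvfdef]; rw [hBp]; ring
  have hux : ∀ q ∈ R, HasDerivAt (fun s => uf (s, q.2)) (k * uf q) q.1 := by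
    intro q hq
    have h1 := (haxU q (hRU hq)).sub (hAx q)
    refine h1.congr_deriv ?_
    rw [(hrelR q hq).1]
    simp only [hufdef]
    ring
  have huy : ∀ q ∈ R, HasDerivAt (fun t => uf (q.1, t)) (k * vf q) q.2 := by
    intro q hq
    have h1 := (hayU q (hRU hq)).sub (hAy q)
    refine h1.congr_deriv ?_
    rw [(hrelR q hq).2.1]
    simp only [hvfdef]
    ring
  have hvx : ∀ q ∈ R, HasDerivAt (fun s => vf (s, q.2)) (k * vf q) q.1 := by
    intro q hq
    have h1 := (hbxU q (hRU hq)).sub (hBx q)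
    refine h1.congr_deriv ?_
    rw [(hrelR q hq).2.2.1]
    simp only [hvfdef]
    ring
  have hvy : ∀ q ∈ R, HasDerivAt (fun t => vf (q.1, t)) (-(k * uf q)) q.2 := by
    intro q hq
    have h1 := (hbyU q (hRU hq)).sub (hBy q)
    refine h1.congr_deriv ?_
    rw [(hrelR q hq).2.2.2.1]
    simp only [hufdef]
    ring
  -- energy function
  set g : ℝ × ℝ → ℝ := fun q => Real.exp (-(2 * k * q.1)) * (uf q ^ 2 + vf q ^ 2)
    with hgdef
  have hgx : ∀ q ∈ R, HasDerivAt (fun s => g (s, q.2)) 0 q.1 := by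
    intro q hq
    have h1 : HasDerivAt (fun s : ℝ => Real.exp (-(2 * k * s)))
        (-(2 * k) * Real.exp (-(2 * k * q.1))) q.1 := by
      have h0 : HasDerivAt (fun s : ℝ => -(2 * k * s)) (-(2 * k)) q.1 := by
        exact ((hasDerivAt_id q.1).const_mul (2 * k)).neg.congr_deriv (by simp)
      have := h0.exp
      refine this.congr_deriv ?_
      ring
    have h2 := h1.mul (((hux q hq).pow 2).add ((hvx q hq).pow 2))
    refine h2.congr_deriv ?_
    simp only [Pi.add_apply, Pi.pow_apply]
    ring
  have hgy : ∀ q ∈ R, HasDerivAt (fun t => g (q.1, t)) 0 q.2 := by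
    intro q hq
    have h2 := (((huy q hq).pow 2).add ((hvy q hq).pow 2)).const_mul
      (Real.exp (-(2 * k * q.1)))
    refine h2.congr_deriv ?_
    ring
  -- constancy on the rectangle
  have hconstR : ∀ (w : ℝ × ℝ → ℝ), (∀ q ∈ R, HasDerivAt (fun s => w (s, q.2)) 0 q.1) →
      (∀ q ∈ R, HasDerivAt (fun t => w (q.1, t)) 0 q.2) → ∀ q ∈ R, w q = w p := by
    intro w h1 h2 q hq
    have e1 : w (q.1, q.2) = w (p.1, q.2) :=
      const_of_deriv0 (f := fun x => w (x, q.2)) (fun x hx => h1 (x, q.2) ⟨hx, hq.2⟩)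
        hq.1 hp1I
    have e2 : w (p.1, q.2) = w (p.1, p.2) :=
      const_of_deriv0 (f := fun t => w (p.1, t)) (fun t ht => h2 (p.1, t) ⟨hp1I, ht⟩)
        hq.2 hp2J
    calc w q = w (q.1, q.2) := by rw [Prod.mk.eta]
      _ = w (p.1, q.2) := e1
      _ = w (p.1, p.2) := e2
      _ = w p := by rw [Prod.mk.eta]
  have hg0 : ∀ q ∈ R, g q = 0 := by
    intro q hq
    rw [hconstR g hgx hgy q hq]
    simp only [hgdef]
    rw [hu0, hv0]
    ring
  have huv0 : ∀ q ∈ R, uf q = 0 ∧ vf q = 0 := by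
    intro q hq
    have h1 := hg0 q hq
    simp only [hgdef] at h1
    have h2 : uf q ^ 2 + vf q ^ 2 = 0 :=
      (mul_eq_zero.1 h1).resolve_left (Real.exp_ne_zero _)
    constructor
    · nlinarith [sq_nonneg (uf q), sq_nonneg (vf q)]
    · nlinarith [sq_nonneg (uf q), sq_nonneg (vf q)]
  -- conclusion
  set Φ : ℝ × ℝ → ℝ := fun q => c * Real.exp (k * q.1) * Real.cos (k * q.2 + l) with hΦdef
  set w : ℝ × ℝ → ℝ := fun q => F q - Φ q with hwdef
  have hΦx : ∀ q : ℝ × ℝ, HasDerivAt (fun s => Φ (s, q.2)) (A q) q.1 := by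
    intro q
    have h1 : HasDerivAt (fun s : ℝ => k * s) k q.1 := by
      simpa using (hasDerivAt_id q.1).const_mul k
    have h2 := ((h1.exp.const_mul c).mul_const (Real.cos (k * q.2 + l)))
    refine h2.congr_deriv ?_
    simp only [hAdef]
    ring
  have hΦy : ∀ q : ℝ × ℝ, HasDerivAt (fun t => Φ (q.1, t)) (Bf q) q.2 := by
    intro q
    have h1 : HasDerivAt (fun t : ℝ => k * t + l) k q.2 := by
      simpa using ((hasDerivAt_id q.2).const_mul k).add_const l
    have h2 := (h1.cos).const_mul (c * Real.exp (k * q.1))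
    refine h2.congr_deriv ?_
    simp only [hBfdef]
    ring
  have hwx : ∀ q ∈ R, HasDerivAt (fun s => w (s, q.2)) 0 q.1 := by
    intro q hq
    have h1 := (haU q (hRU hq)).sub (hΦx q)
    refine h1.congr_deriv ?_
    have := (huv0 q hq).1
    simp only [hufdef] at this
    linarith
  have hwy : ∀ q ∈ R, HasDerivAt (fun t => w (q.1, t)) 0 q.2 := by
    intro q hq
    have h1 := (hbU q (hRU hq)).sub (hΦy q)
    refine h1.congr_deriv ?_
    have := (huv0 q hq).2
    simp only [hvfdef] at this
    linarith
  refine ⟨R, (isOpen_Ioo.prod isOpen_Ioo), hpR, hRU, c, k, l, F p - Φ p, hcne, hkne, ?_⟩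
  intro q hq
  have h1 := hconstR w hwx hwy q hq
  simp only [hwdef] at h1
  have : F q = Φ q + (F p - Φ p) := by linarith
  rw [this]
end
end
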